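/- arXiv:1102.0300 — 10 statements merged into one kernel-verified Lean document; each statement's English description precedes it below -/
import Mathlib

section
/- Let Z_1,...,Z_n be arbitrary non-negative random variables (not necessarily independent), and let p_1,...,p_n be non-negative numbers with sum equal to 1. Then for every real ε, P(∑_{k=1}^n p_k Z_k ≤ ε) < 2 ∑_{k=1}^n p_k · P(Z_k ≤ 2ε), provided the left-hand side probability is positive. -/
open MeasureTheory ProbabilityTheory Set

/-- **Sums of dependent random variables.**
If `Z₁,...,Zₙ` are arbitrary non-negative random variables and `p₁,...,pₙ` are non-negative
numbers summing to `1`, then for every real `ε`,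
`P(∑ pₖ Zₖ ≤ ε) < 2 ∑ pₖ P(Zₖ ≤ 2ε)`, provided the left-hand side probability is positive. -/
theorem sum_dependent_small_ball {Ω : Type*} [MeasureSpace Ω]
    [IsProbabilityMeasure (ℙ : Measure Ω)] (n : ℕ)
    (Z : Fin n → Ω → ℝ) (hZmeas : ∀ k, Measurable (Z k))
    (hZnonneg : ∀ k ω, 0 ≤ Z k ω)
    (p : Fin n → ℝ) (hp : ∀ k, 0 ≤ p k) (hpsum : ∑ k, p k = 1)
    (ε : ℝ)
    (hpos : 0 < (ℙ {ω | ∑ k, p k * Z k ω ≤ ε}).toReal) :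
    (ℙ {ω | ∑ k, p k * Z k ω ≤ ε}).toReal
      < 2 * ∑ k, p k * (ℙ {ω | Z k ω ≤ 2 * ε}).toReal := by
  classical
  set A : Set Ω := {ω | ∑ k, p k * Z k ω ≤ ε} with hAdef
  set B : Fin n → Set Ω := fun k => {ω | Z k ω ≤ 2 * ε} with hBdef
  have hAm : MeasurableSet A := by
    apply measurableSet_le _ measurable_const
    exact Finset.measurable_sum _ (fun k _ => (hZmeas k).const_mul (p k))
  have hBm : ∀ k, MeasurableSet (B k) := fun k =>
    measurableSet_le (hZmeas k) measurable_const
  have hApos : 0 < ℙ A := by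
    rcases (show (0:ENNReal) ≤ ℙ A from zero_le).lt_or_eq with h | h
    · exact h
    · rw [← h] at hpos; simp at hpos
  -- ε is nonnegative
  have hε : 0 ≤ ε := by
    by_contra h
    push_neg at h
    have hAe : A = ∅ := by
      ext ω
      simp only [hAdef, mem_setOf_eq, mem_empty_iff_false, iff_false, not_le]
      exact lt_of_lt_of_le h
        (Finset.sum_nonneg fun k _ => mul_nonneg (hp k) (hZnonneg k ω))
    rw [hAe] at hApos
    simp at hApos
  -- the key pointwise bound
  set f : Ω → ℝ := fun ω => ∑ k, p k * (B k).indicator (fun _ => (1:ℝ)) ω with hfdef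
  have key : ∀ ω ∈ A, 1/2 < f ω := by
    intro ω hω
    have hω' : ∑ k, p k * Z k ω ≤ ε := hω
    set S : Finset (Fin n) := Finset.univ.filter (fun k => ¬ Z k ω ≤ 2 * ε) with hSdef
    have hf : f ω = 1 - ∑ k ∈ S, p k := by
      have hsplit : ∑ k ∈ S, p k + ∑ k ∈ Finset.univ.filter (fun k => Z k ω ≤ 2 * ε), p k
          = 1 := by
        rw [← hpsum]
        rw [add_comm]
        exact Finset.sum_filter_add_sum_filter_not _ _ _
      have : f ω = ∑ k ∈ Finset.univ.filter (fun k => Z k ω ≤ 2 * ε), p k := by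
        rw [hfdef]
        rw [Finset.sum_filter]
        apply Finset.sum_congr rfl
        intro k _
        by_cases hk : Z k ω ≤ 2 * ε
        · simp [hk, indicator_of_mem, hBdef, mem_setOf_eq]
        · simp [hk, indicator_of_notMem, hBdef, mem_setOf_eq]
      rw [this]; linarith [hsplit]
    rw [hf]
    have ht0 : 0 ≤ ∑ k ∈ S, p k := Finset.sum_nonneg fun k _ => hp k
    have htlt : ∑ k ∈ S, p k < 1/2 := by
      rcases ht0.lt_or_eq with ht | ht
      · -- sum positive: ∃ k₀ ∈ S with p k₀ > 0
        obtain ⟨k₀, hk₀S, hk₀⟩ : ∃ k₀ ∈ S, 0 < p k₀ := by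
          by_contra hc
          push_neg at hc
          have : ∑ k ∈ S, p k = 0 :=
            Finset.sum_eq_zero fun k hk => le_antisymm (hc k hk) (hp k)
          rw [this] at ht; exact lt_irrefl _ ht
        have hstrict : ∑ k ∈ S, p k * (2 * ε) < ∑ k ∈ S, p k * Z k ω := by
          apply Finset.sum_lt_sum
          · intro k hk
            have : 2 * ε < Z k ω := by
              have := Finset.mem_filter.mp hk
              exact lt_of_not_ge this.2
            exact mul_le_mul_of_nonneg_left this.le (hp k)
          · refine ⟨k₀, hk₀S, ?_⟩
            have : 2 * ε < Z k₀ ω := by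
              have := Finset.mem_filter.mp hk₀S
              exact lt_of_not_ge this.2
            exact mul_lt_mul_of_pos_left this hk₀
        have hsub : ∑ k ∈ S, p k * Z k ω ≤ ∑ k, p k * Z k ω := by
          apply Finset.sum_le_sum_of_subset_of_nonneg (Finset.subset_univ S)
          intro k _ _
          exact mul_nonneg (hp k) (hZnonneg k ω)
        have hεgt : 2 * ε * (∑ k ∈ S, p k) < ε := by
          calc 2 * ε * (∑ k ∈ S, p k) = ∑ k ∈ S, p k * (2 * ε) := by
                rw [Finset.mul_sum]
                exact Finset.sum_congr rfl fun k _ => by ring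
            _ < ∑ k ∈ S, p k * Z k ω := hstrict
            _ ≤ ∑ k, p k * Z k ω := hsub
            _ ≤ ε := hω'
        by_contra hcon
        push_neg at hcon
        have : ε ≤ 2 * ε * (∑ k ∈ S, p k) := by nlinarith
        linarith
      · rw [← ht]; norm_num
    linarith
  -- integrability
  set μA : Measure Ω := Measure.restrict ℙ A with hμA
  have hfInt : Integrable f ℙ := by
    apply integrable_finset_sum
    intro k _
    exact ((integrable_const (1:ℝ)).indicator (hBm k)).const_mul (p k)
  have hgInt : Integrable (fun ω => f ω - 1/2) μA :=
    (hfInt.sub (integrable_const _)).restrict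
  -- the restricted integral is positive
  have hIntPos : 0 < ∫ ω, (f ω - 1/2) ∂μA := by
    have hae : 0 ≤ᵐ[μA] fun ω => f ω - 1/2 := by
      filter_upwards [ae_restrict_mem hAm] with ω hω
      simp only [Pi.zero_apply]
      linarith [key ω hω]
    rw [integral_pos_iff_support_of_nonneg_ae hae hgInt]
    have hsub : ∀ᵐ ω ∂μA, ω ∈ Function.support fun ω => f ω - 1/2 := by
      filter_upwards [ae_restrict_mem hAm] with ω hω
      have := key ω hω
      simp only [Function.mem_support]
      intro h; linarith
    have hcompl : μA (Function.support fun ω => f ω - 1/2)ᶜ = 0 := by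
      have h := ae_iff.mp hsub
      simpa [Function.compl_support] using h
    have : μA Set.univ ≤
        μA (Function.support fun ω => f ω - 1/2) +
        μA (Function.support fun ω => f ω - 1/2)ᶜ := by
      rw [← Set.union_compl_self (Function.support fun ω => f ω - 1/2)]
      exact measure_union_le _ _
    rw [hcompl, add_zero] at this
    calc (0:ENNReal) < ℙ A := hApos
      _ = μA Set.univ := by rw [Measure.restrict_apply_univ]
      _ ≤ _ := this
  -- compute the integral
  have hIntEq : ∫ ω, (f ω - 1/2) ∂μA
      = (∑ k, p k * (μA (B k)).toReal) - (1/2) * (ℙ A).toReal := by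
    rw [integral_sub hfInt.restrict (integrable_const _)]
    congr 1
    · rw [hfdef]
      rw [integral_finset_sum _ (fun k _ =>
        (((integrable_const (1:ℝ)).indicator (hBm k)).const_mul (p k)).restrict)]
      apply Finset.sum_congr rfl
      intro k _
      rw [integral_const_mul]
      congr 1
      rw [integral_indicator_const _ (hBm k)]
      simp
      rfl
    · rw [integral_const]
      simp [Measure.restrict_apply_univ]
      simp only [Measure.real]
      ring
  have hmono : ∀ k, (μA (B k)).toReal ≤ (ℙ (B k)).toReal := by
    intro k
    apply ENNReal.toReal_mono (measure_ne_top _ _)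
    rw [Measure.restrict_apply (hBm k)]
    exact measure_mono (Set.inter_subset_left)
  have hsumle : ∑ k, p k * (μA (B k)).toReal
      ≤ ∑ k, p k * (ℙ (B k)).toReal :=
    Finset.sum_le_sum fun k _ => mul_le_mul_of_nonneg_left (hmono k) (hp k)
  rw [hIntEq] at hIntPos
  show (ℙ A).toReal < 2 * ∑ k, p k * (ℙ (B k)).toReal
  linarith
end

section
/- Let G be a symmetric n×n real matrix, X a random vector in R^n with independent coordinates, and X' an independent copy of X. Let J ⊆ [n], and let v = ⟨H P_{J^c}X, P_{J^c}X⟩ − ⟨H P_{J^c}X', P_{J^c}X'⟩, where H is the J^c × J^c minor of G. Then for every ε ≥ 0, sup_u P(|⟨GX,X⟩ − u| ≤ ε)^2 ≤ P(|2⟨G(P_{J^c}(X−X')), P_J X⟩ + v| ≤ 2ε). -/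
open MeasureTheory ProbabilityTheory


open Finset in

lemma decoupling_alg {n : ℕ} (G : Matrix (Fin n) (Fin n) ℝ) (hG : G.IsSymm)
    (J : Finset (Fin n)) (x y : Fin n → ℝ) :
    (∑ i, ∑ j, G i j * x j * x i)
      - (∑ i, ∑ j, G i j * (if j ∈ J then x j else y j) * (if i ∈ J then x i else y i))
    = 2 * (∑ i ∈ J, ∑ j ∈ Jᶜ, G i j * (x j - y j) * x i)
      + ((∑ i ∈ Jᶜ, ∑ j ∈ Jᶜ, G i j * x j * x i)
        - (∑ i ∈ Jᶜ, ∑ j ∈ Jᶜ, G i j * y j * y i)) := by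
  classical
  have e0 : ∀ f : Fin n → Fin n → ℝ, (∑ i, ∑ j, f i j)
      = ((∑ i ∈ J, ∑ j ∈ J, f i j) + (∑ i ∈ J, ∑ j ∈ Jᶜ, f i j))
        + ((∑ i ∈ Jᶜ, ∑ j ∈ J, f i j) + (∑ i ∈ Jᶜ, ∑ j ∈ Jᶜ, f i j)) := by
    intro f
    rw [← Finset.sum_add_sum_compl J (fun i => ∑ j, f i j)]
    congr 1 <;>
    · rw [← Finset.sum_add_distrib]
      exact Finset.sum_congr rfl fun i _ => (Finset.sum_add_sum_compl J (f i)).symm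
  rw [e0 (fun i j => G i j * x j * x i),
    e0 (fun i j => G i j * (if j ∈ J then x j else y j) * (if i ∈ J then x i else y i))]
  have eJJ : (∑ i ∈ J, ∑ j ∈ J,
      G i j * (if j ∈ J then x j else y j) * (if i ∈ J then x i else y i))
      = ∑ i ∈ J, ∑ j ∈ J, G i j * x j * x i :=
    Finset.sum_congr rfl fun i hi => Finset.sum_congr rfl fun j hj => by
      rw [if_pos hi, if_pos hj]
  have eJJc : (∑ i ∈ J, ∑ j ∈ Jᶜ,
      G i j * (if j ∈ J then x j else y j) * (if i ∈ J then x i else y i))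
      = ∑ i ∈ J, ∑ j ∈ Jᶜ, G i j * y j * x i :=
    Finset.sum_congr rfl fun i hi => Finset.sum_congr rfl fun j hj => by
      rw [if_pos hi, if_neg (Finset.mem_compl.mp hj)]
  have eJcJ : (∑ i ∈ Jᶜ, ∑ j ∈ J,
      G i j * (if j ∈ J then x j else y j) * (if i ∈ J then x i else y i))
      = ∑ i ∈ Jᶜ, ∑ j ∈ J, G i j * x j * y i :=
    Finset.sum_congr rfl fun i hi => Finset.sum_congr rfl fun j hj => by
      rw [if_neg (Finset.mem_compl.mp hi), if_pos hj]
  have eJcJc : (∑ i ∈ Jᶜ, ∑ j ∈ Jᶜ,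
      G i j * (if j ∈ J then x j else y j) * (if i ∈ J then x i else y i))
      = ∑ i ∈ Jᶜ, ∑ j ∈ Jᶜ, G i j * y j * y i :=
    Finset.sum_congr rfl fun i hi => Finset.sum_congr rfl fun j hj => by
      rw [if_neg (Finset.mem_compl.mp hi), if_neg (Finset.mem_compl.mp hj)]
  rw [eJJ, eJJc, eJcJ, eJcJc]
  have eD : (∑ i ∈ J, ∑ j ∈ Jᶜ, G i j * (x j - y j) * x i)
      = (∑ i ∈ J, ∑ j ∈ Jᶜ, G i j * x j * x i)
        - ∑ i ∈ J, ∑ j ∈ Jᶜ, G i j * y j * x i := by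
    rw [← Finset.sum_sub_distrib]
    refine Finset.sum_congr rfl fun i _ => ?_
    rw [← Finset.sum_sub_distrib]
    exact Finset.sum_congr rfl fun j _ => by ring
  rw [eD]
  have h31 : (∑ i ∈ Jᶜ, ∑ j ∈ J, G i j * x j * x i)
      = ∑ i ∈ J, ∑ j ∈ Jᶜ, G i j * x j * x i := by
    rw [Finset.sum_comm]
    exact Finset.sum_congr rfl fun i _ => Finset.sum_congr rfl fun j _ => by
      rw [hG.apply i j]; ring
  have h32 : (∑ i ∈ Jᶜ, ∑ j ∈ J, G i j * x j * y i)
      = ∑ i ∈ J, ∑ j ∈ Jᶜ, G i j * y j * x i := by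
    rw [Finset.sum_comm]
    exact Finset.sum_congr rfl fun i _ => Finset.sum_congr rfl fun j _ => by
      rw [hG.apply i j]; ring
  rw [h31, h32]
  ring


lemma decoupling_abstract {α β : Type*} [MeasurableSpace α] [MeasurableSpace β]
    (ρ : Measure α) (ν : Measure β) [IsProbabilityMeasure ρ] [IsProbabilityMeasure ν]
    {A : Set (α × β)} (hA : MeasurableSet A) :
    ((ρ.prod (ν.prod ν)) {p : α × β × β | (p.1, p.2.1) ∈ A}).toReal ^ 2
      ≤ ((ρ.prod (ν.prod ν)) {p : α × β × β |
          (p.1, p.2.1) ∈ A ∧ (p.1, p.2.2) ∈ A}).toReal := by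
  have hm1 : Measurable fun p : α × β × β => (p.1, p.2.1) :=
    measurable_fst.prodMk (measurable_fst.comp measurable_snd)
  have hm2 : Measurable fun p : α × β × β => (p.1, p.2.2) :=
    measurable_fst.prodMk (measurable_snd.comp measurable_snd)
  have hS1 : MeasurableSet {p : α × β × β | (p.1, p.2.1) ∈ A} := hm1 hA
  have hS12 : MeasurableSet {p : α × β × β | (p.1, p.2.1) ∈ A ∧ (p.1, p.2.2) ∈ A} :=
    (hm1 hA).inter (hm2 hA)
  set g : α → ENNReal := fun x => ν (Prod.mk x ⁻¹' A) with hgdef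
  have hg : Measurable g := measurable_measure_prodMk_left hA
  have hgle : ∀ x, g x ≤ 1 := fun x => prob_le_one
  have h1 : (ρ.prod (ν.prod ν)) {p : α × β × β | (p.1, p.2.1) ∈ A}
      = ∫⁻ x, g x ∂ρ := by
    rw [Measure.prod_apply hS1]
    refine lintegral_congr fun x => ?_
    have : (Prod.mk x ⁻¹' {p : α × β × β | (p.1, p.2.1) ∈ A})
        = (Prod.mk x ⁻¹' A) ×ˢ (Set.univ : Set β) := by
      ext ⟨q1, q2⟩; simp
    rw [this, Measure.prod_prod, measure_univ, mul_one]
  have h2 : (ρ.prod (ν.prod ν)) {p : α × β × β | (p.1, p.2.1) ∈ A ∧ (p.1, p.2.2) ∈ A}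
      = ∫⁻ x, g x * g x ∂ρ := by
    rw [Measure.prod_apply hS12]
    refine lintegral_congr fun x => ?_
    have : (Prod.mk x ⁻¹' {p : α × β × β | (p.1, p.2.1) ∈ A ∧ (p.1, p.2.2) ∈ A})
        = (Prod.mk x ⁻¹' A) ×ˢ (Prod.mk x ⁻¹' A) := by
      ext ⟨q1, q2⟩; simp
    rw [this, Measure.prod_prod]
  set gr : α → ℝ := fun x => (g x).toReal with hgrdef
  have hgr : Measurable gr := hg.ennreal_toReal
  have hgr0 : ∀ x, 0 ≤ gr x := fun x => ENNReal.toReal_nonneg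
  have hgr1 : ∀ x, gr x ≤ 1 := fun x => by
    simpa using ENNReal.toReal_mono ENNReal.one_ne_top (hgle x)
  have hnorm : ∀ x, ‖gr x‖ ≤ 1 := fun x => by
    rw [Real.norm_eq_abs, abs_of_nonneg (hgr0 x)]; exact hgr1 x
  have hint : Integrable gr ρ :=
    (integrable_const (1 : ℝ)).mono' hgr.aestronglyMeasurable (ae_of_all _ hnorm)
  have hint2 : Integrable (fun x => gr x ^ 2) ρ := by
    refine (integrable_const (1 : ℝ)).mono' (hgr.pow_const 2).aestronglyMeasurable
      (ae_of_all _ fun x => ?_)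
    rw [Real.norm_eq_abs, abs_of_nonneg (sq_nonneg _)]
    exact pow_le_one₀ (hgr0 x) (hgr1 x)
  have hfin : ∀ᵐ x ∂ρ, g x < ⊤ :=
    ae_of_all _ fun x => lt_of_le_of_lt (hgle x) ENNReal.one_lt_top
  have htr1 : ((ρ.prod (ν.prod ν)) {p : α × β × β | (p.1, p.2.1) ∈ A}).toReal
      = ∫ x, gr x ∂ρ := by
    rw [h1, ← integral_toReal hg.aemeasurable hfin]
  have htr2 : ((ρ.prod (ν.prod ν)) {p : α × β × β |
      (p.1, p.2.1) ∈ A ∧ (p.1, p.2.2) ∈ A}).toReal = ∫ x, gr x ^ 2 ∂ρ := by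
    rw [h2, ← integral_toReal (f := fun x => g x * g x) (hg.mul hg).aemeasurable
      (ae_of_all _ fun x => ENNReal.mul_lt_top
        (lt_of_le_of_lt (hgle x) ENNReal.one_lt_top)
        (lt_of_le_of_lt (hgle x) ENNReal.one_lt_top))]
    refine integral_congr_ae (ae_of_all _ fun x => ?_)
    show (g x * g x).toReal = gr x ^ 2
    rw [ENNReal.toReal_mul]; ring
  rw [htr1, htr2]
  set m := ∫ x, gr x ∂ρ with hmdef
  have expand : ∫ x, (gr x - m) ^ 2 ∂ρ = (∫ x, gr x ^ 2 ∂ρ) - m ^ 2 := by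
    have hx : ∀ x, (gr x - m) ^ 2 = gr x ^ 2 - (2 * m) * gr x + m ^ 2 := fun x => by ring
    simp_rw [hx]
    have hintm : Integrable (fun x => 2 * m * gr x) ρ := hint.const_mul (2 * m)
    have hintsub : Integrable (fun x => gr x ^ 2 - 2 * m * gr x) ρ := hint2.sub hintm
    rw [integral_add hintsub (integrable_const _), integral_sub hint2 hintm,
      integral_const_mul, integral_const]
    simp [measure_univ]
    simp [← hmdef]
    ring
  have hnn : 0 ≤ ∫ x, (gr x - m) ^ 2 ∂ρ := integral_nonneg fun x => sq_nonneg _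
  linarith [expand, hnn]


lemma iIndepFun_reindex {Ω ι ι' : Type*} [MeasurableSpace Ω] {μ : Measure Ω}
    {f : ι → Ω → ℝ} (h : iIndepFun f μ)
    (e : ι' → ι) (he : Function.Injective e) :
    iIndepFun (fun j => f (e j)) μ := by
  classical
  rw [iIndepFun_iff_measure_inter_preimage_eq_mul] at h ⊢
  intro S sets hsets
  set sets' : ι → Set ℝ := Function.extend e sets (fun _ => Set.univ) with hsets'def
  have hext : ∀ j, sets' (e j) = sets j := fun j => he.extend_apply _ _ _
  have hmeas' : ∀ k, k ∈ S.map ⟨e, he⟩ → MeasurableSet (sets' k) := by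
    intro k hk
    rcases Finset.mem_map.mp hk with ⟨j, hj, rfl⟩
    rw [Function.Embedding.coeFn_mk, hext]
    exact hsets j hj
  have key := h (S.map ⟨e, he⟩) hmeas'
  have hset : (⋂ k ∈ S.map ⟨e, he⟩, f k ⁻¹' sets' k)
      = ⋂ j ∈ S, (fun ω => f (e j) ω) ⁻¹' sets j := by
    ext ω
    simp only [Set.mem_iInter, Set.mem_preimage, Finset.mem_map,
      Function.Embedding.coeFn_mk]
    constructor
    · intro hh j hj
      have := hh (e j) ⟨j, hj, rfl⟩
      rwa [hext] at this
    · rintro hh k ⟨j, hj, rfl⟩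
      rw [hext]
      exact hh j hj
  have hprod : (∏ k ∈ S.map ⟨e, he⟩, μ (f k ⁻¹' sets' k))
      = ∏ j ∈ S, μ ((fun ω => f (e j) ω) ⁻¹' sets j) := by
    rw [Finset.prod_map]
    exact Finset.prod_congr rfl fun j _ => by
      rw [Function.Embedding.coeFn_mk, hext]
  rw [hset, hprod] at key
  exact key

lemma map_tuple_eq_pi {Ω ι : Type*} [MeasurableSpace Ω] (μ : Measure Ω)
    [IsProbabilityMeasure μ] [Fintype ι] {f : ι → Ω → ℝ}
    (h : iIndepFun f μ) (hm : ∀ i, Measurable (f i)) :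
    Measure.map (fun ω i => f i ω) μ = Measure.pi (fun i => Measure.map (f i) μ) := by
  haveI : ∀ i, IsProbabilityMeasure (Measure.map (f i) μ) :=
    fun i => Measure.isProbabilityMeasure_map (hm i).aemeasurable
  refine (Measure.pi_eq fun s hs => ?_).symm
  rw [Measure.map_apply (measurable_pi_lambda _ fun i => hm i) (MeasurableSet.univ_pi hs)]
  have hpre : (fun ω i => f i ω) ⁻¹' Set.pi Set.univ s = ⋂ i ∈ Finset.univ, f i ⁻¹' s i := by
    ext ω; simp [Set.mem_pi]
  rw [hpre, h.measure_inter_preimage_eq_mul Finset.univ (fun i _ => hs i)]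
  exact Finset.prod_congr rfl fun i _ => (Measure.map_apply (hm i) (hs i)).symm


def dqfPick {n : ℕ} (J : Finset (Fin n))
    (p : ({i : Fin n // i ∈ J} → ℝ) × ({i : Fin n // i ∈ Jᶜ} → ℝ)) (i : Fin n) : ℝ :=
  if h : i ∈ J then p.1 ⟨i, h⟩ else p.2 ⟨i, Finset.mem_compl.mpr h⟩

lemma dqfPick_meas {n : ℕ} (J : Finset (Fin n)) (i : Fin n) :
    Measurable (fun p => dqfPick J p i) := by
  unfold dqfPick
  split_ifs with h
  · exact (measurable_pi_apply _).comp measurable_fst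
  · exact (measurable_pi_apply _).comp measurable_snd

def dqfQ {n : ℕ} (G : Matrix (Fin n) (Fin n) ℝ) (J : Finset (Fin n))
    (p : ({i : Fin n // i ∈ J} → ℝ) × ({i : Fin n // i ∈ Jᶜ} → ℝ)) : ℝ :=
  ∑ i, ∑ j, G i j * dqfPick J p j * dqfPick J p i

lemma dqfQ_meas {n : ℕ} (G : Matrix (Fin n) (Fin n) ℝ) (J : Finset (Fin n)) :
    Measurable (dqfQ G J) := by
  unfold dqfQ
  refine Finset.measurable_sum _ fun i _ => Finset.measurable_sum _ fun j _ => ?_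
  exact (measurable_const.mul (dqfPick_meas J j)).mul (dqfPick_meas J i)

lemma dqfPick_apply {n : ℕ} (J : Finset (Fin n)) (x y : Fin n → ℝ) (i : Fin n) :
    dqfPick J (fun i : {i : Fin n // i ∈ J} => x ↑i,
      fun j : {i : Fin n // i ∈ Jᶜ} => y ↑j) i = if i ∈ J then x i else y i := by
  unfold dqfPick
  split_ifs with h <;> rfl

lemma dqfQ_apply {n : ℕ} (G : Matrix (Fin n) (Fin n) ℝ) (J : Finset (Fin n))
    (x y : Fin n → ℝ) :
    dqfQ G J (fun i : {i : Fin n // i ∈ J} => x ↑i,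
      fun j : {i : Fin n // i ∈ Jᶜ} => y ↑j)
      = ∑ i, ∑ j, G i j * (if j ∈ J then x j else y j) * (if i ∈ J then x i else y i) := by
  unfold dqfQ
  exact Finset.sum_congr rfl fun i _ => Finset.sum_congr rfl fun j _ => by
    rw [dqfPick_apply, dqfPick_apply]

/-- **Decoupling quadratic forms.**
Let `G` be a symmetric `n × n` real matrix, `X` a random vector in `ℝⁿ` with independent
coordinates, and `X'` an independent copy of `X`.  Let `J ⊆ [n]`.  Then for every `ε ≥ 0`
and every `u ∈ ℝ`,
`P(|⟨GX,X⟩ - u| ≤ ε)² ≤ P(|2⟨G(P_{Jᶜ}(X - X')), P_J X⟩ + v| ≤ 2ε)`,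
where `v = ⟨H P_{Jᶜ}X, P_{Jᶜ}X⟩ - ⟨H P_{Jᶜ}X', P_{Jᶜ}X'⟩` is determined by the
`Jᶜ × Jᶜ` minor `H` of `G` and the restrictions of `X, X'` to `Jᶜ`. -/
theorem decoupling_quadratic_forms {Ω : Type*} [MeasureSpace Ω]
    [IsProbabilityMeasure (ℙ : Measure Ω)] (n : ℕ)
    (G : Matrix (Fin n) (Fin n) ℝ) (hG : G.IsSymm)
    (X X' : Fin n → Ω → ℝ)
    (hmeas : ∀ i, Measurable (X i)) (hmeas' : ∀ i, Measurable (X' i))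
    (hindep : iIndepFun (Sum.elim X X' : Fin n ⊕ Fin n → Ω → ℝ) ℙ)
    (hcopy : ∀ i, IdentDistrib (X' i) (X i) ℙ ℙ)
    (J : Finset (Fin n)) (ε : ℝ) (hε : 0 ≤ ε) (u : ℝ) :
    (ℙ {ω | |(∑ i, ∑ j, G i j * X j ω * X i ω) - u| ≤ ε}).toReal ^ 2
      ≤ (ℙ {ω |
          |2 * (∑ i ∈ J, ∑ j ∈ Jᶜ, G i j * (X j ω - X' j ω) * X i ω)
            + ((∑ i ∈ Jᶜ, ∑ j ∈ Jᶜ, G i j * X j ω * X i ω)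
              - (∑ i ∈ Jᶜ, ∑ j ∈ Jᶜ, G i j * X' j ω * X' i ω))| ≤ 2 * ε}).toReal := by
  classical
  have hFmeas : ∀ k, Measurable (Sum.elim X X' k : Ω → ℝ) := by
    rintro (i | i)
    · exact hmeas i
    · exact hmeas' i
  set a : Ω → ({i : Fin n // i ∈ J} → ℝ) := fun ω i => X ↑i ω with ha
  set b : Ω → ({i : Fin n // i ∈ Jᶜ} → ℝ) := fun ω j => X ↑j ω with hb
  set c : Ω → ({i : Fin n // i ∈ Jᶜ} → ℝ) := fun ω j => X' ↑j ω with hc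
  have hamea : Measurable a := measurable_pi_lambda _ fun i => hmeas ↑i
  have hbmea : Measurable b := measurable_pi_lambda _ fun j => hmeas ↑j
  have hcmea : Measurable c := measurable_pi_lambda _ fun j => hmeas' ↑j
  -- finsets in the sum type
  set embl : Fin n ↪ Fin n ⊕ Fin n := ⟨Sum.inl, Sum.inl_injective⟩ with hembl
  set embr : Fin n ↪ Fin n ⊕ Fin n := ⟨Sum.inr, Sum.inr_injective⟩ with hembr
  set SA : Finset (Fin n ⊕ Fin n) := J.map embl with hSA
  set SB : Finset (Fin n ⊕ Fin n) := Jᶜ.map embl with hSB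
  set SC : Finset (Fin n ⊕ Fin n) := Jᶜ.map embr with hSC
  have hdisjBC : Disjoint SB SC := by
    rw [Finset.disjoint_left]
    rintro k hk hk'
    rcases Finset.mem_map.mp hk with ⟨j, _, rfl⟩
    rcases Finset.mem_map.mp hk' with ⟨j', _, h⟩
    simp [hembl, hembr] at h
  have hdisjA : Disjoint SA (SB ∪ SC) := by
    rw [Finset.disjoint_union_right]
    constructor
    · rw [hSA, hSB, Finset.disjoint_map]
      exact disjoint_compl_right
    · rw [Finset.disjoint_left]
      rintro k hk hk'
      rcases Finset.mem_map.mp hk with ⟨j, _, rfl⟩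
      rcases Finset.mem_map.mp hk' with ⟨j', _, h⟩
      simp [hembl, hembr] at h
  -- independence of the blocks
  have hbc : IndepFun b c ℙ := by
    have hBC := hindep.indepFun_finset SB SC hdisjBC hFmeas
    have mφB : Measurable (fun z : ({k // k ∈ SB} → ℝ) =>
        (fun j : {i : Fin n // i ∈ Jᶜ} => z ⟨Sum.inl ↑j, Finset.mem_map_of_mem embl j.2⟩)) :=
      measurable_pi_lambda _ fun j => measurable_pi_apply _
    have mφC : Measurable (fun z : ({k // k ∈ SC} → ℝ) =>
        (fun j : {i : Fin n // i ∈ Jᶜ} => z ⟨Sum.inr ↑j, Finset.mem_map_of_mem embr j.2⟩)) :=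
      measurable_pi_lambda _ fun j => measurable_pi_apply _
    exact hBC.comp mφB mφC
  have habc : IndepFun a (fun ω => (b ω, c ω)) ℙ := by
    have hATT := hindep.indepFun_finset SA (SB ∪ SC) hdisjA hFmeas
    have mφA : Measurable (fun z : ({k // k ∈ SA} → ℝ) =>
        (fun i : {i : Fin n // i ∈ J} => z ⟨Sum.inl ↑i, Finset.mem_map_of_mem embl i.2⟩)) :=
      measurable_pi_lambda _ fun i => measurable_pi_apply _
    have mψ : Measurable (fun z : ({k // k ∈ SB ∪ SC} → ℝ) =>
        ((fun j : {i : Fin n // i ∈ Jᶜ} =>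
            z ⟨Sum.inl ↑j, Finset.mem_union_left _ (Finset.mem_map_of_mem embl j.2)⟩),
         (fun j : {i : Fin n // i ∈ Jᶜ} =>
            z ⟨Sum.inr ↑j, Finset.mem_union_right _ (Finset.mem_map_of_mem embr j.2)⟩))) :=
      (measurable_pi_lambda _ fun j => measurable_pi_apply _).prodMk
        (measurable_pi_lambda _ fun j => measurable_pi_apply _)
    exact hATT.comp mφA mψ
  -- laws
  set ρ : Measure ({i : Fin n // i ∈ J} → ℝ) := Measure.map a ℙ with hρ
  set ν : Measure ({i : Fin n // i ∈ Jᶜ} → ℝ) := Measure.map b ℙ with hν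
  haveI : IsProbabilityMeasure ρ := Measure.isProbabilityMeasure_map hamea.aemeasurable
  haveI : IsProbabilityMeasure ν := Measure.isProbabilityMeasure_map hbmea.aemeasurable
  have hsubX : iIndepFun
      (fun j : {i : Fin n // i ∈ Jᶜ} => X ↑j) ℙ := by
    have := iIndepFun_reindex hindep (fun j : {i : Fin n // i ∈ Jᶜ} => Sum.inl ↑j)
      (fun j k h => Subtype.coe_injective (Sum.inl_injective h))
    exact this
  have hsubX' : iIndepFun
      (fun j : {i : Fin n // i ∈ Jᶜ} => X' ↑j) ℙ := by
    have := iIndepFun_reindex hindep (fun j : {i : Fin n // i ∈ Jᶜ} => Sum.inr ↑j)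
      (fun j k h => Subtype.coe_injective (Sum.inr_injective h))
    exact this
  have hcb : Measure.map c ℙ = ν := by
    rw [hν, hb, hc]
    rw [map_tuple_eq_pi ℙ hsubX' (fun j => hmeas' ↑j),
      map_tuple_eq_pi ℙ hsubX (fun j => hmeas ↑j)]
    exact congrArg Measure.pi (funext fun j => (hcopy ↑j).map_eq)
  have htriple : Measure.map (fun ω => (a ω, (b ω, c ω))) ℙ = ρ.prod (ν.prod ν) := by
    rw [(indepFun_iff_map_prod_eq_prod_map_map hamea.aemeasurable
      (hbmea.prodMk hcmea).aemeasurable).mp habc,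
      (indepFun_iff_map_prod_eq_prod_map_map hbmea.aemeasurable
        hcmea.aemeasurable).mp hbc, hcb]
  -- the event set
  set A : Set (({i : Fin n // i ∈ J} → ℝ) × ({i : Fin n // i ∈ Jᶜ} → ℝ)) :=
    {p | |dqfQ G J p - u| ≤ ε} with hAdef
  have hA : MeasurableSet A :=
    measurableSet_le ((dqfQ_meas G J).sub measurable_const).abs measurable_const
  have hm1 : Measurable fun p : ({i : Fin n // i ∈ J} → ℝ) ×
      ({i : Fin n // i ∈ Jᶜ} → ℝ) × ({i : Fin n // i ∈ Jᶜ} → ℝ) => (p.1, p.2.1) :=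
    measurable_fst.prodMk (measurable_fst.comp measurable_snd)
  have hm2 : Measurable fun p : ({i : Fin n // i ∈ J} → ℝ) ×
      ({i : Fin n // i ∈ Jᶜ} → ℝ) × ({i : Fin n // i ∈ Jᶜ} → ℝ) => (p.1, p.2.2) :=
    measurable_fst.prodMk (measurable_snd.comp measurable_snd)
  have hS1 : MeasurableSet {p : ({i : Fin n // i ∈ J} → ℝ) ×
      ({i : Fin n // i ∈ Jᶜ} → ℝ) × ({i : Fin n // i ∈ Jᶜ} → ℝ) | (p.1, p.2.1) ∈ A} := hm1 hA
  have hS12 : MeasurableSet {p : ({i : Fin n // i ∈ J} → ℝ) ×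
      ({i : Fin n // i ∈ Jᶜ} → ℝ) × ({i : Fin n // i ∈ Jᶜ} → ℝ) |
      (p.1, p.2.1) ∈ A ∧ (p.1, p.2.2) ∈ A} := (hm1 hA).inter (hm2 hA)
  have hT3 : Measurable (fun ω => (a ω, (b ω, c ω))) :=
    hamea.prodMk (hbmea.prodMk hcmea)
  -- pointwise values of Q
  have hQab : ∀ ω, dqfQ G J (a ω, b ω) = ∑ i, ∑ j, G i j * X j ω * X i ω := by
    intro ω
    rw [ha, hb]
    rw [dqfQ_apply G J (fun i => X i ω) (fun i => X i ω)]
    exact Finset.sum_congr rfl fun i _ => Finset.sum_congr rfl fun j _ => by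
      simp
  have hQac : ∀ ω, dqfQ G J (a ω, c ω)
      = ∑ i, ∑ j, G i j * (if j ∈ J then X j ω else X' j ω)
        * (if i ∈ J then X i ω else X' i ω) := by
    intro ω
    rw [ha, hc]
    exact dqfQ_apply G J (fun i => X i ω) (fun i => X' i ω)
  -- event identification
  have hE1 : {ω | |(∑ i, ∑ j, G i j * X j ω * X i ω) - u| ≤ ε}
      = (fun ω => (a ω, (b ω, c ω))) ⁻¹' {p | (p.1, p.2.1) ∈ A} := by
    ext ω
    simp only [Set.mem_setOf_eq, Set.mem_preimage, hAdef]
    rw [hQab ω]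
  -- inclusion into the target event
  have hsub : (fun ω => (a ω, (b ω, c ω))) ⁻¹'
        {p | (p.1, p.2.1) ∈ A ∧ (p.1, p.2.2) ∈ A}
      ⊆ {ω | |2 * (∑ i ∈ J, ∑ j ∈ Jᶜ, G i j * (X j ω - X' j ω) * X i ω)
            + ((∑ i ∈ Jᶜ, ∑ j ∈ Jᶜ, G i j * X j ω * X i ω)
              - (∑ i ∈ Jᶜ, ∑ j ∈ Jᶜ, G i j * X' j ω * X' i ω))| ≤ 2 * ε} := by
    rintro ω ⟨h1, h2⟩
    simp only [Set.mem_setOf_eq, hAdef] at h1 h2 ⊢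
    have halg := decoupling_alg G hG J (fun i => X i ω) (fun i => X' i ω)
    have key2 : 2 * (∑ i ∈ J, ∑ j ∈ Jᶜ, G i j * (X j ω - X' j ω) * X i ω)
        + ((∑ i ∈ Jᶜ, ∑ j ∈ Jᶜ, G i j * X j ω * X i ω)
          - (∑ i ∈ Jᶜ, ∑ j ∈ Jᶜ, G i j * X' j ω * X' i ω))
        = dqfQ G J (a ω, b ω) - dqfQ G J (a ω, c ω) := by
      rw [hQab ω, hQac ω]
      exact halg.symm
    rw [key2]
    have habs : |dqfQ G J (a ω, b ω) - dqfQ G J (a ω, c ω)|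
        ≤ |dqfQ G J (a ω, b ω) - u| + |dqfQ G J (a ω, c ω) - u| := by
      have h3 := abs_sub_le (dqfQ G J (a ω, b ω)) u (dqfQ G J (a ω, c ω))
      rwa [abs_sub_comm u (dqfQ G J (a ω, c ω))] at h3
    linarith
  -- put everything together
  have key := decoupling_abstract ρ ν hA
  have e1 : ℙ {ω | |(∑ i, ∑ j, G i j * X j ω * X i ω) - u| ≤ ε}
      = (ρ.prod (ν.prod ν)) {p | (p.1, p.2.1) ∈ A} := by
    rw [hE1, ← htriple, Measure.map_apply hT3 hS1]
  have e2 : (ρ.prod (ν.prod ν)) {p | (p.1, p.2.1) ∈ A ∧ (p.1, p.2.2) ∈ A}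
      = ℙ ((fun ω => (a ω, (b ω, c ω))) ⁻¹'
          {p | (p.1, p.2.1) ∈ A ∧ (p.1, p.2.2) ∈ A}) := by
    rw [← htriple, Measure.map_apply hT3 hS12]
  rw [e1]
  refine le_trans key ?_
  rw [e2]
  exact ENNReal.toReal_mono (measure_ne_top ℙ _) (measure_mono hsub)
end

section
/- Let A be an n×n real matrix, A_1 its first column, H_1 the span of its remaining n−1 columns. Let B be the (n−1)×(n−1) minor of A obtained by removing the first row and first column, and let X ∈ R^{n−1} be the first column of A with its first entry a_{11} removed. Assume A is symmetric and B is invertible. Then dist(A_1, H_1) = |⟨B^{-1}X, X⟩ − a_{11}| / √(1 + ‖B^{-1}X‖₂²). -/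
open MeasureTheory
open scoped RealInnerProductSpace Matrix

lemma infDist_span_eq_of_orth {E : Type*} [NormedAddCommGroup E] [InnerProductSpace ℝ E]
    (s : Set E) (K : Submodule ℝ E) (hK : K = Submodule.span ℝ s)
    (p w : E) (hw : w ≠ 0) (horth : ∀ x ∈ s, ⟪x, w⟫ = 0)
    (hmem : p - (⟪p, w⟫ / ‖w‖ ^ 2) • w ∈ K) :
    Metric.infDist p (K : Set E) = |⟪p, w⟫| / ‖w‖ := by
  have hwpos : (0:ℝ) < ‖w‖ := norm_pos_iff.mpr hw
  have hyw : ∀ y ∈ K, ⟪y, w⟫ = 0 := by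
    subst hK
    intro y hy
    induction hy using Submodule.span_induction with
    | mem x hx => exact horth x hx
    | zero => simp
    | add a b _ _ ha hb => rw [inner_add_left, ha, hb, add_zero]
    | smul r a _ ha => rw [real_inner_smul_left, ha, mul_zero]
  set c : ℝ := ⟪p, w⟫ / ‖w‖ ^ 2 with hc
  set q : E := p - c • w with hq
  have hdist : dist p q = |⟪p, w⟫| / ‖w‖ := by
    rw [dist_eq_norm]
    have : p - q = c • w := by simp [hq]
    rw [this, norm_smul, Real.norm_eq_abs, hc, abs_div, abs_pow, abs_norm]
    rw [pow_two]
    field_simp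
  apply le_antisymm
  · calc Metric.infDist p (K : Set E) ≤ dist p q := Metric.infDist_le_dist_of_mem hmem
    _ = _ := hdist
  · rw [Metric.infDist_eq_iInf]
    have : Nonempty (K : Set E) := ⟨0, K.zero_mem⟩
    apply le_ciInf
    intro ⟨y, hy⟩
    have h1 : ⟪p - y, w⟫ = ⟪p, w⟫ := by
      rw [inner_sub_left, hyw y hy, sub_zero]
    have h2 : |⟪p, w⟫| ≤ ‖p - y‖ * ‖w‖ := h1 ▸ abs_real_inner_le_norm _ _
    rw [div_le_iff₀ hwpos]
    simpa [dist_eq_norm] using h2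



/-- **Distance via quadratic forms.**
Let `A` be an `(n+1) × (n+1)` real symmetric matrix, `A₁` its first column, `H₁` the span of
the remaining columns.  Let `B` be the minor of `A` obtained by removing the first row and
column and `X` the first column of `A` with its first entry `a₀₀` removed.  If `B` is
invertible, then `dist(A₁, H₁) = |⟨B⁻¹X, X⟩ - a₀₀| / √(1 + ‖B⁻¹X‖₂²)`. -/
theorem dist_col_span_eq_quadratic_form (n : ℕ)
    (A : Matrix (Fin (n + 1)) (Fin (n + 1)) ℝ) (hA : A.IsSymm)
    (B : Matrix (Fin n) (Fin n) ℝ) (hB : B = A.submatrix Fin.succ Fin.succ)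
    (hBinv : IsUnit B.det)
    (X : Fin n → ℝ) (hX : X = fun i => A (Fin.succ i) 0)
    (col : Fin (n + 1) → EuclideanSpace ℝ (Fin (n + 1)))
    (hcol : col = fun k => (WithLp.toLp 2 (fun i => A i k) : EuclideanSpace ℝ (Fin (n + 1))))
    (H₁ : Submodule ℝ (EuclideanSpace ℝ (Fin (n + 1))))
    (hH₁ : H₁ = Submodule.span ℝ (col '' {k | k ≠ 0})) :
    Metric.infDist (col 0) (H₁ : Set (EuclideanSpace ℝ (Fin (n + 1))))
      = |(∑ i, B⁻¹.mulVec X i * X i) - A 0 0|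
        / Real.sqrt (1 + ∑ i, (B⁻¹.mulVec X i) ^ 2) := by
  -- basic symmetry facts
  have hAs : ∀ i j, A i j = A j i := fun i j => (congrFun (congrFun hA i) j).symm
  have hBsym : B.transpose = B := by
    rw [hB]
    ext i j
    simp [Matrix.transpose_apply, hAs]
  have hBisym : B⁻¹.transpose = B⁻¹ := by rw [Matrix.transpose_nonsing_inv, hBsym]
  have hBa : ∀ i j, A (Fin.succ i) (Fin.succ j) = B i j := by
    intro i j; rw [hB]; rfl
  have hBs : ∀ i j, B i j = B j i := fun i j => (congrFun (congrFun hBsym i) j).symm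
  set Y : Fin n → ℝ := B⁻¹.mulVec X with hY
  have hBY : B.mulVec Y = X := by
    rw [hY, Matrix.mulVec_mulVec, Matrix.mul_nonsing_inv _ hBinv, Matrix.one_mulVec]
  set w : EuclideanSpace ℝ (Fin (n + 1)) := WithLp.toLp 2 (Fin.cons (-1) Y : Fin (n + 1) → ℝ) with hw
  have hw0 : w 0 = -1 := rfl
  have hws : ∀ i, w (Fin.succ i) = Y i := fun i => rfl
  have hwne : w ≠ 0 := by
    intro h
    have := congrArg (fun v : EuclideanSpace ℝ (Fin (n + 1)) => v 0) h
    simp only [hw0] at this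
    norm_num at this
  -- inner products in EuclideanSpace
  have hinner : ∀ u v : EuclideanSpace ℝ (Fin (n + 1)), ⟪u, v⟫ = ∑ i, u i * v i := by
    intro u v
    simp [PiLp.inner_apply, RCLike.inner_apply, starRingEnd_apply, mul_comm]
  set S : ℝ := ∑ i, Y i * X i with hS
  set N : ℝ := ∑ i, Y i * Y i with hN
  have hNnn : 0 ≤ N := Finset.sum_nonneg fun i _ => mul_self_nonneg _
  have hpw : ⟪col 0, w⟫ = S - A 0 0 := by
    rw [hinner, Fin.sum_univ_succ, hw0, hcol]
    simp only [hws]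
    rw [hS]
    have : ∀ i, A (Fin.succ i) 0 = X i := by intro i; rw [hX]
    rw [Finset.sum_congr rfl (fun i _ => by rw [this i, mul_comm])]
    ring
  have hww : ⟪w, w⟫ = 1 + N := by
    rw [hinner, Fin.sum_univ_succ, hw0]
    simp only [hws, hN]
    ring
  have hnormw : ‖w‖ ^ 2 = 1 + N := by
    rw [← real_inner_self_eq_norm_sq, hww]
  have hdenpos : (0:ℝ) < 1 + N := by linarith
  -- orthogonality to the generators
  have horth : ∀ x ∈ col '' {k | k ≠ 0}, ⟪x, w⟫ = 0 := by
    rintro x ⟨k, hk, rfl⟩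
    obtain ⟨j, rfl⟩ := Fin.eq_succ_of_ne_zero hk
    rw [hinner, Fin.sum_univ_succ, hw0, hcol]
    simp only [hws]
    have key : ∑ i, A (Fin.succ i) (Fin.succ j) * Y i = A 0 (Fin.succ j) := by
      have h1 : ∑ i, A (Fin.succ i) (Fin.succ j) * Y i = (B.mulVec Y) j := by
        rw [Matrix.mulVec, dotProduct]
        exact Finset.sum_congr rfl fun i _ => by rw [hBa, hBs i j, mul_comm]
      rw [h1, hBY, hX]
      exact (hAs _ _).symm
    rw [key]
    ring
  -- the projection point lies in the span
  set c : ℝ := ⟪(col 0 : EuclideanSpace ℝ (Fin (n+1))), w⟫ / ‖w‖ ^ 2 with hc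
  have hcval : c = (S - A 0 0) / (1 + N) := by rw [hc, hpw, hnormw]
  set y : Fin n → ℝ := Y - c • (B⁻¹.mulVec Y) with hy
  have hBiY : ∑ i, (B⁻¹.mulVec Y) i * X i = N := by
    have h1 : ∑ i, (B⁻¹.mulVec Y) i * X i = X ⬝ᵥ (B⁻¹.mulVec Y) := by
      rw [dotProduct]
      exact Finset.sum_congr rfl fun i _ => mul_comm _ _
    rw [h1, Matrix.dotProduct_mulVec]
    have h2 : X ᵥ* B⁻¹ = Y := by
      conv_lhs => rw [← hBisym]
      rw [Matrix.vecMul_transpose, hY]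
    rw [h2, hN, dotProduct]
  have hBmuly : B.mulVec y = X - c • Y := by
    rw [hy, Matrix.mulVec_sub, Matrix.mulVec_smul, hBY, Matrix.mulVec_mulVec,
      Matrix.mul_nonsing_inv _ hBinv, Matrix.one_mulVec]
  have hmemeq : (col 0 : EuclideanSpace ℝ (Fin (n+1))) - c • w
      = ∑ j, y j • col (Fin.succ j) := by
    ext i
    have hrhs : (∑ j, y j • col (Fin.succ j)) i = ∑ j, y j * A i (Fin.succ j) := by
      rw [WithLp.ofLp_sum, Finset.sum_apply]
      exact Finset.sum_congr rfl fun j _ => by rw [hcol]; rfl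
    have hlhs : ((col 0 : EuclideanSpace ℝ (Fin (n+1))) - c • w) i = A i 0 - c * w i := by
      rw [hcol]; rfl
    rw [hlhs, hrhs]
    induction i using Fin.cases with
    | zero =>
      rw [hw0]
      have : ∑ j, y j * A 0 (Fin.succ j) = S - c * N := by
        calc ∑ j, y j * A 0 (Fin.succ j) = ∑ j, (Y j - c * (B⁻¹.mulVec Y) j) * X j := by
              refine Finset.sum_congr rfl fun j _ => ?_
              rw [hy, hAs 0 (Fin.succ j), hX]
              simp [Pi.sub_apply, Pi.smul_apply]
          _ = S - c * N := by
              rw [← hBiY, hS]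
              simp [sub_mul, Finset.sum_sub_distrib, Finset.mul_sum, mul_assoc]
      rw [this, hcval]
      field_simp
      ring
    | succ i =>
      rw [hws]
      have : ∑ j, y j * A (Fin.succ i) (Fin.succ j) = (B.mulVec y) i := by
        rw [Matrix.mulVec, dotProduct]
        exact Finset.sum_congr rfl fun j _ => by rw [hBa, mul_comm]
      rw [this, hBmuly, hX]
      simp [Pi.sub_apply, Pi.smul_apply]
  have hmem : (col 0 : EuclideanSpace ℝ (Fin (n+1))) - c • w ∈ H₁ := by
    rw [hmemeq, hH₁]
    exact Submodule.sum_mem _ fun j _ => Submodule.smul_mem _ _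
      (Submodule.subset_span ⟨Fin.succ j, Fin.succ_ne_zero j, rfl⟩)
  have main := infDist_span_eq_of_orth (col '' {k | k ≠ 0}) H₁ hH₁ (col 0) w hwne horth hmem
  have hnw : ‖w‖ = Real.sqrt (1 + N) := by
    rw [← Real.sqrt_sq (norm_nonneg w), hnormw]
  have hNsq : N = ∑ i, Y i ^ 2 := Finset.sum_congr rfl fun i _ => (pow_two (Y i)).symm
  rw [main, hpw, hnw, hNsq]
end

section
/- For vectors in the unit sphere of R^n, define the LCD with parameter L ≥ 1 by D_L(x) = inf{θ > 0 : dist(θx, Z^n) < L·√(log₊(θ/L))}, where log₊ is the positive part of the natural logarithm. Then for every x ∈ S^{n−1} and every L ≥ 1, D_L(x) ≥ 1/(2‖x‖_∞). -/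
open scoped ENNReal

/-- The Euclidean norm of a vector in `ℝⁿ`. -/
noncomputable def euclidNorm {n : ℕ} (v : Fin n → ℝ) : ℝ :=
  Real.sqrt (∑ i, (v i) ^ 2)

/-- The Euclidean distance from a vector to the integer lattice `ℤⁿ`. -/
noncomputable def distToLattice {n : ℕ} (v : Fin n → ℝ) : ℝ :=
  sInf {r | ∃ p : Fin n → ℤ, r = euclidNorm (fun i => v i - (p i : ℝ))}

/-- The least common denominator (LCD) of `x` with parameter `L`:
`D_L(x) = inf {θ > 0 : dist(θx, ℤⁿ) < L √(log₊(θ/L))}`, valued in `[0,∞]`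
(the infimum of the empty set being `∞`). -/
noncomputable def LCD {n : ℕ} (L : ℝ) (x : Fin n → ℝ) : ℝ≥0∞ :=
  sInf {θ : ℝ≥0∞ | ∃ t : ℝ, 0 < t ∧ θ = ENNReal.ofReal t ∧
    distToLattice (t • x) < L * Real.sqrt (max (Real.log (t / L)) 0)}

/-- For every unit vector `x ∈ S^{n-1}` and every `L ≥ 1`, one has
`D_L(x) ≥ 1 / (2 ‖x‖_∞)`. -/
theorem lcd_ge_inv_two_sup_norm {n : ℕ} (L : ℝ) (hL : 1 ≤ L)
    (x : Fin n → ℝ) (hx : euclidNorm x = 1) :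
    ENNReal.ofReal (1 / (2 * ⨆ i, |x i|)) ≤ LCD L x := by
  have hL0 : (0:ℝ) < L := lt_of_lt_of_le one_pos hL
  -- n > 0
  rcases Nat.eq_zero_or_pos n with hn | hn
  · subst hn; simp [euclidNorm] at hx
  have hne : Nonempty (Fin n) := ⟨⟨0, hn⟩⟩
  -- sum of squares is 1
  have hsum : ∑ i, (x i) ^ 2 = 1 := by
    have h0 : 0 ≤ ∑ i, (x i) ^ 2 := Finset.sum_nonneg fun i _ => sq_nonneg _
    unfold euclidNorm at hx
    have := Real.sq_sqrt h0
    rw [hx] at this; linarith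
  -- some coordinate nonzero
  have hex : ∃ i, x i ≠ 0 := by
    by_contra h
    push_neg at h
    rw [Finset.sum_eq_zero (fun i _ => by rw [h i]; ring)] at hsum
    norm_num at hsum
  obtain ⟨i0, hi0⟩ := hex
  set M := ⨆ i, |x i| with hM
  have hbdd : BddAbove (Set.range fun i => |x i|) := Set.Finite.bddAbove (Set.finite_range _)
  have hMi : ∀ i, |x i| ≤ M := fun i => le_ciSup hbdd i
  have hMpos : 0 < M := lt_of_lt_of_le (abs_pos.mpr hi0) (hMi i0)
  apply le_sInf
  rintro θ ⟨t, ht, rfl, hlt⟩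
  apply ENNReal.ofReal_le_ofReal
  by_contra hcon
  push_neg at hcon
  -- t * M < 1/2
  have htM : t * M < 1 / 2 := by
    have h2 : (1 / (2 * M)) * M = 1 / 2 := by field_simp
    have := mul_lt_mul_of_pos_right hcon hMpos
    linarith
  have hcoord : ∀ i, |t * x i| < 1 / 2 := by
    intro i
    calc |t * x i| = t * |x i| := by rw [abs_mul, abs_of_pos ht]
    _ ≤ t * M := by nlinarith [hMi i, abs_nonneg (x i)]
    _ < 1 / 2 := htM
  -- lower bound: t ≤ dist
  have hd : t ≤ distToLattice (t • x) := by
    apply le_csInf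
    · exact ⟨euclidNorm (fun i => (t • x) i - ((0 : Fin n → ℤ) i : ℝ)), 0, rfl⟩
    rintro r ⟨p, rfl⟩
    have hle : ∀ i, (t * x i) ^ 2 ≤ ((t • x) i - (p i : ℝ)) ^ 2 := by
      intro i
      have hsm : (t • x) i = t * x i := rfl
      rw [hsm]
      rcases eq_or_ne (p i) 0 with h0 | h0
      · simp [h0]
      · have h1 : (1:ℝ) ≤ |(p i : ℝ)| := by
          rw [← Int.cast_abs]
          exact_mod_cast Int.one_le_abs h0
        have ha := hcoord i
        rw [abs_lt] at ha
        rcases abs_le.mp (le_refl |(p i : ℝ)|) with ⟨hb1, hb2⟩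
        rcases le_or_gt (0:ℝ) (p i : ℝ) with hb | hb
        · have : (1:ℝ) ≤ (p i : ℝ) := by rwa [abs_of_nonneg hb] at h1
          nlinarith
        · have : (p i : ℝ) ≤ -1 := by
            have := h1; rw [abs_of_neg hb] at this; linarith
          nlinarith
    have hsum2 : t ^ 2 ≤ ∑ i, ((t • x) i - (p i : ℝ)) ^ 2 := by
      calc t ^ 2 = ∑ i, (t * x i) ^ 2 := by
            simp [mul_pow, ← Finset.mul_sum, hsum]
      _ ≤ _ := Finset.sum_le_sum fun i _ => hle i
    have := Real.sqrt_le_sqrt hsum2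
    rwa [Real.sqrt_sq ht.le] at this
  -- upper bound: L * sqrt(log₊(t/L)) ≤ t
  have hrhs : L * Real.sqrt (max (Real.log (t / L)) 0) ≤ t := by
    rcases le_or_gt t L with hc | hc
    · have hlog : Real.log (t / L) ≤ 0 :=
        Real.log_nonpos (by positivity) ((div_le_one hL0).mpr hc)
      rw [max_eq_right hlog, Real.sqrt_zero, mul_zero]
      exact ht.le
    · set s := t / L with hs
      have hs1 : 1 < s := (one_lt_div hL0).mpr hc
      have hlog0 : 0 ≤ Real.log s := Real.log_nonneg hs1.le
      rw [max_eq_left hlog0]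
      have hlog : Real.log s ≤ s - 1 := Real.log_le_sub_one_of_pos (by linarith)
      have hsq : Real.log s ≤ s ^ 2 := by nlinarith
      have : Real.sqrt (Real.log s) ≤ s := by
        calc Real.sqrt (Real.log s) ≤ Real.sqrt (s ^ 2) := Real.sqrt_le_sqrt hsq
        _ = s := Real.sqrt_sq (by linarith)
      calc L * Real.sqrt (Real.log s) ≤ L * s := by nlinarith
      _ = t := by rw [hs]; field_simp
  linarith
end

section
/- Fix c₀, c₁ ∈ (0,1). Call x ∈ R^n sparse if |supp(x)| ≤ c₀n, and call x ∈ S^{n−1} compressible if it is within Euclidean distance c₁ of the set of sparse vectors. Then the set Comp(c₀,c₁) of compressible unit vectors admits a (2c₁)-net (with centers in Comp(c₀,c₁)) of cardinality at most (9/(c₀c₁))^{c₀n}. -/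
/-- A vector `y ∈ ℝⁿ` is sparse if `|supp(y)| ≤ c₀ n`. -/
def IsSparse {n : ℕ} (c₀ : ℝ) (y : Fin n → ℝ) : Prop :=
  ((Function.support y).ncard : ℝ) ≤ c₀ * n

/-- A unit vector `x ∈ S^{n-1}` is compressible if it is within Euclidean distance `c₁`
of the set of sparse vectors. -/
def IsCompressible {n : ℕ} (c₀ c₁ : ℝ) (x : Fin n → ℝ) : Prop :=
  euclidNorm x = 1 ∧ ∃ y : Fin n → ℝ, IsSparse c₀ y ∧ euclidNorm (x - y) ≤ c₁

namespace CompressibleNet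

open Metric MeasureTheory Finset

/-! ### A volumetric packing bound in Euclidean space -/

lemma packing_card_le {m : ℕ} {ε : ℝ} (hε : 0 < ε) (F : Finset (EuclideanSpace ℝ (Fin m)))
    (hF : ∀ x ∈ F, ‖x‖ = 1)
    (hsep : (F : Set (EuclideanSpace ℝ (Fin m))).Pairwise (fun x y => ε ≤ dist x y)) :
    (F.card : ℝ) ≤ ((2 + ε) / ε) ^ m := by
  haveI : (volume : Measure (EuclideanSpace ℝ (Fin m))).IsAddHaarMeasure := by
    rw [← (EuclideanSpace.basisFun (Fin m) ℝ).addHaar_eq_volume]; infer_instance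
  set μ := (volume : Measure (EuclideanSpace ℝ (Fin m)))
  have hdisj : (F : Set (EuclideanSpace ℝ (Fin m))).PairwiseDisjoint
      (fun x => ball x (ε / 2)) := by
    intro x hx y hy hxy
    exact ball_disjoint_ball (by linarith [hsep hx hy hxy])
  have hsub : ∀ x ∈ F, ball x (ε / 2) ⊆ ball (0 : EuclideanSpace ℝ (Fin m)) (1 + ε / 2) := by
    intro x hx z hz
    rw [mem_ball] at hz ⊢
    have h3 : dist z (0 : EuclideanSpace ℝ (Fin m)) ≤ dist z x + dist x 0 := dist_triangle _ _ _
    simp only [dist_zero_right] at h3 ⊢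
    have := hF x hx
    linarith
  have hmeas : μ (⋃ x ∈ F, ball x (ε / 2)) = ∑ x ∈ F, μ (ball x (ε / 2)) :=
    measure_biUnion_finset hdisj (fun x _ => measurableSet_ball)
  have hball : ∀ x : EuclideanSpace ℝ (Fin m), μ (ball x (ε / 2)) =
      ENNReal.ofReal ((ε / 2) ^ m) * μ (ball 0 1) := by
    intro x
    rw [Measure.addHaar_ball_of_pos μ x (by linarith)]
    congr 1
    rw [finrank_euclideanSpace_fin]
  have hbig : μ (ball (0 : EuclideanSpace ℝ (Fin m)) (1 + ε / 2)) =
      ENNReal.ofReal ((1 + ε / 2) ^ m) * μ (ball 0 1) := by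
    rw [Measure.addHaar_ball_of_pos μ 0 (by linarith)]
    congr 1
    rw [finrank_euclideanSpace_fin]
  have hle : (F.card : ENNReal) * (ENNReal.ofReal ((ε / 2) ^ m) * μ (ball 0 1)) ≤
      ENNReal.ofReal ((1 + ε / 2) ^ m) * μ (ball 0 1) := by
    calc (F.card : ENNReal) * (ENNReal.ofReal ((ε / 2) ^ m) * μ (ball 0 1))
        = ∑ x ∈ F, μ (ball x (ε / 2)) := by
          rw [Finset.sum_congr rfl (fun x _ => hball x), Finset.sum_const, nsmul_eq_mul]
      _ = μ (⋃ x ∈ F, ball x (ε / 2)) := hmeas.symm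
      _ ≤ μ (ball 0 (1 + ε / 2)) := measure_mono (Set.iUnion₂_subset hsub)
      _ = _ := hbig
  have hV0 : μ (ball (0 : EuclideanSpace ℝ (Fin m)) 1) ≠ 0 :=
    (measure_ball_pos μ 0 one_pos).ne'
  have hVtop : μ (ball (0 : EuclideanSpace ℝ (Fin m)) 1) ≠ ⊤ :=
    (measure_ball_lt_top).ne
  rw [← mul_assoc] at hle
  have hle2 : (F.card : ENNReal) * ENNReal.ofReal ((ε / 2) ^ m) ≤
      ENNReal.ofReal ((1 + ε / 2) ^ m) :=
    (ENNReal.mul_le_mul_iff_left hV0 hVtop).1 hle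
  have hεm : 0 < (ε / 2) ^ m := by positivity
  have hreal : (F.card : ℝ) * (ε / 2) ^ m ≤ (1 + ε / 2) ^ m := by
    have := ENNReal.toReal_mono (by finiteness) hle2
    rw [ENNReal.toReal_mul, ENNReal.toReal_ofReal hεm.le,
      ENNReal.toReal_ofReal (by positivity)] at this
    simpa using this
  have : (F.card : ℝ) ≤ (1 + ε / 2) ^ m / (ε / 2) ^ m := by
    rw [le_div_iff₀ hεm]; exact hreal
  calc (F.card : ℝ) ≤ (1 + ε / 2) ^ m / (ε / 2) ^ m := this
    _ = ((2 + ε) / ε) ^ m := by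
        rw [← div_pow]
        congr 1
        field_simp

/-! ### Existence of a net of the unit sphere -/

lemma exists_sphere_net (m : ℕ) {ε : ℝ} (hε : 0 < ε) :
    ∃ T : Finset (EuclideanSpace ℝ (Fin m)),
      (∀ t ∈ T, ‖t‖ = 1) ∧
      (∀ x : EuclideanSpace ℝ (Fin m), ‖x‖ = 1 → ∃ t ∈ T, ‖x - t‖ ≤ ε) ∧
      (T.card : ℝ) ≤ ((2 + ε) / ε) ^ m := by
  set A : Set (Set (EuclideanSpace ℝ (Fin m))) :=
    {P | P ⊆ sphere (0 : EuclideanSpace ℝ (Fin m)) 1 ∧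
      P.Pairwise (fun x y => ε ≤ dist x y)} with hA
  obtain ⟨M, hM⟩ : ∃ M, Maximal (· ∈ A) M := by
    apply zorn_subset
    intro c hc hchain
    refine ⟨⋃₀ c, ⟨?_, ?_⟩, fun s hs => Set.subset_sUnion_of_mem hs⟩
    · exact Set.sUnion_subset fun s hs => (hc hs).1
    · intro x hx y hy hxy
      obtain ⟨s, hs, hxs⟩ := hx
      obtain ⟨t, ht, hyt⟩ := hy
      rcases hchain.total hs ht with h | h
      · exact (hc ht).2 (h hxs) hyt hxy
      · exact (hc hs).2 hxs (h hyt) hxy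
  have hMsphere : M ⊆ sphere (0 : EuclideanSpace ℝ (Fin m)) 1 := hM.prop.1
  have hMsep := hM.prop.2
  have hcard : ∀ F : Finset (EuclideanSpace ℝ (Fin m)), ↑F ⊆ M →
      (F.card : ℝ) ≤ ((2 + ε) / ε) ^ m := by
    intro F hF
    apply packing_card_le hε F
    · intro x hx
      have := hMsphere (hF hx)
      simpa [mem_sphere_iff_norm] using this
    · exact hMsep.mono hF
  have hfin : M.Finite := by
    by_contra hinf
    obtain ⟨F, hFM, hFcard⟩ := Set.Infinite.exists_subset_card_eq
      (Set.not_infinite.not_right.mpr hinf) (⌈((2 + ε) / ε) ^ m⌉₊ + 1)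
    have h1 := hcard F hFM
    rw [hFcard] at h1
    have h2 : ((2 + ε) / ε) ^ m ≤ (⌈((2 + ε) / ε) ^ m⌉₊ : ℝ) := Nat.le_ceil _
    push_cast at h1
    linarith
  refine ⟨hfin.toFinset, ?_, ?_, ?_⟩
  · intro t ht
    rw [Set.Finite.mem_toFinset] at ht
    simpa [mem_sphere_iff_norm] using hMsphere ht
  · intro x hx
    by_contra hcon
    push_neg at hcon
    have hxM : ∀ t ∈ M, ε < dist x t := by
      intro t ht
      have h := hcon t (by rwa [Set.Finite.mem_toFinset])
      rwa [dist_eq_norm]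
    have hins : insert x M ∈ A := by
      constructor
      · intro z hz
        rcases hz with rfl | hz
        · simpa [mem_sphere_iff_norm] using hx
        · exact hMsphere hz
      · intro a ha b hb hab
        rcases ha with rfl | ha
        · rcases hb with rfl | hb
          · exact absurd rfl hab
          · exact le_of_lt (hxM b hb)
        · rcases hb with rfl | hb
          · rw [dist_comm]; exact le_of_lt (hxM a ha)
          · exact hMsep ha hb hab
    have := hM.2 hins (Set.subset_insert x M)
    have hxmem : x ∈ M := this (Set.mem_insert x M)
    have := hxM x hxmem
    rw [dist_self] at this
    linarith
  · exact hcard _ (by rw [Set.Finite.coe_toFinset])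

/-! ### Coordinate embeddings -/

variable {n m : ℕ}

/-- Embedding of `ℝᵐ` into `ℝⁿ` along a finset `S` of cardinality `m`. -/
noncomputable def emb (S : Finset (Fin n)) (h : S.card = m)
    (t : EuclideanSpace ℝ (Fin m)) : Fin n → ℝ :=
  fun j => if hj : j ∈ S then t (Fin.cast h (S.equivFin ⟨j, hj⟩)) else 0

/-- Restriction of a vector of `ℝⁿ` to the coordinates in `S`. -/
noncomputable def resE (S : Finset (Fin n)) (h : S.card = m)
    (x : Fin n → ℝ) : EuclideanSpace ℝ (Fin m) :=
  WithLp.toLp 2 (fun i => x ((S.equivFin.symm (Fin.cast h.symm i)) : Fin n))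

lemma emb_apply_not_mem {S : Finset (Fin n)} {h : S.card = m}
    {t : EuclideanSpace ℝ (Fin m)} {j : Fin n} (hj : j ∉ S) : emb S h t j = 0 := by
  simp [emb, hj]

lemma emb_apply_coe {S : Finset (Fin n)} {h : S.card = m}
    {t : EuclideanSpace ℝ (Fin m)} (i : Fin m) :
    emb S h t ((S.equivFin.symm (Fin.cast h.symm i)) : Fin n) = t i := by
  have hj : ((S.equivFin.symm (Fin.cast h.symm i)) : Fin n) ∈ S :=
    (S.equivFin.symm (Fin.cast h.symm i)).2
  rw [emb, dif_pos hj]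
  refine congrArg _ ?_
  have : (⟨((S.equivFin.symm (Fin.cast h.symm i)) : Fin n), hj⟩ : {x // x ∈ S}) =
      S.equivFin.symm (Fin.cast h.symm i) := Subtype.ext rfl
  rw [this, Equiv.apply_symm_apply]
  simp

lemma emb_resE {S : Finset (Fin n)} {h : S.card = m} (x : Fin n → ℝ) (j : Fin n) :
    emb S h (resE S h x) j = if j ∈ S then x j else 0 := by
  by_cases hj : j ∈ S
  · rw [if_pos hj, emb, dif_pos hj, resE, WithLp.ofLp_toLp]
    congr 1
    simp
  · rw [if_neg hj, emb_apply_not_mem hj]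

lemma sum_emb_mul {S : Finset (Fin n)} {h : S.card = m}
    (t u : EuclideanSpace ℝ (Fin m)) :
    ∑ j, emb S h t j * emb S h u j = ∑ i, t i * u i := by
  rw [← Finset.sum_subset (Finset.subset_univ S)
    (fun j _ hj => by rw [emb_apply_not_mem hj, zero_mul])]
  rw [← Finset.sum_coe_sort S (fun j => emb S h t j * emb S h u j)]
  rw [← Equiv.sum_comp ((finCongr h.symm).trans S.equivFin.symm)
    (fun j : {x // x ∈ S} => emb S h t (j : Fin n) * emb S h u (j : Fin n))]
  apply Finset.sum_congr rfl
  intro i _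
  simp only [Equiv.trans_apply, finCongr_apply]
  rw [emb_apply_coe, emb_apply_coe]

/-! ### Norm bridges -/

lemma euclidNorm_nonneg (v : Fin n → ℝ) : 0 ≤ euclidNorm v :=
  Real.sqrt_nonneg _

lemma euclidNorm_sq (v : Fin n → ℝ) : euclidNorm v ^ 2 = ∑ j, v j ^ 2 :=
  Real.sq_sqrt (by positivity)

lemma normE_sq (t : EuclideanSpace ℝ (Fin m)) : ‖t‖ ^ 2 = ∑ i, t i ^ 2 := by
  rw [EuclideanSpace.norm_eq, Real.sq_sqrt (by positivity)]
  simp [sq_abs]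

lemma euclidNorm_emb {S : Finset (Fin n)} (h : S.card = m)
    (t : EuclideanSpace ℝ (Fin m)) : euclidNorm (emb S h t) = ‖t‖ := by
  have h1 : euclidNorm (emb S h t) ^ 2 = ‖t‖ ^ 2 := by
    rw [euclidNorm_sq, normE_sq]
    calc ∑ j, emb S h t j ^ 2 = ∑ j, emb S h t j * emb S h t j := by
          apply Finset.sum_congr rfl; intros; ring
      _ = ∑ i, t i * t i := sum_emb_mul t t
      _ = ∑ i, t i ^ 2 := by apply Finset.sum_congr rfl; intros; ring
  have := euclidNorm_nonneg (emb S h t)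
  nlinarith [norm_nonneg t]

/-! ### The scalar inequality -/

lemma scalar_key {c₁ b δ2 : ℝ} (hc₁ : 0 < c₁) (hc₁' : c₁ < 1)
    (hb0 : 0 < b) (hb1 : b ≤ 1) (hb2 : 1 - c₁ ^ 2 ≤ b ^ 2)
    (hδ0 : 0 ≤ δ2) (hδ : δ2 ≤ 3 * c₁ ^ 2) :
    2 - 2 * b + b * δ2 ≤ 4 * c₁ ^ 2 := by
  have step1 : 2 - 2 * b + b * δ2 ≤ 2 - b * (2 - 3 * c₁ ^ 2) := by nlinarith
  rcases le_or_gt (2 - 3 * c₁ ^ 2) 0 with hc | hc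
  · nlinarith
  · rcases le_or_gt (2 - 4 * c₁ ^ 2) 0 with hc4 | hc4
    · nlinarith
    · have hs : c₁ ^ 2 < 1 / 2 := by nlinarith
      have key : 2 - 4 * c₁ ^ 2 ≤ b * (2 - 3 * c₁ ^ 2) := by
        by_contra hcon
        push_neg at hcon
        have hbpos : 0 ≤ b * (2 - 3 * c₁ ^ 2) := by positivity
        have hsq : (b * (2 - 3 * c₁ ^ 2)) ^ 2 < (2 - 4 * c₁ ^ 2) ^ 2 := by nlinarith
        nlinarith [sq_nonneg c₁, sq_nonneg (c₁ ^ 2)]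
      linarith

/-! ### Counting -/

lemma pow_self_le_factorial_mul_exp : ∀ m : ℕ, (m : ℝ) ^ m ≤ m.factorial * Real.exp 1 ^ m := by
  intro m
  induction m with
  | zero => simp
  | succ k ih =>
    rcases Nat.eq_zero_or_pos k with rfl | hk
    · simpa using Real.one_le_exp zero_le_one
    have hk0 : (0 : ℝ) < k := by exact_mod_cast hk
    have h1 : ((k : ℝ) + 1) ^ k ≤ (k : ℝ) ^ k * Real.exp 1 := by
      have h2 : ((k : ℝ) + 1) / k ≤ Real.exp (1 / k) := by
        have := Real.add_one_le_exp (1 / (k : ℝ))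
        calc ((k : ℝ) + 1) / k = 1 / k + 1 := by field_simp; ring
          _ ≤ Real.exp (1 / k) := this
      have h3 : (((k : ℝ) + 1) / k) ^ k ≤ Real.exp (1 / k) ^ k :=
        pow_le_pow_left₀ (by positivity) h2 k
      have h4 : Real.exp (1 / (k : ℝ)) ^ k = Real.exp 1 := by
        rw [← Real.exp_nat_mul]
        congr 1
        field_simp
      rw [h4, div_pow] at h3
      calc ((k : ℝ) + 1) ^ k = (((k : ℝ) + 1) ^ k / (k : ℝ) ^ k) * (k : ℝ) ^ k := by
            field_simp
        _ ≤ Real.exp 1 * (k : ℝ) ^ k := by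
            apply mul_le_mul_of_nonneg_right h3 (by positivity)
        _ = (k : ℝ) ^ k * Real.exp 1 := by ring
    calc ((k + 1 : ℕ) : ℝ) ^ (k + 1) = ((k : ℝ) + 1) * ((k : ℝ) + 1) ^ k := by
          push_cast; ring
      _ ≤ ((k : ℝ) + 1) * ((k : ℝ) ^ k * Real.exp 1) := by
          apply mul_le_mul_of_nonneg_left h1 (by positivity)
      _ ≤ ((k : ℝ) + 1) * ((k.factorial * Real.exp 1 ^ k) * Real.exp 1) := by
          apply mul_le_mul_of_nonneg_left _ (by positivity)
          apply mul_le_mul_of_nonneg_right ih (by positivity)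
      _ = ((k + 1 : ℕ).factorial : ℝ) * Real.exp 1 ^ (k + 1) := by
          rw [Nat.factorial_succ]
          push_cast
          ring

lemma count_chain {n m : ℕ} {c₀ c₁ : ℝ} (hc₀ : 0 < c₀) (hc₀' : c₀ < 1)
    (hc₁ : 0 < c₁) (hc₁' : c₁ < 1) (hm1 : 1 ≤ m) (hmd : (m : ℝ) ≤ c₀ * n) :
    (n.choose m : ℝ) * ((2 + Real.sqrt 3 * c₁) / (Real.sqrt 3 * c₁)) ^ m ≤
      (9 / (c₀ * c₁)) ^ (c₀ * (n : ℝ)) := by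
  set d := c₀ * (n : ℝ) with hd
  set B := 9 / (c₀ * c₁) with hBdef
  have hm0 : (0 : ℝ) < m := by exact_mod_cast hm1
  have hd1 : (1 : ℝ) ≤ d := le_trans (by exact_mod_cast hm1) hmd
  have hn0 : (0 : ℝ) < n := by nlinarith
  have hB9 : 9 ≤ B := by
    rw [hBdef, le_div_iff₀ (by positivity)]
    nlinarith
  have hB0 : (0 : ℝ) < B := by linarith
  have hsqrt3 : (1.7 : ℝ) ≤ Real.sqrt 3 := by
    nlinarith [Real.sq_sqrt (show (0:ℝ) ≤ 3 by norm_num), Real.sqrt_nonneg 3]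
  have hs3pos : (0 : ℝ) < Real.sqrt 3 := by linarith
  have hε : 0 < Real.sqrt 3 * c₁ := by positivity
  have hKe : Real.exp 1 * (1 + 2 / Real.sqrt 3) ≤ 6 := by
    have h23 : 2 / Real.sqrt 3 ≤ 2 / 1.7 :=
      div_le_div_of_nonneg_left (by norm_num) (by norm_num) hsqrt3
    have he := Real.exp_one_lt_d9.le
    have hmul : Real.exp 1 * (1 + 2 / Real.sqrt 3) ≤ 2.7182818286 * (1 + 2 / 1.7) :=
      mul_le_mul he (by linarith) (by positivity) (by norm_num)
    have : (2.7182818286 : ℝ) * (1 + 2 / 1.7) ≤ 6 := by norm_num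
    linarith
  have hbase : (2 + Real.sqrt 3 * c₁) / (Real.sqrt 3 * c₁) ≤ (1 + 2 / Real.sqrt 3) / c₁ := by
    rw [div_le_div_iff₀ hε hc₁]
    have expand : (1 + 2 / Real.sqrt 3) * (Real.sqrt 3 * c₁) =
        Real.sqrt 3 * c₁ + 2 * c₁ := by
      field_simp
    rw [expand]
    nlinarith
  have hchoose : (n.choose m : ℝ) ≤ (n : ℝ) ^ m / m.factorial := Nat.choose_le_pow_div m n
  have hfacpos : (0 : ℝ) < m.factorial := by exact_mod_cast m.factorial_pos
  have h2 : (n : ℝ) ^ m / m.factorial ≤ ((n : ℝ) * Real.exp 1 / m) ^ m := by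
    rw [div_pow, mul_pow, div_le_div_iff₀ hfacpos (by positivity)]
    calc (n : ℝ) ^ m * (m : ℝ) ^ m
        ≤ (n : ℝ) ^ m * ((m.factorial : ℝ) * Real.exp 1 ^ m) :=
          mul_le_mul_of_nonneg_left (pow_self_le_factorial_mul_exp m) (by positivity)
      _ = (n : ℝ) ^ m * Real.exp 1 ^ m * m.factorial := by ring
  have hT : ((2 + Real.sqrt 3 * c₁) / (Real.sqrt 3 * c₁)) ^ m ≤
      ((1 + 2 / Real.sqrt 3) / c₁) ^ m :=
    pow_le_pow_left₀ (by positivity) hbase m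
  have main1 : (n.choose m : ℝ) * ((2 + Real.sqrt 3 * c₁) / (Real.sqrt 3 * c₁)) ^ m ≤
      (((n : ℝ) * Real.exp 1 / m) * ((1 + 2 / Real.sqrt 3) / c₁)) ^ m := by
    rw [mul_pow]
    exact mul_le_mul (hchoose.trans h2) hT (by positivity) (by positivity)
  have hmid : ((n : ℝ) * Real.exp 1 / m) * ((1 + 2 / Real.sqrt 3) / c₁) ≤ (d / m) * B := by
    have heq : (d / m) * B = 9 * (n : ℝ) / ((m : ℝ) * c₁) := by
      rw [hd, hBdef]
      field_simp
    have heq2 : ((n : ℝ) * Real.exp 1 / m) * ((1 + 2 / Real.sqrt 3) / c₁) =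
        (n : ℝ) / ((m : ℝ) * c₁) * (Real.exp 1 * (1 + 2 / Real.sqrt 3)) := by
      field_simp
    rw [heq, heq2]
    calc (n : ℝ) / ((m : ℝ) * c₁) * (Real.exp 1 * (1 + 2 / Real.sqrt 3))
        ≤ (n : ℝ) / ((m : ℝ) * c₁) * 6 := by
          apply mul_le_mul_of_nonneg_left hKe (by positivity)
      _ ≤ 9 * (n : ℝ) / ((m : ℝ) * c₁) := by
          rw [div_mul_eq_mul_div]
          apply div_le_div_of_nonneg_right ?_ (by positivity)
          nlinarith
  have main2 : (((n : ℝ) * Real.exp 1 / m) * ((1 + 2 / Real.sqrt 3) / c₁)) ^ m ≤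
      ((d / m) * B) ^ m := pow_le_pow_left₀ (by positivity) hmid m
  have hdm : (d / m) ^ m ≤ Real.exp (d - m) := by
    have h1 : d / m ≤ Real.exp (d / m - 1) := by
      have := Real.add_one_le_exp (d / (m : ℝ) - 1)
      linarith
    have h3 : (d / m) ^ m ≤ Real.exp (d / m - 1) ^ m :=
      pow_le_pow_left₀ (by positivity) h1 m
    have h4 : Real.exp (d / (m : ℝ) - 1) ^ m = Real.exp (d - m) := by
      rw [← Real.exp_nat_mul]
      congr 1
      field_simp
    rwa [h4] at h3
  have hexp : Real.exp (d - m) ≤ B ^ (d - (m : ℝ)) := by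
    rw [Real.rpow_def_of_pos hB0]
    apply Real.exp_le_exp.mpr
    have hlog : 1 ≤ Real.log B := by
      rw [Real.le_log_iff_exp_le hB0]
      have := Real.exp_one_lt_d9.le
      linarith
    have hdm0 : (0 : ℝ) ≤ d - m := by linarith
    calc d - (m : ℝ) = (d - m) * 1 := by ring
      _ ≤ (d - m) * Real.log B := mul_le_mul_of_nonneg_left hlog hdm0
      _ = Real.log B * (d - m) := by ring
  have final : ((d / m) * B) ^ m ≤ B ^ d := by
    have e1 : ((d / m) * B) ^ m = (d / m) ^ m * B ^ m := mul_pow _ _ _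
    have e2 : (B : ℝ) ^ m = B ^ ((m : ℕ) : ℝ) := (Real.rpow_natCast B m).symm
    have e3 : B ^ (d - (m : ℝ)) * B ^ ((m : ℕ) : ℝ) = B ^ d := by
      rw [← Real.rpow_add hB0]
      congr 1
      ring
    calc ((d / m) * B) ^ m = (d / m) ^ m * B ^ m := e1
      _ ≤ Real.exp (d - m) * B ^ m := by
          apply mul_le_mul_of_nonneg_right hdm (by positivity)
      _ ≤ B ^ (d - (m : ℝ)) * B ^ m := by
          apply mul_le_mul_of_nonneg_right hexp (by positivity)
      _ = B ^ d := by rw [e2, e3]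
  calc (n.choose m : ℝ) * ((2 + Real.sqrt 3 * c₁) / (Real.sqrt 3 * c₁)) ^ m
      ≤ (((n : ℝ) * Real.exp 1 / m) * ((1 + 2 / Real.sqrt 3) / c₁)) ^ m := main1
    _ ≤ ((d / m) * B) ^ m := main2
    _ ≤ B ^ d := final

end CompressibleNet

open CompressibleNet Finset in
set_option maxHeartbeats 1600000 in
/-- **Covering compressible vectors.**  The set `Comp(c₀, c₁)` of compressible unit vectors
admits a `(2c₁)`-net, with centers in `Comp(c₀, c₁)`, of cardinality at most
`(9/(c₀c₁))^{c₀ n}`. -/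
theorem exists_net_compressible (n : ℕ) (c₀ c₁ : ℝ)
    (hc₀ : 0 < c₀) (hc₀' : c₀ < 1) (hc₁ : 0 < c₁) (hc₁' : c₁ < 1) :
    ∃ N : Finset (Fin n → ℝ),
      (∀ y ∈ N, IsCompressible c₀ c₁ y) ∧
      (∀ x : Fin n → ℝ, IsCompressible c₀ c₁ x → ∃ y ∈ N, euclidNorm (x - y) ≤ 2 * c₁) ∧
      (N.card : ℝ) ≤ (9 / (c₀ * c₁)) ^ (c₀ * (n : ℝ)) := by
  classical
  have expand : ∀ (N' : ℕ) (a b : Fin N' → ℝ),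
      ∑ j, (a j - b j) ^ 2 = ∑ j, a j ^ 2 - 2 * ∑ j, a j * b j + ∑ j, b j ^ 2 := by
    intro N' a b
    have h : ∀ j ∈ (univ : Finset (Fin N')), (a j - b j) ^ 2 =
        a j ^ 2 - 2 * (a j * b j) + b j ^ 2 := fun j _ => by ring
    rw [Finset.sum_congr rfl h, Finset.sum_add_distrib, Finset.sum_sub_distrib,
      ← Finset.mul_sum]
  by_cases hdlt : c₀ * (n : ℝ) < 1
  · -- the set of compressible vectors is empty
    refine ⟨∅, by simp, ?_, ?_⟩
    · intro x hx
      exfalso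
      obtain ⟨hx1, y, hy, hxy⟩ := hx
      have h0 : ((Function.support y).ncard : ℝ) < 1 := lt_of_le_of_lt hy hdlt
      have hsupp : (Function.support y).ncard = 0 := by
        have : (Function.support y).ncard < 1 := by exact_mod_cast h0
        omega
      have hy0 : y = 0 := by
        have hfin : (Function.support y).Finite := Set.toFinite _
        have : Function.support y = ∅ := (Set.ncard_eq_zero hfin).mp hsupp
        exact Function.support_eq_empty_iff.mp this
      rw [hy0, sub_zero, hx1] at hxy
      linarith
    · simp only [Finset.card_empty, Nat.cast_zero]
      positivity
  · push_neg at hdlt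
    set m := ⌊c₀ * (n : ℝ)⌋₊ with hmdef
    have hm1 : 1 ≤ m := Nat.le_floor (by exact_mod_cast hdlt)
    have hmd : (m : ℝ) ≤ c₀ * n := Nat.floor_le (by positivity)
    have hm0 : (0 : ℝ) < m := by exact_mod_cast hm1
    have hn0 : (0 : ℝ) < n := by nlinarith
    have hmn : m < n := by
      have : (m : ℝ) < n := lt_of_le_of_lt hmd (by nlinarith)
      exact_mod_cast this
    have hsqrt3 : (1.7 : ℝ) ≤ Real.sqrt 3 := by
      nlinarith [Real.sq_sqrt (show (0:ℝ) ≤ 3 by norm_num), Real.sqrt_nonneg 3]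
    have hε : (0 : ℝ) < Real.sqrt 3 * c₁ := by positivity
    obtain ⟨T, hT1, hT2, hT3⟩ := exists_sphere_net m hε
    set N := (Finset.powersetCard m (univ : Finset (Fin n))).attach.biUnion
        (fun S => T.image (emb S.1 (Finset.mem_powersetCard.mp S.2).2)) with hNdef
    refine ⟨N, ?_, ?_, ?_⟩
    · -- all elements of the net are compressible
      intro z hz
      rw [hNdef, Finset.mem_biUnion] at hz
      obtain ⟨S, -, hz⟩ := hz
      rw [Finset.mem_image] at hz
      obtain ⟨t, htT, rfl⟩ := hz
      have hScard := (Finset.mem_powersetCard.mp S.2).2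
      constructor
      · rw [euclidNorm_emb _ t, hT1 t htT]
      · refine ⟨emb S.1 hScard t, ?_, ?_⟩
        · unfold IsSparse
          have hsub : Function.support (emb S.1 hScard t) ⊆ ↑S.1 := by
            intro j hj
            by_contra hjS
            exact hj (emb_apply_not_mem hjS)
          have h1 : (Function.support (emb S.1 hScard t)).ncard ≤ (↑S.1 : Set (Fin n)).ncard :=
            Set.ncard_le_ncard hsub (Set.toFinite _)
          have h2 : (↑S.1 : Set (Fin n)).ncard = m := by
            rw [Set.ncard_coe_finset]; exact hScard
          have h1' : (Function.support (emb S.1 hScard t)).ncard ≤ m :=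
            le_trans h1 (le_of_eq h2)
          calc ((Function.support (emb S.1 hScard t)).ncard : ℝ)
              ≤ (m : ℝ) := by exact_mod_cast h1'
            _ ≤ c₀ * n := hmd
        · have : emb S.1 hScard t - emb S.1 hScard t = 0 := sub_self _
          rw [this]
          have : euclidNorm (0 : Fin n → ℝ) = 0 := by simp [euclidNorm]
          rw [this]
          linarith
    · -- coverage
      intro x hx
      obtain ⟨hx1, y, hy, hxy⟩ := hx
      have hx2 : ∑ j, x j ^ 2 = 1 := by
        have := euclidNorm_sq x
        rw [hx1] at this
        linarith [this.symm]
      have hxy2 : ∑ j, (x j - y j) ^ 2 ≤ c₁ ^ 2 := by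
        have h1 : euclidNorm (x - y) ^ 2 ≤ c₁ ^ 2 :=
          pow_le_pow_left₀ (euclidNorm_nonneg _) hxy 2
        rw [euclidNorm_sq] at h1
        simpa using h1
      -- the support of y, enlarged to cardinality m
      set S₀ := (Function.support y).toFinite.toFinset with hS₀def
      have hS₀card : (S₀.card : ℝ) ≤ c₀ * n := by
        rw [hS₀def, ← Set.ncard_eq_toFinset_card]
        exact hy
      have hS₀m : S₀.card ≤ m := Nat.le_floor hS₀card
      obtain ⟨S, hS₀S, hScard⟩ := Finset.exists_superset_card_eq hS₀m
        (by simpa using hmn.le)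
      set w := resE S hScard x with hwdef
      set p := emb S hScard w with hpdef
      have hp : ∀ j, p j = if j ∈ S then x j else 0 := emb_resE x
      have hyS : ∀ j, j ∉ S → y j = 0 := by
        intro j hj
        by_contra h
        exact hj (hS₀S (by
          rw [hS₀def, Set.Finite.mem_toFinset, Function.mem_support]
          exact h))
      have hperp : ∑ j, (x j - p j) ^ 2 ≤ ∑ j, (x j - y j) ^ 2 := by
        apply Finset.sum_le_sum
        intro j _
        by_cases hj : j ∈ S
        · rw [hp j, if_pos hj]
          simpa using sq_nonneg (x j - y j)
        · rw [hp j, if_neg hj, hyS j hj]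
      have hpyth : ∑ j, p j ^ 2 + ∑ j, (x j - p j) ^ 2 = ∑ j, x j ^ 2 := by
        rw [← Finset.sum_add_distrib]
        apply Finset.sum_congr rfl
        intro j _
        by_cases hj : j ∈ S <;> rw [hp j] <;> simp [hj] <;> ring
      set b := ‖w‖ with hbdef
      have hb2 : b ^ 2 = ∑ j, p j ^ 2 := by
        rw [hbdef, normE_sq]
        calc ∑ i, w i ^ 2 = ∑ i, w i * w i := by
              apply Finset.sum_congr rfl; intros; ring
          _ = ∑ j, p j * p j := (sum_emb_mul w w).symm
          _ = ∑ j, p j ^ 2 := by apply Finset.sum_congr rfl; intros; ring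
      have hperp0 : 0 ≤ ∑ j, (x j - p j) ^ 2 :=
        Finset.sum_nonneg (fun j _ => sq_nonneg _)
      have hb2' : 1 - c₁ ^ 2 ≤ b ^ 2 := by linarith
      have hbnn : 0 ≤ b := norm_nonneg w
      have hb1 : b ≤ 1 := by nlinarith
      have hb0 : 0 < b := by nlinarith
      set what := b⁻¹ • w with hwhatdef
      have hwhatnorm : ‖what‖ = 1 := by
        rw [hwhatdef, norm_smul, norm_inv, Real.norm_eq_abs, abs_of_pos hb0, ← hbdef]
        field_simp
      obtain ⟨t, htT, htnet⟩ := hT2 what hwhatnorm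
      refine ⟨emb S hScard t, ?_, ?_⟩
      · rw [hNdef]
        apply Finset.mem_biUnion.mpr
        refine ⟨⟨S, Finset.mem_powersetCard.mpr ⟨Finset.subset_univ S, hScard⟩⟩,
          Finset.mem_attach _ _, ?_⟩
        exact Finset.mem_image_of_mem _ htT
      · -- the distance estimate
        set z := emb S hScard t with hzdef
        have hz2 : ∑ j, z j ^ 2 = 1 := by
          have h1 : euclidNorm z = 1 := by rw [hzdef, euclidNorm_emb _ t, hT1 t htT]
          have := euclidNorm_sq z
          rw [h1] at this
          linarith [this.symm]
        have hxz : ∑ j, x j * z j = ∑ i, w i * t i := by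
          calc ∑ j, x j * z j = ∑ j, p j * z j := by
                apply Finset.sum_congr rfl
                intro j _
                by_cases hj : j ∈ S
                · rw [hp j, if_pos hj]
                · rw [hp j, if_neg hj, hzdef, emb_apply_not_mem hj, mul_zero, mul_zero]
            _ = ∑ i, w i * t i := sum_emb_mul w t
        have hwhat_i : ∀ i, w i = b * what i := by
          intro i
          rw [hwhatdef]
          have : (b⁻¹ • w) i = b⁻¹ * w i := rfl
          rw [this]
          field_simp
        have hwt : ∑ i, w i * t i = b * ∑ i, what i * t i := by
          rw [Finset.mul_sum]
          apply Finset.sum_congr rfl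
          intro i _
          rw [hwhat_i i]
          ring
        have hwhat2 : ∑ i, what i ^ 2 = 1 := by
          have := normE_sq what
          rw [hwhatnorm] at this
          linarith [this.symm]
        have ht2 : ∑ i, t i ^ 2 = 1 := by
          have := normE_sq t
          rw [hT1 t htT] at this
          linarith [this.symm]
        set δ2 := ‖what - t‖ ^ 2 with hδ2def
        have hδ2nn : 0 ≤ δ2 := sq_nonneg _
        have hδ2le : δ2 ≤ 3 * c₁ ^ 2 := by
          have h1 : ‖what - t‖ ^ 2 ≤ (Real.sqrt 3 * c₁) ^ 2 :=
            pow_le_pow_left₀ (norm_nonneg _) htnet 2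
          rw [mul_pow, Real.sq_sqrt (by norm_num : (0:ℝ) ≤ 3)] at h1
          exact h1
        have hδ2sum : δ2 = ∑ i, (what i - t i) ^ 2 := by
          rw [hδ2def, normE_sq]
          apply Finset.sum_congr rfl
          intro i _
          rw [PiLp.sub_apply]
        have hwt2 : ∑ i, what i * t i = 1 - δ2 / 2 := by
          have hexp := expand m what t
          rw [hwhat2, ht2, ← hδ2sum] at hexp
          linarith
        have hfinal : ∑ j, (x j - z j) ^ 2 ≤ (2 * c₁) ^ 2 := by
          have h1 := expand n x z
          rw [hx2, hz2, hxz, hwt, hwt2] at h1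
          have h2 : ∑ j, (x j - z j) ^ 2 = 2 - 2 * b + b * δ2 := by
            rw [h1]; ring
          rw [h2]
          calc 2 - 2 * b + b * δ2 ≤ 4 * c₁ ^ 2 :=
                scalar_key hc₁ hc₁' hb0 hb1 hb2' hδ2nn hδ2le
            _ = (2 * c₁) ^ 2 := by ring
        calc euclidNorm (x - z) = Real.sqrt (∑ j, (x j - z j) ^ 2) := by
              simp [euclidNorm]
          _ ≤ Real.sqrt ((2 * c₁) ^ 2) := Real.sqrt_le_sqrt hfinal
          _ = 2 * c₁ := Real.sqrt_sq (by linarith)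
    · -- cardinality bound
      have hcard1 : (N.card : ℝ) ≤ (n.choose m : ℝ) * T.card := by
        have h1 : N.card ≤ ∑ S ∈ (Finset.powersetCard m (univ : Finset (Fin n))).attach,
            (T.image (emb S.1 (Finset.mem_powersetCard.mp S.2).2)).card :=
          Finset.card_biUnion_le
        have h2 : ∑ S ∈ (Finset.powersetCard m (univ : Finset (Fin n))).attach,
            (T.image (emb S.1 (Finset.mem_powersetCard.mp S.2).2)).card ≤
            ∑ _S ∈ (Finset.powersetCard m (univ : Finset (Fin n))).attach, T.card :=
          Finset.sum_le_sum (fun S _ => Finset.card_image_le)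
        have h3 : ∑ _S ∈ (Finset.powersetCard m (univ : Finset (Fin n))).attach, T.card =
            (n.choose m) * T.card := by
          rw [Finset.sum_const, Finset.card_attach, Finset.card_powersetCard,
            Finset.card_univ, Fintype.card_fin, smul_eq_mul]
        have := (h1.trans h2).trans_eq h3
        exact_mod_cast this
      have hcard2 : (T.card : ℝ) ≤ ((2 + Real.sqrt 3 * c₁) / (Real.sqrt 3 * c₁)) ^ m := hT3
      calc (N.card : ℝ) ≤ (n.choose m : ℝ) * T.card := hcard1
        _ ≤ (n.choose m : ℝ) * ((2 + Real.sqrt 3 * c₁) / (Real.sqrt 3 * c₁)) ^ m :=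
            mul_le_mul_of_nonneg_left hcard2 (by positivity)
        _ ≤ (9 / (c₀ * c₁)) ^ (c₀ * (n : ℝ)) :=
            count_chain hc₀ hc₀' hc₁ hc₁' hm1 hmd
end

section
/- Fix c₀, c₁ ∈ (0,1), and call x ∈ S^{n−1} incompressible if its Euclidean distance to the set of vectors with support of size at most c₀n exceeds c₁. Then every incompressible vector x has at least (1/2)·c₀c₁²·n coordinates x_k satisfying c₁/√(2n) ≤ |x_k| ≤ 1/√(c₀n). -/
/-- **Incompressible vectors are spread.**
If a unit vector `x ∈ S^{n-1}` is incompressible (its Euclidean distance to every vector of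
support at most `c₀ n` exceeds `c₁`), then at least `(1/2)c₀c₁²n` of its coordinates satisfy
`c₁/√(2n) ≤ |x_k| ≤ 1/√(c₀ n)`. -/
theorem incompressible_spread (n : ℕ) (c₀ c₁ : ℝ)
    (hc₀ : 0 < c₀) (hc₀' : c₀ < 1) (hc₁ : 0 < c₁) (hc₁' : c₁ < 1)
    (x : Fin n → ℝ) (hx : euclidNorm x = 1)
    (hincomp : ∀ y : Fin n → ℝ, IsSparse c₀ y → c₁ < euclidNorm (x - y)) :
    (1 / 2) * c₀ * c₁ ^ 2 * n
      ≤ ({k : Fin n | c₁ / Real.sqrt (2 * n) ≤ |x k| ∧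
          |x k| ≤ 1 / Real.sqrt (c₀ * n)}.ncard : ℝ) := by
  classical
  have hn : 0 < n := by
    rcases Nat.eq_zero_or_pos n with h | h
    · subst h; simp [euclidNorm] at hx
    · exact h
  have hnR : (0:ℝ) < n := by exact_mod_cast hn
  have hsum : ∑ i, x i ^ 2 = 1 := by
    have h := hx
    rw [euclidNorm, Real.sqrt_eq_one] at h
    exact h
  set s := Real.sqrt (c₀ * n) with hs
  set t := Real.sqrt (2 * n) with ht
  have hcn : 0 < c₀ * (n:ℝ) := by positivity
  have h2n : 0 < 2 * (n:ℝ) := by positivity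
  have hspos : 0 < s := Real.sqrt_pos.mpr hcn
  have htpos : 0 < t := Real.sqrt_pos.mpr h2n
  have hs2 : s ^ 2 = c₀ * n := Real.sq_sqrt hcn.le
  have ht2 : t ^ 2 = 2 * n := Real.sq_sqrt h2n.le
  set A : Finset (Fin n) := Finset.univ.filter (fun k => 1 / s < |x k|) with hA
  have hAbig : ∀ k ∈ A, 1 / (c₀ * n) ≤ x k ^ 2 := by
    intro k hk
    rw [hA, Finset.mem_filter] at hk
    have h1 : (1 / s) ^ 2 ≤ |x k| ^ 2 :=
      pow_le_pow_left₀ (by positivity) hk.2.le 2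
    calc 1 / (c₀ * (n:ℝ)) = (1 / s) ^ 2 := by rw [div_pow, one_pow, hs2]
      _ ≤ |x k| ^ 2 := h1
      _ = x k ^ 2 := sq_abs _
  have hsumA : ∑ k ∈ A, x k ^ 2 ≤ 1 := by
    rw [← hsum]
    exact Finset.sum_le_sum_of_subset_of_nonneg (Finset.subset_univ _)
      (fun i _ _ => sq_nonneg _)
  have hAcard : (A.card : ℝ) ≤ c₀ * n := by
    have h1 : (A.card : ℝ) * (1 / (c₀ * n)) ≤ ∑ k ∈ A, x k ^ 2 := by
      have := Finset.card_nsmul_le_sum A (fun k => x k ^ 2) (1 / (c₀ * n)) hAbig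
      simpa [nsmul_eq_mul] using this
    have h2 : (A.card : ℝ) * (1 / (c₀ * n)) ≤ 1 := h1.trans hsumA
    rw [mul_one_div, div_le_one hcn] at h2
    exact h2
  set y : Fin n → ℝ := fun k => if k ∈ A then x k else 0 with hy
  have hysp : IsSparse c₀ y := by
    have hsub : Function.support y ⊆ ↑A := by
      intro k hk
      simp only [Function.mem_support, hy] at hk
      by_cases h : k ∈ A
      · exact Finset.mem_coe.mpr h
      · simp [h] at hk
    have h1 : (Function.support y).ncard ≤ A.card := by
      have := Set.ncard_le_ncard hsub A.finite_toSet
      rwa [Set.ncard_coe_finset] at this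
    calc ((Function.support y).ncard : ℝ) ≤ (A.card : ℝ) := by exact_mod_cast h1
      _ ≤ c₀ * n := hAcard
  have hdist := hincomp y hysp
  have heq : ∑ i, ((x - y) i) ^ 2 = ∑ k ∈ Aᶜ, x k ^ 2 := by
    have hterm : ∀ i, ((x - y) i) ^ 2 = if i ∈ A then 0 else x i ^ 2 := by
      intro i
      by_cases h : i ∈ A <;> simp [hy, h]
    calc ∑ i, ((x - y) i) ^ 2 = ∑ i, if i ∈ A then 0 else x i ^ 2 :=
          Finset.sum_congr rfl (fun i _ => hterm i)
      _ = ∑ k ∈ Aᶜ, x k ^ 2 := by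
          rw [Finset.sum_ite, Finset.sum_const_zero, zero_add]
          congr 1
          ext k
          simp [Finset.mem_compl]
  have hsumAc : c₁ ^ 2 < ∑ k ∈ Aᶜ, x k ^ 2 := by
    rw [euclidNorm, heq] at hdist
    have hnn : 0 ≤ ∑ k ∈ Aᶜ, x k ^ 2 := Finset.sum_nonneg fun i _ => sq_nonneg _
    exact (Real.lt_sqrt hc₁.le).mp hdist
  set σ : Finset (Fin n) := Aᶜ.filter (fun k => c₁ / t ≤ |x k|) with hσ
  have hsplit : ∑ k ∈ σ, x k ^ 2 + ∑ k ∈ Aᶜ.filter (fun k => ¬ (c₁ / t ≤ |x k|)), x k ^ 2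
      = ∑ k ∈ Aᶜ, x k ^ 2 :=
    Finset.sum_filter_add_sum_filter_not Aᶜ _ _
  have hBsum : ∑ k ∈ Aᶜ.filter (fun k => ¬ (c₁ / t ≤ |x k|)), x k ^ 2 ≤ c₁ ^ 2 / 2 := by
    have h1 : ∀ k ∈ Aᶜ.filter (fun k => ¬ (c₁ / t ≤ |x k|)), x k ^ 2 ≤ c₁ ^ 2 / (2 * n) := by
      intro k hk
      rw [Finset.mem_filter] at hk
      push_neg at hk
      have h2 : |x k| ^ 2 ≤ (c₁ / t) ^ 2 := pow_le_pow_left₀ (abs_nonneg _) hk.2.le 2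
      calc x k ^ 2 = |x k| ^ 2 := (sq_abs _).symm
        _ ≤ (c₁ / t) ^ 2 := h2
        _ = c₁ ^ 2 / (2 * n) := by rw [div_pow, ht2]
    have h2 := Finset.sum_le_card_nsmul _ _ _ h1
    have h3 : ((Aᶜ.filter (fun k => ¬ (c₁ / t ≤ |x k|))).card : ℝ) ≤ n := by
      have := Finset.card_le_univ (Aᶜ.filter (fun k => ¬ (c₁ / t ≤ |x k|)))
      simp only [Finset.card_univ, Fintype.card_fin] at this
      exact_mod_cast this
    rw [nsmul_eq_mul] at h2
    calc ∑ k ∈ Aᶜ.filter (fun k => ¬ (c₁ / t ≤ |x k|)), x k ^ 2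
        ≤ ((Aᶜ.filter (fun k => ¬ (c₁ / t ≤ |x k|))).card : ℝ) * (c₁ ^ 2 / (2 * n)) := h2
      _ ≤ (n : ℝ) * (c₁ ^ 2 / (2 * n)) := by
          apply mul_le_mul_of_nonneg_right h3 (by positivity)
      _ = c₁ ^ 2 / 2 := by field_simp
  have hσsum : ∑ k ∈ σ, x k ^ 2 ≤ (σ.card : ℝ) * (1 / (c₀ * n)) := by
    have h1 : ∀ k ∈ σ, x k ^ 2 ≤ 1 / (c₀ * n) := by
      intro k hk
      rw [hσ, Finset.mem_filter, Finset.mem_compl, hA, Finset.mem_filter] at hk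
      have h2 : |x k| ≤ 1 / s :=
        le_of_not_gt fun hlt => hk.1 ⟨Finset.mem_univ _, hlt⟩
      have h3 : |x k| ^ 2 ≤ (1 / s) ^ 2 := pow_le_pow_left₀ (abs_nonneg _) h2 2
      calc x k ^ 2 = |x k| ^ 2 := (sq_abs _).symm
        _ ≤ (1 / s) ^ 2 := h3
        _ = 1 / (c₀ * n) := by rw [div_pow, one_pow, hs2]
    have h2 := Finset.sum_le_card_nsmul _ _ _ h1
    rwa [nsmul_eq_mul] at h2
  have hσcard : (1 / 2) * c₀ * c₁ ^ 2 * n ≤ (σ.card : ℝ) := by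
    have h1 : c₁ ^ 2 / 2 < (σ.card : ℝ) * (1 / (c₀ * n)) := by
      have := hsplit
      nlinarith [hsumAc, hBsum, hσsum]
    rw [mul_one_div, lt_div_iff₀ hcn] at h1
    nlinarith [h1]
  have hsub : (↑σ : Set (Fin n)) ⊆ {k : Fin n | c₁ / t ≤ |x k| ∧ |x k| ≤ 1 / s} := by
    intro k hk
    rw [Finset.mem_coe, hσ, Finset.mem_filter, Finset.mem_compl, hA, Finset.mem_filter] at hk
    exact ⟨hk.2, le_of_not_gt fun hlt => hk.1 ⟨Finset.mem_univ _, hlt⟩⟩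
  have hfin : ({k : Fin n | c₁ / t ≤ |x k| ∧ |x k| ≤ 1 / s}).Finite := Set.toFinite _
  have hle : σ.card ≤ ({k : Fin n | c₁ / t ≤ |x k| ∧ |x k| ≤ 1 / s}).ncard := by
    have := Set.ncard_le_ncard hsub hfin
    rwa [Set.ncard_coe_finset] at this
  calc (1 / 2) * c₀ * c₁ ^ 2 * n ≤ (σ.card : ℝ) := hσcard
    _ ≤ _ := by exact_mod_cast hle
end

section
/- Let A be any n×n random matrix with columns A_1,...,A_n, and let H_k denote the linear span of all columns except the k-th. Fix c₀, c₁ ∈ (0,1). Then for every ε ≥ 0, P( inf over incompressible x ∈ Incomp(c₀,c₁) of ‖Ax‖₂ ≤ ε n^{−1/2} ) ≤ (1/(c₀ n)) · ∑_{k=1}^n P( dist(A_k, H_k) ≤ ε/c₁ ). -/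
open MeasureTheory ProbabilityTheory

/-- A unit vector `x ∈ S^{n-1}` is incompressible if its Euclidean distance to every vector
of support at most `c₀ n` exceeds `c₁`. -/
def IsIncompressible {n : ℕ} (c₀ c₁ : ℝ) (x : Fin n → ℝ) : Prop :=
  euclidNorm x = 1 ∧ ∀ y : Fin n → ℝ, IsSparse c₀ y → c₁ < euclidNorm (x - y)

/-- The Euclidean distance from the `k`-th column of `A` to the span `H_k` of the other
columns. -/
noncomputable def distColSpan {n : ℕ} (A : Matrix (Fin n) (Fin n) ℝ) (k : Fin n) : ℝ :=
  sInf {r | ∃ y ∈ Submodule.span ℝ {v : Fin n → ℝ | ∃ j, j ≠ k ∧ v = fun i => A i j},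
    r = euclidNorm (fun i => A i k - y i)}

lemma euclidNorm_smul {n : ℕ} (c : ℝ) (v : Fin n → ℝ) :
    euclidNorm (fun i => c * v i) = |c| * euclidNorm v := by
  unfold euclidNorm
  rw [← Real.sqrt_sq_eq_abs, ← Real.sqrt_mul (sq_nonneg c), Finset.mul_sum]
  congr 1
  exact Finset.sum_congr rfl fun i _ => by ring

/-- Incompressible vectors have at least `c₀ n` coordinates of size `≥ c₁/√n`. -/
lemma spread_lemma {n : ℕ} (hn : 0 < n) {c₀ c₁ : ℝ} (hc₀' : c₀ < 1) (hc₁ : 0 < c₁)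
    {x : Fin n → ℝ} (hx : IsIncompressible c₀ c₁ x) :
    c₀ * n < ((Finset.univ.filter fun k => c₁ / Real.sqrt n ≤ |x k|).card : ℝ) := by
  by_contra h
  push_neg at h
  set σ := Finset.univ.filter fun k : Fin n => c₁ / Real.sqrt n ≤ |x k| with hσdef
  set y : Fin n → ℝ := fun k => if k ∈ σ then x k else 0 with hydef
  have hsupp : Function.support y ⊆ (σ : Set (Fin n)) := by
    intro k hk
    by_contra hk'
    simp only [Finset.mem_coe] at hk'
    apply hk
    simp only [hydef]
    rw [if_neg (by simpa [hσdef] using hk')]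
  have hsparse : IsSparse c₀ y := by
    unfold IsSparse
    have h1 : (Function.support y).ncard ≤ σ.card := by
      have := Set.ncard_le_ncard hsupp σ.finite_toSet
      simpa [Set.ncard_coe_finset] using this
    calc ((Function.support y).ncard : ℝ) ≤ (σ.card : ℝ) := by exact_mod_cast h1
      _ ≤ c₀ * n := h
  have hlt := hx.2 y hsparse
  -- compute the norm
  have hsum : ∑ k, ((x - y) k) ^ 2 = ∑ k ∈ σᶜ, (x k) ^ 2 := by
    rw [← Finset.sum_compl_add_sum σ]
    have h1 : ∑ k ∈ σ, ((x - y) k) ^ 2 = 0 := by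
      apply Finset.sum_eq_zero
      intro k hk
      simp [hydef, Pi.sub_apply, if_pos hk]
    have h2 : ∀ k ∈ σᶜ, ((x - y) k) ^ 2 = (x k) ^ 2 := by
      intro k hk
      rw [Finset.mem_compl] at hk
      simp [hydef, Pi.sub_apply, if_neg hk]
    rw [h1, Finset.sum_congr rfl h2, add_zero]
  have hcompl_ne : (σᶜ : Finset (Fin n)).Nonempty := by
    by_contra hne
    rw [Finset.not_nonempty_iff_eq_empty, Finset.compl_eq_empty_iff] at hne
    have : (σ.card : ℝ) = n := by rw [hne]; simp
    rw [this] at h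
    nlinarith [(Nat.one_le_cast (α := ℝ)).mpr hn]
  have hsqrtn : (0:ℝ) < Real.sqrt n := Real.sqrt_pos.mpr (by exact_mod_cast hn)
  have hbound : ∑ k ∈ σᶜ, (x k) ^ 2 < c₁ ^ 2 := by
    have hterm : ∀ k ∈ σᶜ, (x k) ^ 2 < c₁ ^ 2 / n := by
      intro k hk
      rw [Finset.mem_compl] at hk
      have hk' : |x k| < c₁ / Real.sqrt n := by
        by_contra hcon
        exact hk (by simp [hσdef]; linarith [not_lt.mp hcon])
      have := pow_lt_pow_left₀ hk' (abs_nonneg _) two_ne_zero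
      rw [sq_abs, div_pow, Real.sq_sqrt (Nat.cast_nonneg n)] at this
      exact this
    calc ∑ k ∈ σᶜ, (x k) ^ 2 < ∑ _k ∈ σᶜ, c₁ ^ 2 / n :=
          Finset.sum_lt_sum_of_nonempty hcompl_ne hterm
      _ = (σᶜ.card : ℝ) * (c₁ ^ 2 / n) := by rw [Finset.sum_const, nsmul_eq_mul]
      _ ≤ (n : ℝ) * (c₁ ^ 2 / n) := by
          apply mul_le_mul_of_nonneg_right
          · exact_mod_cast Finset.card_le_card (Finset.subset_univ _) |>.trans_eq (by simp)
          · positivity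
      _ = c₁ ^ 2 := by field_simp
  have : euclidNorm (x - y) < c₁ := by
    unfold euclidNorm
    rw [hsum]
    exact (Real.sqrt_lt' hc₁).mpr hbound
  linarith

/-- dist(A_k, H_k) ≤ ‖Ax‖ / |x k| when x k ≠ 0. -/
lemma dist_le_norm_div {n : ℕ} (A : Matrix (Fin n) (Fin n) ℝ) (x : Fin n → ℝ) (k : Fin n)
    (hk : x k ≠ 0) :
    distColSpan A k ≤ euclidNorm (A.mulVec x) / |x k| := by
  set S := Submodule.span ℝ {v : Fin n → ℝ | ∃ j, j ≠ k ∧ v = fun i => A i j} with hS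
  have hmem : (∑ j ∈ Finset.univ.erase k, x j • (fun i => A i j)) ∈ S := by
    apply Submodule.sum_mem
    intro j hj
    exact Submodule.smul_mem _ _ (Submodule.subset_span ⟨j, Finset.ne_of_mem_erase hj, rfl⟩)
  set y : Fin n → ℝ := (-(x k)⁻¹) • (∑ j ∈ Finset.univ.erase k, x j • (fun i : Fin n => A i j)) with hy
  have hymem : y ∈ S := Submodule.smul_mem _ _ hmem
  have hkey : (fun i => A i k - y i) = fun i => (x k)⁻¹ * (A.mulVec x i) := by
    funext i
    have hyi : y i = -(x k)⁻¹ * ∑ j ∈ Finset.univ.erase k, x j * A i j := by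
      simp [hy, Finset.sum_apply, Finset.mul_sum]
    have hmv : A.mulVec x i = x k * A i k + ∑ j ∈ Finset.univ.erase k, x j * A i j := by
      rw [Matrix.mulVec, dotProduct]
      rw [← Finset.add_sum_erase _ _ (Finset.mem_univ k)]
      congr 1
      · ring
      · exact Finset.sum_congr rfl fun j _ => by ring
    rw [hyi, hmv]
    field_simp
    ring
  have hval : euclidNorm (fun i => A i k - y i) = euclidNorm (A.mulVec x) / |x k| := by
    rw [hkey, euclidNorm_smul, abs_inv]
    rw [inv_mul_eq_div]
  have hbdd : BddBelow {r | ∃ y ∈ S, r = euclidNorm (fun i => A i k - y i)} := by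
    refine ⟨0, ?_⟩
    rintro r ⟨z, _, rfl⟩
    exact Real.sqrt_nonneg _
  have hin : euclidNorm (fun i => A i k - y i) ∈
      {r | ∃ y ∈ S, r = euclidNorm (fun i => A i k - y i)} := ⟨y, hymem, rfl⟩
  calc distColSpan A k ≤ euclidNorm (fun i => A i k - y i) := csInf_le hbdd hin
    _ = _ := hval

/-- **Invertibility via distance.**
For any `n × n` random matrix `A` with columns `A₁,...,Aₙ`, letting `H_k` be the span of all
columns but the `k`-th, and for every `c₀, c₁ ∈ (0,1)` and `ε ≥ 0`:
`P(∃ incompressible x with ‖Ax‖₂ ≤ ε n^{-1/2}) ≤ (1/(c₀n)) ∑ₖ P(dist(A_k, H_k) ≤ ε/c₁)`. -/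
theorem invertibility_via_distance {Ω : Type*} [MeasureSpace Ω]
    [IsProbabilityMeasure (ℙ : Measure Ω)] (n : ℕ) (hn : 0 < n)
    (A : Ω → Matrix (Fin n) (Fin n) ℝ) (hA : ∀ i j, Measurable fun ω => A ω i j)
    (c₀ c₁ : ℝ) (hc₀ : 0 < c₀) (hc₀' : c₀ < 1) (hc₁ : 0 < c₁) (hc₁' : c₁ < 1)
    (ε : ℝ) (hε : 0 ≤ ε) :
    (ℙ {ω | ∃ x : Fin n → ℝ, IsIncompressible c₀ c₁ x ∧
        euclidNorm ((A ω).mulVec x) ≤ ε / Real.sqrt n}).toReal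
      ≤ (1 / (c₀ * n)) * ∑ k, (ℙ {ω | distColSpan (A ω) k ≤ ε / c₁}).toReal := by
  set E := {ω | ∃ x : Fin n → ℝ, IsIncompressible c₀ c₁ x ∧
      euclidNorm ((A ω).mulVec x) ≤ ε / Real.sqrt n} with hE
  set B : Fin n → Set Ω := fun k => {ω | distColSpan (A ω) k ≤ ε / c₁} with hB
  set C : Fin n → Set Ω := fun k => toMeasurable ℙ (B k) with hC
  have hCmeas : ∀ k, MeasurableSet (C k) := fun k => measurableSet_toMeasurable _ _
  have hsqrtn : (0:ℝ) < Real.sqrt n := Real.sqrt_pos.mpr (by exact_mod_cast hn)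
  -- deterministic inclusion: on E, at least c₀ n indices k lie in B k
  have hincl : ∀ ω ∈ E, ENNReal.ofReal (c₀ * n) ≤
      ∑ k, (C k).indicator (fun _ => (1 : ENNReal)) ω := by
    intro ω hω
    obtain ⟨x, hx, hnorm⟩ := hω
    set σ := Finset.univ.filter fun k : Fin n => c₁ / Real.sqrt n ≤ |x k| with hσdef
    have hcard : c₀ * n < (σ.card : ℝ) := spread_lemma hn hc₀' hc₁ hx
    have hσB : ∀ k ∈ σ, ω ∈ C k := by
      intro k hk
      apply subset_toMeasurable
      rw [Finset.mem_filter] at hk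
      have hxk : c₁ / Real.sqrt n ≤ |x k| := hk.2
      have hxkpos : 0 < |x k| := lt_of_lt_of_le (by positivity) hxk
      have hxkne : x k ≠ 0 := abs_pos.mp hxkpos
      have h1 := dist_le_norm_div (A ω) x k hxkne
      have h2 : euclidNorm ((A ω).mulVec x) / |x k| ≤ (ε / Real.sqrt n) / (c₁ / Real.sqrt n) := by
        apply div_le_div₀ (by positivity) hnorm (by positivity) hxk
      have h3 : (ε / Real.sqrt n) / (c₁ / Real.sqrt n) = ε / c₁ := by
        field_simp
      exact Set.mem_setOf_eq ▸ (h1.trans (h2.trans_eq h3))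
    calc ENNReal.ofReal (c₀ * n) ≤ (σ.card : ENNReal) := by
          rw [← ENNReal.ofReal_natCast σ.card]
          exact ENNReal.ofReal_le_ofReal hcard.le
      _ = ∑ k ∈ σ, (C k).indicator (fun _ => (1 : ENNReal)) ω := by
          rw [Finset.sum_congr rfl fun k hk => Set.indicator_of_mem (hσB k hk) _]
          simp
      _ ≤ ∑ k, (C k).indicator (fun _ => (1 : ENNReal)) ω := by
          exact Finset.sum_le_sum_of_subset (Finset.subset_univ σ)
  -- Markov
  have hc₀n : (0:ℝ) < c₀ * n := by positivity
  have hmeasf : Measurable (fun ω => ∑ k, (C k).indicator (fun _ => (1 : ENNReal)) ω) :=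
    Finset.measurable_sum _ fun k _ => Measurable.indicator measurable_const (hCmeas k)
  have hmarkov : ℙ E ≤ (∑ k, ℙ (C k)) / ENNReal.ofReal (c₀ * n) := by
    have h1 : ℙ E ≤ ℙ {ω | ENNReal.ofReal (c₀ * n) ≤
        ∑ k, (C k).indicator (fun _ => (1 : ENNReal)) ω} := measure_mono hincl
    have h2 := meas_ge_le_lintegral_div (μ := ℙ) hmeasf.aemeasurable
      (show ENNReal.ofReal (c₀ * n) ≠ 0 by simp [hc₀n])
      (show ENNReal.ofReal (c₀ * n) ≠ ⊤ by simp)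
    have h3 : ∫⁻ ω, ∑ k, (C k).indicator (fun _ => (1 : ENNReal)) ω ∂ℙ = ∑ k, ℙ (C k) := by
      rw [lintegral_finset_sum _ fun k _ => Measurable.indicator measurable_const (hCmeas k)]
      congr 1
      funext k
      exact lintegral_indicator_one (hCmeas k)
    rw [h3] at h2
    exact h1.trans h2
  have hCB : ∀ k, ℙ (C k) = ℙ (B k) := fun k => measure_toMeasurable _
  have hBfin : ∀ k, ℙ (B k) ≠ ⊤ := fun k => measure_ne_top _ _
  have hrhs_fin : (∑ k, ℙ (C k)) / ENNReal.ofReal (c₀ * n) ≠ ⊤ := by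
    apply (ENNReal.div_lt_top ?_ ?_).ne
    · exact ENNReal.sum_ne_top.mpr fun k _ => (hCB k ▸ hBfin k)
    · simp [hc₀n]
  have := ENNReal.toReal_mono hrhs_fin hmarkov
  refine this.trans_eq ?_
  rw [ENNReal.toReal_div, ENNReal.toReal_ofReal hc₀n.le]
  rw [ENNReal.toReal_sum (fun k _ => by rw [hCB k]; exact hBfin k)]
  rw [div_eq_mul_inv, mul_comm, ← one_div]
  congr 1
  exact Finset.sum_congr rfl fun k _ => by rw [hCB k]
end

section
/- Let X = (X_1,...,X_n) be a random vector in R^n with independent coordinates. Suppose there exist numbers a, b ≥ 0 such that for every k and every ε ≥ 0, the Lévy concentration function satisfies L(X_k, ε) ≤ aε + b. Then there is an absolute constant C such that L(X, ε) ≤ (C(aε/√n + b))^n for all ε ≥ 0, i.e., sup_{u ∈ R^n} P(‖X − u‖₂ ≤ ε) ≤ (C a ε/√n + C b)^n. -/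
open MeasureTheory ProbabilityTheory

lemma geom_aux {r : ℝ} (h0 : 0 ≤ r) (h1 : r < 1) (N : ℕ) :
    ∑ j ∈ Finset.range N, r ^ j ≤ 1 / (1 - r) := by
  have hr : (0:ℝ) < 1 - r := by linarith
  rw [geom_sum_eq h1.ne]
  have he : (r ^ N - 1) / (r - 1) = (1 - r ^ N) / (1 - r) := by
    rw [div_eq_div_iff (by linarith) (by linarith)]; ring
  rw [he]
  have hp : (0:ℝ) ≤ r ^ N := pow_nonneg h0 N
  gcongr
  linarith

lemma sqrt2_le : Real.sqrt 2 ≤ 1.5 := by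
  have h := Real.sq_sqrt (show (0:ℝ) ≤ 2 by norm_num)
  have h2 := Real.sqrt_nonneg 2
  nlinarith

lemma exp1_ge : (2.7:ℝ) ≤ Real.exp 1 := le_of_lt (by linarith [Real.exp_one_gt_d9])

lemma exp1_le : Real.exp 1 ≤ 3 := le_of_lt (by linarith [Real.exp_one_lt_d9])

lemma exp_neg_eq_pow (j : ℕ) : Real.exp (-(j:ℝ)) = (Real.exp 1)⁻¹ ^ j := by
  rw [← Real.exp_neg, ← Real.exp_nat_mul]; ring_nf

lemma sum_exp_le (N : ℕ) : ∑ j ∈ Finset.range N, Real.exp (-(j:ℝ)) ≤ 2 := by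
  have hE := exp1_ge
  have h0 : (0:ℝ) ≤ (Real.exp 1)⁻¹ := by positivity
  have h1 : (Real.exp 1)⁻¹ ≤ 1/2 := by
    rw [inv_le_iff_one_le_mul₀ (by positivity)]; nlinarith
  calc ∑ j ∈ Finset.range N, Real.exp (-(j:ℝ))
      = ∑ j ∈ Finset.range N, (Real.exp 1)⁻¹ ^ j := by
        exact Finset.sum_congr rfl fun j _ => exp_neg_eq_pow j
    _ ≤ 1 / (1 - (Real.exp 1)⁻¹) := geom_aux h0 (by linarith) N
    _ ≤ 2 := by
        rw [div_le_iff₀ (by linarith)]; linarith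

lemma sqrt_succ_le (j : ℕ) : Real.sqrt ((j:ℝ)+1) ≤ Real.sqrt 2 ^ j := by
  have h1 : ((j:ℝ)+1) ≤ 2 ^ j := by
    exact_mod_cast (Nat.lt_two_pow_self (n := j))
  calc Real.sqrt ((j:ℝ)+1) ≤ Real.sqrt (2 ^ j) := Real.sqrt_le_sqrt h1
    _ = Real.sqrt 2 ^ j := by
        rw [show ((2:ℝ) ^ j) = (Real.sqrt 2 ^ j) ^ 2 by
          rw [← pow_mul, mul_comm, pow_mul, Real.sq_sqrt (by norm_num)]]
        exact Real.sqrt_sq (by positivity)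

lemma sum_exp_sqrt_le (N : ℕ) :
    ∑ j ∈ Finset.range N, Real.exp (-(j:ℝ)) * Real.sqrt ((j:ℝ)+1) ≤ 3 := by
  have hE := exp1_ge
  have hs2 := sqrt2_le
  have hs2n := Real.sqrt_nonneg 2
  have hr0 : (0:ℝ) ≤ Real.sqrt 2 / Real.exp 1 := by positivity
  have hr1 : Real.sqrt 2 / Real.exp 1 ≤ 5/9 := by
    rw [div_le_iff₀ (by positivity)]; nlinarith
  calc ∑ j ∈ Finset.range N, Real.exp (-(j:ℝ)) * Real.sqrt ((j:ℝ)+1)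
      ≤ ∑ j ∈ Finset.range N, (Real.sqrt 2 / Real.exp 1) ^ j := by
        apply Finset.sum_le_sum
        intro j _
        rw [exp_neg_eq_pow, div_pow, div_eq_mul_inv, mul_comm, inv_pow]
        exact mul_le_mul_of_nonneg_right (sqrt_succ_le j) (by positivity)
    _ ≤ 1 / (1 - Real.sqrt 2 / Real.exp 1) := geom_aux hr0 (by linarith) N
    _ ≤ 3 := by
        rw [div_le_iff₀ (by linarith)]; linarith

lemma mgf_single_bound {Ω : Type} [MeasureSpace Ω] [IsProbabilityMeasure (ℙ : Measure Ω)]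
    (W : Ω → ℝ) (hW : Measurable W) (c : ℝ) (hc : 0 < c) (a b : ℝ) (ha : 0 ≤ a) (hb : 0 ≤ b)
    (hL : ∀ ε : ℝ, 0 ≤ ε → (ℙ {ω | |W ω| ≤ ε}).toReal ≤ a * ε + b)
    (hd : 0 < a / Real.sqrt c + b) :
    mgf (fun ω => (W ω)^2) ℙ (-c) ≤ 4 * (a / Real.sqrt c) + 3 * b := by
  have hsc : 0 < Real.sqrt c := Real.sqrt_pos.mpr hc
  have hanc : 0 ≤ a / Real.sqrt c := by positivity
  -- choose N with exp(-N) ≤ a/√c + b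
  obtain ⟨N, hNgt⟩ := exists_nat_gt (1 / (a / Real.sqrt c + b))
  have hN : Real.exp (-(N:ℝ)) ≤ a / Real.sqrt c + b := by
    have h2 : ((N:ℝ)) + 1 ≤ Real.exp (N:ℝ) := Real.add_one_le_exp (N:ℝ)
    have h4 : 1 ≤ (a / Real.sqrt c + b) * Real.exp ((N:ℝ)) := by
      have h5 := (div_lt_iff₀ hd).mp hNgt
      nlinarith
    calc Real.exp (-(N:ℝ)) = 1 / Real.exp ((N:ℝ)) := by rw [Real.exp_neg, one_div]
      _ ≤ a / Real.sqrt c + b := by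
          rw [div_le_iff₀ (Real.exp_pos _)]; linarith
  set q : ℕ → ℝ := fun j => ((j:ℝ)+1)/c with hq
  have hqnn : ∀ j, 0 ≤ q j := fun j => by positivity
  set Aset : ℕ → Set Ω := fun j => {ω | (W ω)^2 ≤ q j} with hAdef
  have hAm : ∀ j, MeasurableSet (Aset j) :=
    fun j => measurableSet_le (hW.pow_const 2) measurable_const
  -- pointwise step-function bound
  have hpt : ∀ ω, Real.exp (-c * (W ω)^2) ≤
      (∑ j ∈ Finset.range N, Real.exp (-(j:ℝ)) *
        (Aset j).indicator (fun _ => (1:ℝ)) ω) + Real.exp (-(N:ℝ)) := by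
    intro ω
    set t := (W ω)^2 with htdef
    have ht : 0 ≤ t := sq_nonneg _
    have hct : 0 ≤ c * t := by positivity
    have hterm_nn : ∀ j ∈ Finset.range N,
        0 ≤ Real.exp (-(j:ℝ)) * (Aset j).indicator (fun _ => (1:ℝ)) ω := by
      intro j _
      exact mul_nonneg (Real.exp_pos _).le (Set.indicator_nonneg (fun _ _ => one_pos.le) ω)
    have hsum_nn : 0 ≤ ∑ j ∈ Finset.range N, Real.exp (-(j:ℝ)) *
        (Aset j).indicator (fun _ => (1:ℝ)) ω := Finset.sum_nonneg hterm_nn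
    by_cases hcase : c * t < (N:ℝ)
    · set j0 := ⌊c*t⌋₊ with hj0
      have hjlt : j0 < N := by
        have := (Nat.floor_lt hct).mpr hcase
        exact_mod_cast this
      have hmem : ω ∈ Aset j0 := by
        show t ≤ ((j0:ℝ)+1)/c
        rw [le_div_iff₀ hc, mul_comm]
        exact (Nat.lt_floor_add_one (c*t)).le
      have h1 : Real.exp (-(c*t)) ≤ Real.exp (-(j0:ℝ)) :=
        Real.exp_le_exp.mpr (by linarith [Nat.floor_le hct])
      have h2 : Real.exp (-(j0:ℝ)) * (Aset j0).indicator (fun _ => (1:ℝ)) ω ≤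
          ∑ j ∈ Finset.range N, Real.exp (-(j:ℝ)) *
            (Aset j).indicator (fun _ => (1:ℝ)) ω :=
        Finset.single_le_sum hterm_nn (Finset.mem_range.mpr hjlt)
      rw [Set.indicator_of_mem hmem] at h2
      have := Real.exp_pos (-(N:ℝ))
      rw [neg_mul]
      linarith
    · push_neg at hcase
      have h1 : Real.exp (-(c*t)) ≤ Real.exp (-(N:ℝ)) :=
        Real.exp_le_exp.mpr (by linarith)
      rw [neg_mul]
      linarith
  -- integrability
  have hmeasexp : Measurable (fun ω => Real.exp (-c * (W ω)^2)) :=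
    ((hW.pow_const 2).const_mul (-c)).exp
  have hexp_int : Integrable (fun ω => Real.exp (-c * (W ω)^2)) ℙ := by
    apply Integrable.mono' (integrable_const (1:ℝ)) hmeasexp.aestronglyMeasurable
    filter_upwards with ω
    rw [Real.norm_eq_abs, abs_of_pos (Real.exp_pos _)]
    calc Real.exp (-c * (W ω)^2) ≤ Real.exp 0 :=
          Real.exp_le_exp.mpr (by nlinarith [sq_nonneg (W ω)])
      _ = 1 := Real.exp_zero
  have hind_int : ∀ j ∈ Finset.range N, Integrable
      (fun ω => Real.exp (-(j:ℝ)) * (Aset j).indicator (fun _ => (1:ℝ)) ω) ℙ :=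
    fun j _ => ((integrable_const (1:ℝ)).indicator (hAm j)).const_mul _
  have hsum_int : Integrable (fun ω => ∑ j ∈ Finset.range N,
      Real.exp (-(j:ℝ)) * (Aset j).indicator (fun _ => (1:ℝ)) ω) ℙ :=
    integrable_finset_sum _ hind_int
  -- probability bound for each level set
  have hprob : ∀ j, (ℙ (Aset j)).toReal ≤ a * (Real.sqrt ((j:ℝ)+1) / Real.sqrt c) + b := by
    intro j
    have hset : Aset j = {ω | |W ω| ≤ Real.sqrt (q j)} := by
      ext ω
      simp only [hAdef, Set.mem_setOf_eq]
      constructor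
      · intro h
        have h' := Real.sqrt_le_sqrt h
        rwa [Real.sqrt_sq_eq_abs] at h'
      · intro h
        have h2 := Real.sq_sqrt (hqnn j)
        nlinarith [abs_nonneg (W ω), sq_abs (W ω)]
    have hqs : Real.sqrt (q j) = Real.sqrt ((j:ℝ)+1) / Real.sqrt c := by
      rw [hq]
      exact Real.sqrt_div (by positivity) c
    rw [hset, ← hqs]
    exact hL _ (Real.sqrt_nonneg _)
  -- put it together
  have hmgf : mgf (fun ω => (W ω)^2) ℙ (-c) =
      ∫ ω, Real.exp (-c * (W ω)^2) ∂ℙ := rfl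
  rw [hmgf]
  calc ∫ ω, Real.exp (-c * (W ω)^2) ∂ℙ
      ≤ ∫ ω, ((∑ j ∈ Finset.range N, Real.exp (-(j:ℝ)) *
          (Aset j).indicator (fun _ => (1:ℝ)) ω) + Real.exp (-(N:ℝ))) ∂ℙ :=
        integral_mono hexp_int (hsum_int.add (integrable_const _)) hpt
    _ = (∑ j ∈ Finset.range N, Real.exp (-(j:ℝ)) * (ℙ (Aset j)).toReal)
          + Real.exp (-(N:ℝ)) := by
        rw [integral_add hsum_int (integrable_const _), integral_finset_sum _ hind_int,
          integral_const]
        simp only [measureReal_def, measure_univ, ENNReal.toReal_one, smul_eq_mul, one_mul]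
        congr 1
        refine Finset.sum_congr rfl fun j _ => ?_
        rw [MeasureTheory.integral_const_mul, integral_indicator_const (1:ℝ) (hAm j),
          smul_eq_mul, mul_one, measureReal_def]
    _ ≤ (∑ j ∈ Finset.range N, Real.exp (-(j:ℝ)) *
          (a * (Real.sqrt ((j:ℝ)+1) / Real.sqrt c) + b)) + (a / Real.sqrt c + b) := by
        gcongr with j hj
        · exact hprob j
    _ = (a / Real.sqrt c) * (∑ j ∈ Finset.range N, Real.exp (-(j:ℝ)) * Real.sqrt ((j:ℝ)+1))
          + b * (∑ j ∈ Finset.range N, Real.exp (-(j:ℝ))) + (a / Real.sqrt c + b) := by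
        rw [Finset.mul_sum, Finset.mul_sum, ← Finset.sum_add_distrib]
        congr 1
        refine Finset.sum_congr rfl fun j _ => ?_
        field_simp
    _ ≤ (a / Real.sqrt c) * 3 + b * 2 + (a / Real.sqrt c + b) := by
        gcongr
        · exact sum_exp_sqrt_le N
        · exact sum_exp_le N
    _ ≤ 4 * (a / Real.sqrt c) + 3 * b := by linarith

/-- **Tensorization of Lévy concentration functions.**
There is an absolute constant `C > 0` such that: if `X = (X₁,...,Xₙ)` is a random vector with
independent coordinates and there exist `a, b ≥ 0` with `L(X_k, ε) ≤ aε + b` for all `k` and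
all `ε ≥ 0`, then `L(X, ε) ≤ (C a ε / √n + C b)ⁿ` for all `ε ≥ 0`. -/
theorem tensorization_levy_concentration :
    ∃ C : ℝ, 0 < C ∧
      ∀ (Ω : Type) [MeasureSpace Ω] [IsProbabilityMeasure (ℙ : Measure Ω)]
        (n : ℕ) (X : Fin n → Ω → ℝ),
        (∀ k, Measurable (X k)) →
        iIndepFun X ℙ →
        ∀ a b : ℝ, 0 ≤ a → 0 ≤ b →
        (∀ (k : Fin n) (u : ℝ) (ε : ℝ), 0 ≤ ε →
          (ℙ {ω | |X k ω - u| ≤ ε}).toReal ≤ a * ε + b) →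
        ∀ (ε : ℝ), 0 ≤ ε → ∀ u : Fin n → ℝ,
          (ℙ {ω | euclidNorm (fun k => X k ω - u k) ≤ ε}).toReal
            ≤ (C * a * ε / Real.sqrt n + C * b) ^ n := by
  refine ⟨20, by norm_num, ?_⟩
  intro Ω _ _ n X hX hind a b ha hb hL ε hε u
  rcases Nat.eq_zero_or_pos n with hn0 | hn
  · subst hn0
    simp only [pow_zero]
    exact le_trans (ENNReal.toReal_mono ENNReal.one_ne_top prob_le_one) (by norm_num)
  have hnR : (0:ℝ) < (n:ℝ) := by exact_mod_cast hn
  have hsn : 0 < Real.sqrt n := Real.sqrt_pos.mpr hnR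
  rcases eq_or_lt_of_le hε with hε0 | hεpos
  · -- ε = 0
    subst hε0
    have hset : {ω | euclidNorm (fun k => X k ω - u k) ≤ (0:ℝ)} =
        ⋂ i, X i ⁻¹' {x | |x - u i| ≤ 0} := by
      ext ω
      simp only [euclidNorm, Set.mem_setOf_eq, Set.mem_iInter, Set.mem_preimage]
      constructor
      · intro h i
        have hsum : ∑ k, (X k ω - u k)^2 ≤ 0 := by
          by_contra hcon
          push_neg at hcon
          have := Real.sqrt_pos.mpr hcon
          linarith
        have hz : (X i ω - u i)^2 ≤ 0 := by
          have h5 := Finset.single_le_sum (f := fun k => (X k ω - u k)^2)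
            (fun k _ => sq_nonneg _) (Finset.mem_univ i)
          linarith
        have : X i ω - u i = 0 := by nlinarith
        simp [this]
      · intro h
        have hz : ∀ k, X k ω - u k = 0 := fun k => abs_nonpos_iff.mp (h k)
        have : ∑ k, (X k ω - u k)^2 = 0 :=
          Finset.sum_eq_zero fun k _ => by rw [hz k]; ring
        rw [this, Real.sqrt_zero]
    rw [hset, hind.meas_iInter (fun i => ⟨{x | |x - u i| ≤ 0},
      measurableSet_le (measurable_id.sub_const (u i)).abs measurable_const, rfl⟩),
      ENNReal.toReal_prod]
    calc ∏ i, (ℙ (X i ⁻¹' {x | |x - u i| ≤ 0})).toReal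
        ≤ ∏ _i : Fin n, (20*b) := by
          refine Finset.prod_le_prod (fun i _ => ENNReal.toReal_nonneg) (fun i _ => ?_)
          have h0 := hL i (u i) 0 le_rfl
          calc (ℙ (X i ⁻¹' {x | |x - u i| ≤ 0})).toReal
              = (ℙ {ω | |X i ω - u i| ≤ 0}).toReal := rfl
            _ ≤ a*0+b := h0
            _ ≤ 20*b := by linarith
      _ = (20*b)^n := by rw [Finset.prod_const, Finset.card_univ, Fintype.card_fin]
      _ = (20 * a * 0 / Real.sqrt n + 20 * b)^n := by norm_num
  -- ε > 0
  set c : ℝ := n / ε^2 with hcdef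
  have hc : 0 < c := by positivity
  have hsqc : Real.sqrt c = Real.sqrt n / ε := by
    rw [hcdef, Real.sqrt_div hnR.le, Real.sqrt_sq hεpos.le]
  have hdiv : a / Real.sqrt c = a * ε / Real.sqrt n := by
    rw [hsqc]
    field_simp
  by_cases hab : a * ε / Real.sqrt n + b = 0
  · -- degenerate: a = b = 0
    have hs0 : 0 ≤ a * ε / Real.sqrt n := by positivity
    have hb0 : b = 0 := by linarith
    have ha0 : a = 0 := by
      have h1 : a * ε / Real.sqrt n = 0 := by linarith
      have h2 : a * ε = 0 := by
        field_simp at h1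
        simpa using h1
      rcases mul_eq_zero.mp h2 with h | h
      · exact h
      · exact absurd h hεpos.ne'
    subst ha0; subst hb0
    have hgoal0 : (20 * (0:ℝ) * ε / Real.sqrt n + 20 * 0) = 0 := by simp
    rw [hgoal0, zero_pow hn.ne']
    have hsub : {ω | euclidNorm (fun k => X k ω - u k) ≤ ε} ⊆
        {ω | |X ⟨0, hn⟩ ω - u ⟨0, hn⟩| ≤ ε} := by
      intro ω hω
      simp only [Set.mem_setOf_eq, euclidNorm] at *
      have h0 := Finset.single_le_sum (f := fun k => (X k ω - u k)^2)
        (fun k _ => sq_nonneg _) (Finset.mem_univ (⟨0,hn⟩ : Fin n))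
      have h1 : Real.sqrt ((X ⟨0,hn⟩ ω - u ⟨0,hn⟩)^2) ≤
          Real.sqrt (∑ i, (X i ω - u i)^2) := Real.sqrt_le_sqrt h0
      rw [Real.sqrt_sq_eq_abs] at h1
      linarith
    have h2 := hL ⟨0,hn⟩ (u ⟨0,hn⟩) ε hε
    have h3 := ENNReal.toReal_mono (measure_ne_top ℙ _) (measure_mono hsub)
    linarith
  have hd' : 0 < a * ε / Real.sqrt n + b :=
    lt_of_le_of_ne (by positivity) (Ne.symm hab)
  -- the independent squared variables
  set Y : Fin n → Ω → ℝ := fun i ω => (X i ω - u i)^2 with hY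
  have hYmeas : ∀ i, Measurable (Y i) := fun i => ((hX i).sub_const (u i)).pow_const 2
  have hindY : iIndepFun Y ℙ :=
    hind.comp (fun i x => (x - u i)^2)
      (fun i => (measurable_id.sub_const (u i)).pow_const 2)
  have hmgfprod : mgf (∑ i, Y i) ℙ (-c) = ∏ i, mgf (Y i) ℙ (-c) :=
    hindY.mgf_sum hYmeas Finset.univ
  have hbound : ∀ i, mgf (Y i) ℙ (-c) ≤ 4*(a*ε/Real.sqrt n) + 3*b := by
    intro i
    have h := mgf_single_bound (fun ω => X i ω - u i) ((hX i).sub_const (u i)) c hc a b ha hb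
      (fun ε' hε' => hL i (u i) ε' hε') (by rw [hdiv]; exact hd')
    rw [hdiv] at h
    exact h
  set S : Ω → ℝ := fun ω => ∑ i, Y i ω with hS
  have hSmeas : Measurable S := Finset.measurable_sum _ (fun i _ => hYmeas i)
  have hSnn : ∀ ω, 0 ≤ S ω := fun ω => Finset.sum_nonneg (fun i _ => sq_nonneg _)
  set A := {ω | euclidNorm (fun k => X k ω - u k) ≤ ε} with hA
  have hAeq : A = {ω | Real.sqrt (S ω) ≤ ε} := by
    simp only [hA, hS, hY, euclidNorm]
  have hAmeas : MeasurableSet A := by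
    rw [hAeq]
    exact measurableSet_le (Real.continuous_sqrt.measurable.comp hSmeas) measurable_const
  have hmgfS : mgf (∑ i, Y i) ℙ (-c) = ∫ ω, Real.exp (-c * S ω) ∂ℙ := by
    unfold mgf
    congr 1
    funext ω
    simp only [Finset.sum_apply, hS]
  have hint : Integrable (fun ω => Real.exp (-c * S ω)) ℙ := by
    apply Integrable.mono' (integrable_const (1:ℝ))
      ((hSmeas.const_mul (-c)).exp).aestronglyMeasurable
    filter_upwards with ω
    rw [Real.norm_eq_abs, abs_of_pos (Real.exp_pos _)]
    calc Real.exp (-c * S ω) ≤ Real.exp 0 :=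
          Real.exp_le_exp.mpr (by nlinarith [hSnn ω])
      _ = 1 := Real.exp_zero
  have h1 : Real.exp (-(n:ℝ)) * (ℙ A).toReal ≤ mgf (∑ i, Y i) ℙ (-c) := by
    rw [hmgfS]
    have hptw : ∀ ω, A.indicator (fun _ => Real.exp (-(n:ℝ))) ω ≤ Real.exp (-c * S ω) := by
      intro ω
      by_cases hω : ω ∈ A
      · rw [Set.indicator_of_mem hω]
        apply Real.exp_le_exp.mpr
        have hωA : Real.sqrt (S ω) ≤ ε := by rw [hAeq] at hω; exact hω
        have hSle : S ω ≤ ε^2 := by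
          nlinarith [Real.sq_sqrt (hSnn ω), Real.sqrt_nonneg (S ω)]
        have hcε : c * ε^2 = n := by rw [hcdef]; field_simp
        nlinarith [mul_le_mul_of_nonneg_left hSle hc.le]
      · rw [Set.indicator_of_notMem hω]
        exact (Real.exp_pos _).le
    calc Real.exp (-(n:ℝ)) * (ℙ A).toReal
        = ∫ ω, A.indicator (fun _ => Real.exp (-(n:ℝ))) ω ∂ℙ := by
          rw [integral_indicator_const _ hAmeas, smul_eq_mul, measureReal_def]; ring
      _ ≤ ∫ ω, Real.exp (-c * S ω) ∂ℙ :=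
          integral_mono ((integrable_const _).indicator hAmeas) hint hptw
  have hprodle : ∏ i, mgf (Y i) ℙ (-c) ≤ (4*(a*ε/Real.sqrt n)+3*b)^n := by
    calc ∏ i, mgf (Y i) ℙ (-c) ≤ ∏ _i : Fin n, (4*(a*ε/Real.sqrt n)+3*b) :=
          Finset.prod_le_prod (fun i _ => mgf_nonneg) (fun i _ => hbound i)
      _ = _ := by rw [Finset.prod_const, Finset.card_univ, Fintype.card_fin]
  have hfin : (ℙ A).toReal ≤ Real.exp ((n:ℝ)) * (4*(a*ε/Real.sqrt n)+3*b)^n := by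
    calc (ℙ A).toReal = Real.exp ((n:ℝ)) * (Real.exp (-(n:ℝ)) * (ℙ A).toReal) := by
          rw [← mul_assoc, ← Real.exp_add]; simp
      _ ≤ Real.exp ((n:ℝ)) * (∏ i, mgf (Y i) ℙ (-c)) := by
          refine mul_le_mul_of_nonneg_left ?_ (Real.exp_pos _).le
          rw [← hmgfprod]; exact h1
      _ ≤ Real.exp ((n:ℝ)) * (4*(a*ε/Real.sqrt n)+3*b)^n :=
          mul_le_mul_of_nonneg_left hprodle (Real.exp_pos _).le
  have hexppow : Real.exp ((n:ℝ)) = (Real.exp 1)^n := by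
    rw [← Real.exp_nat_mul]; ring_nf
  have hsnn : 0 ≤ a*ε/Real.sqrt n := by positivity
  calc (ℙ A).toReal ≤ (Real.exp 1)^n * (4*(a*ε/Real.sqrt n)+3*b)^n := by
        rw [← hexppow]; exact hfin
    _ = (Real.exp 1 * (4*(a*ε/Real.sqrt n)+3*b))^n := (mul_pow _ _ _).symm
    _ ≤ (20 * a * ε / Real.sqrt n + 20 * b)^n := by
        apply pow_le_pow_left₀ (by positivity)
        have hE3 := exp1_le
        have hE0 := (Real.exp_pos 1).le
        have h20 : 20 * a * ε / Real.sqrt n = 20 * (a*ε/Real.sqrt n) := by ring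
        rw [h20]
        nlinarith [mul_le_mul_of_nonneg_right hE3
          (show (0:ℝ) ≤ 4*(a*ε/Real.sqrt n)+3*b by linarith)]
end

section
/- (Esseen's lemma) Let Y be a real random variable with characteristic function φ_Y(θ) = E exp(2πiθY). Then there is an absolute constant C such that the Lévy concentration function satisfies L(Y,1) = sup_{u∈R} P(|Y − u| ≤ 1) ≤ C ∫_{−1}^{1} |φ_Y(θ)| dθ. -/
open MeasureTheory ProbabilityTheory Real

noncomputable def esseenW (θ : ℝ) : ℝ := max 0 (1 - 2 * |θ|)
lemma esseenW_nonneg (θ : ℝ) : 0 ≤ esseenW θ := le_max_left _ _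
lemma esseenW_le_one (θ : ℝ) : esseenW θ ≤ 1 := by
  have := abs_nonneg θ; unfold esseenW; apply max_le <;> nlinarith
lemma esseenW_continuous : Continuous esseenW := continuous_const.max (by continuity)
lemma esseenW_eq {θ : ℝ} (h : |θ| ≤ 1/2) : esseenW θ = 1 - 2 * |θ| := max_eq_right (by linarith)

noncomputable def esseenK (x : ℝ) : ℝ :=
  ∫ θ in Set.Ioc (-(1/2) : ℝ) (1/2), esseenW θ * Real.cos (2 * π * θ * x)

lemma esseen_hasDerivAt {a : ℝ} (ha : a ≠ 0) (θ : ℝ) :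
    HasDerivAt (fun t => (1 - 2*t) * Real.sin (a*t) / a - 2 * Real.cos (a*t) / a^2)
      ((1 - 2*θ) * Real.cos (a*θ)) θ := by
  have hid : HasDerivAt (fun t : ℝ => a * t) a θ := by
    simpa using (hasDerivAt_id θ).const_mul a
  have hs : HasDerivAt (fun t : ℝ => Real.sin (a*t)) (Real.cos (a*θ) * a) θ :=
    (Real.hasDerivAt_sin (a*θ)).comp θ hid
  have hc : HasDerivAt (fun t : ℝ => Real.cos (a*t)) (-Real.sin (a*θ) * a) θ :=
    (Real.hasDerivAt_cos (a*θ)).comp θ hid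
  have h1 : HasDerivAt (fun t : ℝ => (1 - 2*t)) (-2) θ := by
    simpa using ((hasDerivAt_id θ).const_mul (2:ℝ)).const_sub 1
  have : HasDerivAt (fun t => (1 - 2*t) * Real.sin (a*t) / a - 2 * Real.cos (a*t) / a^2) _ θ :=
    ((h1.mul hs).div_const a).sub ((hc.const_mul 2).div_const (a^2))
  convert this using 1
  field_simp
  ring

lemma esseen_I1 {a : ℝ} (ha : a ≠ 0) :
    ∫ θ in (0:ℝ)..(1/2), (1 - 2*θ) * Real.cos (a*θ) = 2 * (1 - Real.cos (a/2)) / a^2 := by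
  rw [intervalIntegral.integral_eq_sub_of_hasDerivAt (fun θ _ => esseen_hasDerivAt ha θ)
      ((Continuous.intervalIntegrable (by continuity) _ _))]
  norm_num
  field_simp
  ring

lemma esseenK_eq (x : ℝ) :
    esseenK x = 2 * ∫ θ in (0:ℝ)..(1/2), (1 - 2*θ) * Real.cos ((2*π*x)*θ) := by
  have h0 : esseenK x = ∫ θ in (-(1/2):ℝ)..(1/2), (1 - 2*|θ|) * Real.cos (2*π*θ*x) := by
    rw [intervalIntegral.integral_of_le (by norm_num : (-(1/2):ℝ) ≤ 1/2)]
    unfold esseenK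
    apply setIntegral_congr_fun measurableSet_Ioc
    intro θ hθ
    dsimp only
    rw [esseenW_eq (abs_le.2 ⟨le_of_lt hθ.1, hθ.2⟩)]
  have hcont : Continuous fun θ : ℝ => (1 - 2*|θ|) * Real.cos (2*π*θ*x) := by continuity
  have hsplit := intervalIntegral.integral_add_adjacent_intervals
      (μ := volume) (a := (-(1/2):ℝ)) (b := 0) (c := 1/2)
      (hcont.intervalIntegrable _ _) (hcont.intervalIntegrable _ _)
  have hneg : (∫ θ in (0:ℝ)..(1/2), (1 - 2*|θ|) * Real.cos (2*π*θ*x))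
      = ∫ θ in (-(1/2):ℝ)..0, (1 - 2*|θ|) * Real.cos (2*π*θ*x) := by
    have h := intervalIntegral.integral_comp_neg (a := (0:ℝ)) (b := 1/2)
        (fun θ => (1 - 2*|θ|) * Real.cos (2*π*θ*x))
    simp only [abs_neg, neg_zero, mul_neg, neg_mul, Real.cos_neg] at h
    exact h
  have habs : (∫ θ in (0:ℝ)..(1/2), (1 - 2*|θ|) * Real.cos (2*π*θ*x))
      = ∫ θ in (0:ℝ)..(1/2), (1 - 2*θ) * Real.cos ((2*π*x)*θ) := by
    apply intervalIntegral.integral_congr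
    intro θ hθ
    rw [Set.uIcc_of_le (by norm_num : (0:ℝ) ≤ 1/2)] at hθ
    dsimp only
    rw [abs_of_nonneg hθ.1, show 2*π*θ*x = (2*π*x)*θ by ring]
  rw [h0, ← hsplit, ← hneg, habs]
  ring

lemma esseenK_formula {x : ℝ} (hx : x ≠ 0) :
    esseenK x = 2 * Real.sin (π*x/2)^2 / (π^2 * x^2) := by
  have ha : (2*π*x) ≠ 0 := by
    exact mul_ne_zero (mul_ne_zero two_ne_zero Real.pi_ne_zero) hx
  rw [esseenK_eq, esseen_I1 ha]
  have hc : Real.cos (2*π*x/2) = 1 - 2 * Real.sin (π*x/2)^2 := by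
    rw [show 2*π*x/2 = 2*(π*x/2) by ring, Real.cos_two_mul, Real.sin_sq]
    ring
  rw [hc]
  have hπ := Real.pi_ne_zero
  field_simp
  ring

lemma esseenK_zero : esseenK 0 = 1/2 := by
  rw [esseenK_eq]
  have : (∫ θ in (0:ℝ)..(1/2), (1 - 2*θ) * Real.cos ((2*π*0)*θ))
      = ∫ θ in (0:ℝ)..(1/2), (1 - 2*θ) := by
    apply intervalIntegral.integral_congr
    intro θ _
    simp
  rw [this]
  have hd : ∀ θ ∈ Set.uIcc (0:ℝ) (1/2), HasDerivAt (fun t : ℝ => t - t^2) (1 - 2*θ) θ := by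
    intro θ _
    have : HasDerivAt (fun t : ℝ => t - t^2) _ θ := (hasDerivAt_id' θ).sub (hasDerivAt_pow 2 θ)
    convert this using 1
    norm_num
  rw [intervalIntegral.integral_eq_sub_of_hasDerivAt hd
      ((Continuous.intervalIntegrable (by continuity) _ _))]
  norm_num

lemma esseenK_nonneg (x : ℝ) : 0 ≤ esseenK x := by
  by_cases hx : x = 0
  · rw [hx, esseenK_zero]; norm_num
  · rw [esseenK_formula hx]; positivity

lemma esseenK_ge {x : ℝ} (hx : |x| ≤ 1) : 2/π^2 ≤ esseenK x := by
  have hπ := Real.pi_gt_three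
  by_cases hx0 : x = 0
  · rw [hx0, esseenK_zero]
    rw [div_le_iff₀ (by positivity)]
    nlinarith
  · rw [esseenK_formula hx0]
    have key : ∀ t : ℝ, 0 ≤ t → t ≤ 1 → t^2 ≤ Real.sin (π*t/2)^2 := by
      intro t h0 h1
      have h2 : 2/π * (π*t/2) ≤ Real.sin (π*t/2) :=
        Real.mul_le_sin (by positivity) (by nlinarith)
      have h3 : 2/π * (π*t/2) = t := by field_simp
      nlinarith
    have hsq : x^2 ≤ Real.sin (π*x/2)^2 := by
      rcases le_or_gt 0 x with h | h
      · exact key x h (by rwa [abs_of_nonneg h] at hx)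
      · have := key (-x) (by linarith) (by rwa [abs_of_neg h] at hx)
        rw [show π*(-x)/2 = -(π*x/2) by ring, Real.sin_neg] at this
        simpa using this
    rw [div_le_div_iff₀ (by positivity) (by positivity)]
    have hx2 : 0 < x^2 := by positivity
    nlinarith

lemma esseenK_norm_le (x : ℝ) : ‖esseenK x‖ ≤ 1 := by
  unfold esseenK
  refine le_trans (norm_setIntegral_le_of_norm_le_const (C := 1) ?_ ?_) ?_
  · rw [Real.volume_Ioc]; exact ENNReal.ofReal_lt_top
  · intro θ _
    have h1 := esseenW_le_one θ
    have h2 := esseenW_nonneg θ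
    have h3 := Real.abs_cos_le_one (2 * π * θ * x)
    rw [Real.norm_eq_abs, abs_mul, abs_of_nonneg h2]
    nlinarith [abs_nonneg (Real.cos (2 * π * θ * x))]
  · rw [Real.volume_real_Ioc]
    norm_num

lemma esseenK_continuous : Continuous esseenK := by
  unfold esseenK
  apply continuous_of_dominated (bound := fun _ => (1:ℝ))
  · intro x
    exact (esseenW_continuous.mul (Real.continuous_cos.comp (by continuity))).aestronglyMeasurable
  · intro x
    filter_upwards with θ
    have h1 := esseenW_le_one θ
    have h2 := esseenW_nonneg θ
    have h3 := Real.abs_cos_le_one (2 * π * θ * x)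
    rw [Real.norm_eq_abs, abs_mul, abs_of_nonneg h2]
    nlinarith [abs_nonneg (Real.cos (2 * π * θ * x))]
  · exact integrable_const 1
  · filter_upwards with θ
    exact continuous_const.mul (Real.continuous_cos.comp (by continuity))

lemma esseen_inner {Ω : Type} [MeasureSpace Ω] [IsProbabilityMeasure (ℙ : Measure Ω)]
    (Y : Ω → ℝ) (hY : Measurable Y) (u θ : ℝ) :
    (∫ ω, Real.cos (2*π*θ*(Y ω - u)) ∂ℙ)
      ≤ ‖∫ ω, Complex.exp (2 * π * Complex.I * θ * (Y ω : ℂ)) ∂ℙ‖ := by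
  have hm : Measurable fun ω => Complex.exp (((2*π*θ*(Y ω - u) : ℝ) : ℂ) * Complex.I) := by
    apply Complex.measurable_exp.comp
    exact (Complex.measurable_ofReal.comp
      (measurable_const.mul (hY.sub measurable_const))).mul_const _
  have hInt : Integrable (fun ω => Complex.exp (((2*π*θ*(Y ω - u) : ℝ) : ℂ) * Complex.I)) ℙ := by
    refine Integrable.mono' (integrable_const 1) hm.aestronglyMeasurable ?_
    filter_upwards with ω
    rw [Complex.norm_exp_ofReal_mul_I]
  have key : ‖∫ ω, Complex.exp (((2*π*θ*(Y ω - u) : ℝ) : ℂ) * Complex.I) ∂ℙ‖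
      = ‖∫ ω, Complex.exp (2 * π * Complex.I * θ * (Y ω : ℂ)) ∂ℙ‖ := by
    have hsplit : (fun ω => Complex.exp (((2*π*θ*(Y ω - u) : ℝ) : ℂ) * Complex.I))
        = fun ω => Complex.exp (((-(2*π*θ*u) : ℝ) : ℂ) * Complex.I)
            * Complex.exp (2 * π * Complex.I * θ * (Y ω : ℂ)) := by
      funext ω
      rw [← Complex.exp_add]
      congr 1
      push_cast
      ring
    rw [hsplit, integral_const_mul, norm_mul, Complex.norm_exp_ofReal_mul_I, one_mul]
  calc ∫ ω, Real.cos (2*π*θ*(Y ω - u)) ∂ℙ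
      = (∫ ω, Complex.exp (((2*π*θ*(Y ω - u) : ℝ) : ℂ) * Complex.I) ∂ℙ).re := by
        rw [← RCLike.re_to_complex, ← integral_re hInt]
        congr 1
        funext ω
        rw [RCLike.re_to_complex, Complex.exp_ofReal_mul_I_re]
    _ ≤ ‖∫ ω, Complex.exp (((2*π*θ*(Y ω - u) : ℝ) : ℂ) * Complex.I) ∂ℙ‖ :=
        Complex.re_le_norm _
    _ = _ := key

/-- **Esseen's lemma.**
There is an absolute constant `C > 0` such that for every real random variable `Y` with
characteristic function `φ_Y(θ) = E exp(2πiθY)`, the Lévy concentration function satisfies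
`L(Y, 1) = sup_u P(|Y - u| ≤ 1) ≤ C ∫_{-1}^{1} |φ_Y(θ)| dθ`. -/
theorem esseen_lemma :
    ∃ C : ℝ, 0 < C ∧
      ∀ (Ω : Type) [MeasureSpace Ω] [IsProbabilityMeasure (ℙ : Measure Ω)]
        (Y : Ω → ℝ), Measurable Y →
        ∀ u : ℝ,
          (ℙ {ω | |Y ω - u| ≤ 1}).toReal
            ≤ C * ∫ θ in (-1 : ℝ)..1,
                ‖∫ ω, Complex.exp (2 * π * Complex.I * θ * (Y ω : ℂ)) ∂ℙ‖ := by
  refine ⟨π^2/2, by positivity, ?_⟩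
  intro Ω _ _ Y hY u
  set A := {ω | |Y ω - u| ≤ 1} with hA_def
  have hA : MeasurableSet A := measurableSet_le ((hY.sub measurable_const).abs) measurable_const
  set φ := fun θ : ℝ => ∫ ω, Complex.exp (2 * π * Complex.I * θ * (Y ω : ℂ)) ∂ℙ with hφ_def
  set μ0 := volume.restrict (Set.Ioc (-(1/2) : ℝ) (1/2)) with hμ0_def
  haveI : IsFiniteMeasure μ0 := by
    constructor
    rw [hμ0_def, Measure.restrict_apply_univ, Real.volume_Ioc]
    exact ENNReal.ofReal_lt_top
  -- Integrability of K ∘ (Y - u)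
  have hKint : Integrable (fun ω => esseenK (Y ω - u)) ℙ := by
    refine Integrable.mono' (integrable_const 1)
      ((esseenK_continuous.measurable.comp (hY.sub measurable_const)).aestronglyMeasurable) ?_
    filter_upwards with ω
    exact esseenK_norm_le _
  -- Step 1: concentration is controlled by E K(Y-u)
  have h1 : (2/π^2) * (ℙ A).toReal ≤ ∫ ω, esseenK (Y ω - u) ∂ℙ := by
    have e1 : ∫ _ω in A, (2/π^2 : ℝ) ∂ℙ = (ℙ A).toReal * (2/π^2) := by
      rw [setIntegral_const, smul_eq_mul, measureReal_def]
    have e2 : ∫ _ω in A, (2/π^2 : ℝ) ∂ℙ ≤ ∫ ω in A, esseenK (Y ω - u) ∂ℙ := by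
      refine setIntegral_mono_on (integrableOn_const (measure_ne_top _ _))
        hKint.integrableOn hA ?_
      intro ω hω
      exact esseenK_ge hω
    have e3 : ∫ ω in A, esseenK (Y ω - u) ∂ℙ ≤ ∫ ω, esseenK (Y ω - u) ∂ℙ :=
      setIntegral_le_integral hKint (ae_of_all _ fun ω => esseenK_nonneg _)
    nlinarith [e1, e2, e3]
  -- Step 2: Fubini
  have hprod : Integrable (Function.uncurry fun (ω : Ω) (θ : ℝ) =>
      esseenW θ * Real.cos (2 * π * θ * (Y ω - u))) ((ℙ : Measure Ω).prod μ0) := by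
    have hm : Measurable fun p : Ω × ℝ => esseenW p.2 * Real.cos (2 * π * p.2 * (Y p.1 - u)) :=
      (esseenW_continuous.measurable.comp measurable_snd).mul
        (Real.measurable_cos.comp
          (((measurable_const.mul measurable_snd).mul
            ((hY.comp measurable_fst).sub measurable_const))))
    refine Integrable.mono' (integrable_const 1) hm.aestronglyMeasurable ?_
    filter_upwards with p
    have h1 := esseenW_le_one p.2
    have h2 := esseenW_nonneg p.2
    have h3 := Real.abs_cos_le_one (2 * π * p.2 * (Y p.1 - u))
    rw [Function.uncurry, Real.norm_eq_abs, abs_mul, abs_of_nonneg h2]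
    nlinarith [abs_nonneg (Real.cos (2 * π * p.2 * (Y p.1 - u)))]
  have hswap : ∫ ω, esseenK (Y ω - u) ∂ℙ
      = ∫ θ, (∫ ω, esseenW θ * Real.cos (2 * π * θ * (Y ω - u)) ∂ℙ) ∂μ0 :=
    integral_integral_swap hprod
  -- Step 3: bound the θ-integrand by |φ θ|
  have hφcont : Continuous φ := by
    rw [hφ_def]
    apply continuous_of_dominated (bound := fun _ => (1:ℝ))
    · intro t
      exact ((measurable_const.mul (Complex.measurable_ofReal.comp hY)).cexp).aestronglyMeasurable
    · intro t
      filter_upwards with ω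
      rw [show 2 * π * Complex.I * (t:ℂ) * (Y ω : ℂ)
          = ((2 * π * t * Y ω : ℝ) : ℂ) * Complex.I by push_cast; ring]
      rw [Complex.norm_exp_ofReal_mul_I]
    · exact integrable_const 1
    · filter_upwards with ω
      exact ((continuous_const.mul Complex.continuous_ofReal).mul continuous_const).cexp
  have h2 : (∫ θ, (∫ ω, esseenW θ * Real.cos (2 * π * θ * (Y ω - u)) ∂ℙ) ∂μ0)
      ≤ ∫ θ, ‖φ θ‖ ∂μ0 := by
    refine integral_mono hprod.integral_prod_right ?_ ?_
    · exact (continuous_norm.comp hφcont).integrableOn_Ioc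
    · intro θ
      have hre := esseen_inner Y hY u θ
      have hw1 := esseenW_le_one θ
      have hw0 := esseenW_nonneg θ
      have habs : (0:ℝ) ≤ ‖φ θ‖ := norm_nonneg _
      dsimp only
      rw [integral_const_mul]
      nlinarith [hre]
  -- Step 4: enlarge the interval
  have h3 : (∫ θ, ‖φ θ‖ ∂μ0)
      ≤ ∫ θ in Set.Ioc (-1 : ℝ) 1, ‖φ θ‖ := by
    rw [hμ0_def]
    refine setIntegral_mono_set ((continuous_norm.comp hφcont).integrableOn_Ioc)
      (ae_of_all _ fun θ => norm_nonneg _)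
      (HasSubset.Subset.eventuallyLE (Set.Ioc_subset_Ioc (by norm_num) (by norm_num)))
  -- Conclusion
  rw [intervalIntegral.integral_of_le (by norm_num : (-1:ℝ) ≤ 1)]
  have hchain : (2/π^2) * (ℙ A).toReal ≤ ∫ θ in Set.Ioc (-1 : ℝ) 1, ‖φ θ‖ := by
    calc (2/π^2) * (ℙ A).toReal ≤ ∫ ω, esseenK (Y ω - u) ∂ℙ := h1
      _ = _ := hswap
      _ ≤ _ := h2
      _ ≤ _ := h3
  have hπ := Real.pi_pos
  have hmul := mul_le_mul_of_nonneg_left hchain (le_of_lt (by positivity : (0:ℝ) < π^2/2))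
  calc (ℙ A).toReal = (π^2/2) * ((2/π^2) * (ℙ A).toReal) := by field_simp
    _ ≤ (π^2/2) * ∫ θ in Set.Ioc (-1 : ℝ) 1, ‖φ θ‖ := hmul
end

section
/- Let ξ₁,...,ξ_n be independent real random variables with unit variance and E(ξ_k − Eξ_k)^4 ≤ M₄^4 for all k, where M₄ < ∞. Then for every ε ∈ (0,1) there exists p = p(M₄, ε) ∈ (0,1) such that for every unit vector x = (x₁,...,x_n) ∈ S^{n−1}, the sum S = ∑_{k=1}^n x_k ξ_k satisfies sup_{u∈R} P(|S − u| ≤ ε) ≤ p. -/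
open MeasureTheory ProbabilityTheory

open scoped ENNReal NNReal



lemma integrable_pow_of_memL4 {Ω : Type} [MeasureSpace Ω] [IsProbabilityMeasure (ℙ : Measure Ω)]
    {f : Ω → ℝ} (hmf : Measurable f) (hf : MemLp f 4 ℙ) {k : ℕ} (hk : k ≤ 4) :
    Integrable (fun ω => f ω ^ k) ℙ := by
  have h4 : Integrable (fun ω => ‖f ω‖ ^ (4:ℝ≥0∞).toReal) ℙ :=
    hf.integrable_norm_rpow (by norm_num) (by norm_num)
  have h4' : Integrable (fun ω => f ω ^ 4) ℙ := by
    refine h4.congr (Filter.Eventually.of_forall fun ω => ?_)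
    simp only
    rw [show (4:ℝ≥0∞).toReal = ((4:ℕ):ℝ) by norm_num, Real.rpow_natCast, Real.norm_eq_abs,
      ← abs_pow, abs_of_nonneg (by positivity : (0:ℝ) ≤ f ω ^ 4)]
  refine (((integrable_const 1).add h4').mono' ((hmf.pow_const k).aestronglyMeasurable)
    (Filter.Eventually.of_forall fun ω => ?_))
  have h0 : (0:ℝ) ≤ f ω ^ 4 := by positivity
  rw [Real.norm_eq_abs, abs_pow]
  have h3 : |f ω| ^ 4 = f ω ^ 4 := by rw [← abs_pow, abs_of_nonneg h0]
  rcases le_total (|f ω|) 1 with h | h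
  · have := pow_le_one₀ (abs_nonneg (f ω)) h (n := k)
    simp only [Pi.add_apply]
    linarith
  · have h2 : |f ω| ^ k ≤ |f ω| ^ 4 := pow_le_pow_right₀ h hk
    simp only [Pi.add_apply]
    linarith

lemma two_fun_moments {Ω : Type} [MeasureSpace Ω] [IsProbabilityMeasure (ℙ : Measure Ω)]
    {U V : Ω → ℝ} (hmU : Measurable U) (hmV : Measurable V) (hUV : IndepFun U V ℙ)
    (hU4 : MemLp U 4 ℙ) (hV4 : MemLp V 4 ℙ)
    (hUm : ∫ ω, U ω ∂ℙ = 0) (hVm : ∫ ω, V ω ∂ℙ = 0) :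
    (∫ ω, (V ω + U ω) ^ 2 ∂ℙ = ∫ ω, U ω ^ 2 ∂ℙ + ∫ ω, V ω ^ 2 ∂ℙ) ∧
    (∫ ω, (V ω + U ω) ^ 4 ∂ℙ
      = ∫ ω, U ω ^ 4 ∂ℙ + 6 * ((∫ ω, U ω ^ 2 ∂ℙ) * (∫ ω, V ω ^ 2 ∂ℙ)) + ∫ ω, V ω ^ 4 ∂ℙ) := by
  have hIab : ∀ a b : ℕ, ∫ ω, U ω ^ a * V ω ^ b ∂ℙ = (∫ ω, U ω ^ a ∂ℙ) * (∫ ω, V ω ^ b ∂ℙ) := by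
    intro a b
    have h := (hUV.comp (measurable_id.pow_const a) (measurable_id.pow_const b)).integral_mul_eq_mul_integral
      ((hmU.pow_const a).aestronglyMeasurable) ((hmV.pow_const b).aestronglyMeasurable)
    simpa using h
  have hintab : ∀ a b : ℕ, a ≤ 4 → b ≤ 4 → Integrable (fun ω => U ω ^ a * V ω ^ b) ℙ := by
    intro a b ha hb
    have h := (hUV.comp (measurable_id.pow_const a) (measurable_id.pow_const b)).integrable_mul
      (integrable_pow_of_memL4 hmU hU4 ha) (integrable_pow_of_memL4 hmV hV4 hb)
    exact h
  have hintU : ∀ a : ℕ, a ≤ 4 → Integrable (fun ω => U ω ^ a) ℙ :=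
    fun a ha => integrable_pow_of_memL4 hmU hU4 ha
  have hintV : ∀ b : ℕ, b ≤ 4 → Integrable (fun ω => V ω ^ b) ℙ :=
    fun b hb => integrable_pow_of_memL4 hmV hV4 hb
  have hU1 : ∫ ω, U ω ^ 1 ∂ℙ = 0 := by simpa using hUm
  have hV1 : ∫ ω, V ω ^ 1 ∂ℙ = 0 := by simpa using hVm
  have i11 : Integrable (fun ω => 2 * (U ω ^ 1 * V ω ^ 1)) ℙ :=
    (hintab 1 1 (by norm_num) (by norm_num)).const_mul 2
  have i31 : Integrable (fun ω => 4 * (U ω ^ 3 * V ω ^ 1)) ℙ :=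
    (hintab 3 1 (by norm_num) (by norm_num)).const_mul 4
  have i22 : Integrable (fun ω => 6 * (U ω ^ 2 * V ω ^ 2)) ℙ :=
    (hintab 2 2 (by norm_num) (by norm_num)).const_mul 6
  have i13 : Integrable (fun ω => 4 * (U ω ^ 1 * V ω ^ 3)) ℙ :=
    (hintab 1 3 (by norm_num) (by norm_num)).const_mul 4
  have j2 : Integrable (fun ω => 2 * (U ω ^ 1 * V ω ^ 1) + V ω ^ 2) ℙ := by
    exact i11.add (hintV 2 (by norm_num))
  have j4c : Integrable (fun ω => 4 * (U ω ^ 1 * V ω ^ 3) + V ω ^ 4) ℙ := by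
    exact i13.add (hintV 4 le_rfl)
  have j4b : Integrable (fun ω => 6 * (U ω ^ 2 * V ω ^ 2) + (4 * (U ω ^ 1 * V ω ^ 3) + V ω ^ 4)) ℙ := by
    exact i22.add j4c
  have j4a : Integrable (fun ω => 4 * (U ω ^ 3 * V ω ^ 1) + (6 * (U ω ^ 2 * V ω ^ 2) + (4 * (U ω ^ 1 * V ω ^ 3) + V ω ^ 4))) ℙ := by
    exact i31.add j4b
  constructor
  · have e2 : ∀ ω, (V ω + U ω) ^ 2 = U ω ^ 2 + (2 * (U ω ^ 1 * V ω ^ 1) + V ω ^ 2) := by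
      intro ω; ring
    rw [integral_congr_ae (Filter.Eventually.of_forall e2),
      integral_add (hintU 2 (by norm_num)) j2,
      integral_add i11 (hintV 2 (by norm_num)),
      integral_const_mul _, hIab 1 1, hU1]
    ring
  · have e4 : ∀ ω, (V ω + U ω) ^ 4 = U ω ^ 4 +
        (4 * (U ω ^ 3 * V ω ^ 1) + (6 * (U ω ^ 2 * V ω ^ 2) +
          (4 * (U ω ^ 1 * V ω ^ 3) + V ω ^ 4))) := by
      intro ω; ring
    rw [integral_congr_ae (Filter.Eventually.of_forall e4),
      integral_add (hintU 4 le_rfl) j4a,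
      integral_add i31 j4b,
      integral_add i22 j4c,
      integral_add i13 (hintV 4 le_rfl),
      integral_const_mul _, integral_const_mul _, integral_const_mul _,
      hIab 3 1, hIab 2 2, hIab 1 3, hU1, hV1]
    ring

lemma sum_moment_bound {Ω : Type} [MeasureSpace Ω] [IsProbabilityMeasure (ℙ : Measure Ω)]
    {n : ℕ} {f : Fin n → Ω → ℝ} (hmeas : ∀ k, Measurable (f k))
    (hindep : iIndepFun f ℙ)
    (hl4 : ∀ k, MemLp (f k) 4 ℙ)
    (hmean : ∀ k, ∫ ω, f k ω ∂ℙ = 0)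
    {B : ℝ} (hB : 1 ≤ B)
    (h4 : ∀ k, ∫ ω, f k ω ^ 4 ∂ℙ ≤ B * (∫ ω, f k ω ^ 2 ∂ℙ) ^ 2)
    (s : Finset (Fin n)) :
    MemLp (fun ω => ∑ k ∈ s, f k ω) 4 ℙ ∧
    (∫ ω, (∑ k ∈ s, f k ω) ∂ℙ = 0) ∧
    (∫ ω, (∑ k ∈ s, f k ω) ^ 2 ∂ℙ = ∑ k ∈ s, ∫ ω, f k ω ^ 2 ∂ℙ) ∧
    (∫ ω, (∑ k ∈ s, f k ω) ^ 4 ∂ℙ ≤ 3 * B * (∑ k ∈ s, ∫ ω, f k ω ^ 2 ∂ℙ) ^ 2) := by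
  classical
  induction s using Finset.induction_on with
  | empty => simp [memLp_const (0:ℝ)]
  | @insert i s' hi ih =>
    obtain ⟨ihL4, ihmean, ihvar, ih4⟩ := ih
    have hmU : Measurable (fun ω => ∑ k ∈ s', f k ω) :=
      Finset.measurable_sum _ fun k _ => hmeas k
    have hUV : IndepFun (fun ω => ∑ k ∈ s', f k ω) (f i) ℙ := by
      have h := hindep.indepFun_finset_sum_of_notMem hmeas hi
      have heq : (∑ j ∈ s', f j) = (fun ω => ∑ k ∈ s', f k ω) := by
        funext ω; simp [Finset.sum_apply]
      rwa [heq] at h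
    obtain ⟨m2, m4⟩ := two_fun_moments hmU (hmeas i) hUV ihL4 (hl4 i) ihmean (hmean i)
    have hsum : ∀ ω, (∑ k ∈ insert i s', f k ω) = f i ω + ∑ k ∈ s', f k ω :=
      fun ω => Finset.sum_insert hi
    have hL4 : MemLp (fun ω => ∑ k ∈ insert i s', f k ω) 4 ℙ := by
      have h := ihL4.add (hl4 i)
      have heq : (fun ω => ∑ k ∈ insert i s', f k ω)
          = (fun ω => ∑ k ∈ s', f k ω) + f i := by
        funext ω; simp only [hsum ω, Pi.add_apply]; ring
      rwa [heq]
    have hint1 : Integrable (fun ω => ∑ k ∈ s', f k ω) ℙ :=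
      ihL4.integrable (by norm_num)
    have hVint : Integrable (f i) ℙ := (hl4 i).integrable (by norm_num)
    have hmean' : ∫ ω, (∑ k ∈ insert i s', f k ω) ∂ℙ = 0 := by
      rw [integral_congr_ae (Filter.Eventually.of_forall hsum), integral_add hVint hint1,
        hmean i, ihmean, add_zero]
    have hre2 : ∫ ω, (∑ k ∈ insert i s', f k ω) ^ 2 ∂ℙ
        = ∫ ω, (f i ω + ∑ k ∈ s', f k ω) ^ 2 ∂ℙ :=
      integral_congr_ae (Filter.Eventually.of_forall fun ω => by dsimp only; rw [hsum ω])
    have hre4 : ∫ ω, (∑ k ∈ insert i s', f k ω) ^ 4 ∂ℙ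
        = ∫ ω, (f i ω + ∑ k ∈ s', f k ω) ^ 4 ∂ℙ :=
      integral_congr_ae (Filter.Eventually.of_forall fun ω => by dsimp only; rw [hsum ω])
    have hvar' : ∫ ω, (∑ k ∈ insert i s', f k ω) ^ 2 ∂ℙ
        = ∑ k ∈ insert i s', ∫ ω, f k ω ^ 2 ∂ℙ := by
      rw [hre2, m2, ihvar, Finset.sum_insert hi]; ring
    refine ⟨hL4, hmean', hvar', ?_⟩
    have hσnn : ∀ k, 0 ≤ ∫ ω, f k ω ^ 2 ∂ℙ := fun k => integral_nonneg fun ω => sq_nonneg _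
    have hsnn : 0 ≤ ∑ k ∈ s', ∫ ω, f k ω ^ 2 ∂ℙ := Finset.sum_nonneg fun k _ => hσnn k
    have hinn : 0 ≤ ∫ ω, f i ω ^ 2 ∂ℙ := hσnn i
    rw [hre4, m4, ihvar, Finset.sum_insert hi]
    have h4i := h4 i
    nlinarith [mul_nonneg hsnn hinn, sq_nonneg (∫ ω, f i ω ^ 2 ∂ℙ),
      mul_nonneg (mul_nonneg (sub_nonneg.2 hB) hsnn) hinn, sq_nonneg (∑ k ∈ s', ∫ ω, f k ω ^ 2 ∂ℙ)]


lemma paley_zygmund_aux {Ω : Type} [MeasureSpace Ω] [IsProbabilityMeasure (ℙ : Measure Ω)]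
    {X : Ω → ℝ} (hmX : Measurable X) (hXnn : ∀ ω, 0 ≤ X ω)
    (hX1 : Integrable X ℙ) (hX2 : Integrable (fun ω => X ω ^ 2) ℙ)
    {θ K : ℝ} (hθ : 0 ≤ θ) (hθX : θ ≤ ∫ ω, X ω ∂ℙ) (hK : ∫ ω, X ω ^ 2 ∂ℙ ≤ K) :
    ((∫ ω, X ω ∂ℙ) - θ) ^ 2 ≤ K * (ℙ {ω | θ < X ω}).toReal := by
  set A : Set Ω := {ω | θ < X ω} with hA
  have hAm : MeasurableSet A := measurableSet_lt measurable_const hmX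
  set P : ℝ := (ℙ A).toReal with hP
  have hPnn : 0 ≤ P := ENNReal.toReal_nonneg
  have hind : Integrable (A.indicator X) ℙ := hX1.indicator hAm
  have step1 : (∫ ω, X ω ∂ℙ) ≤ θ + ∫ ω, A.indicator X ω ∂ℙ := by
    have : (∫ ω, X ω ∂ℙ) ≤ ∫ ω, (θ + A.indicator X ω) ∂ℙ := by
      refine integral_mono hX1 ((integrable_const θ).add hind) fun ω => ?_
      by_cases hω : ω ∈ A
      · simp only [Set.indicator_of_mem hω]; linarith [hXnn ω]
      · simp only [Set.indicator_of_notMem hω]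
        have : ¬ θ < X ω := hω
        linarith [not_lt.1 this]
    rwa [integral_add (integrable_const θ) hind, integral_const, probReal_univ,
      smul_eq_mul, one_mul] at this
  -- Cauchy-Schwarz
  have hconj : (2:ℝ).HolderConjugate 2 := Real.HolderConjugate.two_two
  have hXL2 : MemLp X (ENNReal.ofReal 2) ℙ := by
    rw [show ENNReal.ofReal 2 = 2 by norm_num]
    exact (memLp_two_iff_integrable_sq hmX.aestronglyMeasurable).2 hX2
  have hgL2 : MemLp (A.indicator (fun _ => (1:ℝ))) (ENNReal.ofReal 2) ℙ :=
    (memLp_const (1:ℝ)).indicator hAm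
  have hCS := integral_mul_le_Lp_mul_Lq_of_nonneg hconj
    (Filter.Eventually.of_forall hXnn)
    (Filter.Eventually.of_forall fun ω => Set.indicator_nonneg (fun _ _ => zero_le_one) ω)
    hXL2 hgL2
  -- identify terms in hCS
  have e1 : ∫ ω, X ω * A.indicator (fun _ => (1:ℝ)) ω ∂ℙ = ∫ ω, A.indicator X ω ∂ℙ := by
    refine integral_congr_ae (Filter.Eventually.of_forall fun ω => ?_)
    by_cases hω : ω ∈ A <;>
      simp [Set.indicator_of_mem, Set.indicator_of_notMem, hω]
  have hr : ∀ y:ℝ, y ^ (2:ℝ) = y ^ (2:ℕ) := fun y => by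
    rw [show (2:ℝ) = ((2:ℕ):ℝ) by norm_num, Real.rpow_natCast]
  simp only [hr] at hCS
  have e2 : ∫ ω, A.indicator (fun _ => (1:ℝ)) ω ^ 2 ∂ℙ = P := by
    have : ∀ ω, A.indicator (fun _ => (1:ℝ)) ω ^ 2 = A.indicator (fun _ => (1:ℝ)) ω := by
      intro ω; by_cases hω : ω ∈ A <;>
        simp [Set.indicator_of_mem, Set.indicator_of_notMem, hω]
    rw [integral_congr_ae (Filter.Eventually.of_forall this), integral_indicator_const _ hAm,
      smul_eq_mul, mul_one]
    rfl
  rw [e1, e2] at hCS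
  have hI2nn : 0 ≤ ∫ ω, X ω ^ 2 ∂ℙ := integral_nonneg fun ω => sq_nonneg _
  have hKnn : 0 ≤ K := le_trans hI2nn hK
  have key : (∫ ω, X ω ∂ℙ) - θ ≤ (∫ ω, X ω ^ 2 ∂ℙ) ^ (1/(2:ℝ)) * P ^ (1/(2:ℝ)) := by
    calc (∫ ω, X ω ∂ℙ) - θ ≤ ∫ ω, A.indicator X ω ∂ℙ := by linarith
    _ ≤ _ := hCS
  have hs : ((∫ ω, X ω ∂ℙ) - θ)^2 ≤ ((∫ ω, X ω ^ 2 ∂ℙ) ^ (1/(2:ℝ)) * P ^ (1/(2:ℝ)))^2 := by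
    have h0 : 0 ≤ (∫ ω, X ω ∂ℙ) - θ := by linarith
    exact pow_le_pow_left₀ h0 key 2
  calc ((∫ ω, X ω ∂ℙ) - θ)^2 ≤ ((∫ ω, X ω ^ 2 ∂ℙ) ^ (1/(2:ℝ)) * P ^ (1/(2:ℝ)))^2 := hs
  _ = (∫ ω, X ω ^ 2 ∂ℙ) * P := by
      rw [mul_pow, ← Real.rpow_natCast (_ ^ (1/(2:ℝ))) 2, ← Real.rpow_natCast (P ^ (1/(2:ℝ))) 2,
        ← Real.rpow_mul hI2nn, ← Real.rpow_mul hPnn]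
      norm_num
  _ ≤ K * P := mul_le_mul_of_nonneg_right hK hPnn

set_option maxHeartbeats 1000000 in
/-- **Lévy concentration function for sums.**
Let `ξ₁,...,ξₙ` be independent real random variables with unit variance and
`E(ξ_k - Eξ_k)⁴ ≤ M₄⁴`.  Then for every `ε ∈ (0,1)` there exists `p = p(M₄, ε) ∈ (0,1)`
such that for every unit vector `x ∈ S^{n-1}`, the sum `S = ∑ x_k ξ_k` satisfies
`sup_u P(|S - u| ≤ ε) ≤ p`. -/
theorem levy_concentration_for_sums (M₄ : ℝ) (hM₄ : 0 < M₄) (ε : ℝ) (hε0 : 0 < ε)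
    (hε1 : ε < 1) :
    ∃ p : ℝ, 0 < p ∧ p < 1 ∧
      ∀ (Ω : Type) [MeasureSpace Ω] [IsProbabilityMeasure (ℙ : Measure Ω)]
        (n : ℕ) (ξ : Fin n → Ω → ℝ),
        (∀ k, Measurable (ξ k)) →
        iIndepFun ξ ℙ →
        (∀ k, MemLp (ξ k) 4 ℙ) →
        (∀ k, ∫ ω, (ξ k ω - ∫ ω', ξ k ω' ∂ℙ) ^ 2 ∂ℙ = 1) →
        (∀ k, ∫ ω, (ξ k ω - ∫ ω', ξ k ω' ∂ℙ) ^ 4 ∂ℙ ≤ M₄ ^ 4) →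
        ∀ (x : Fin n → ℝ), ∑ k, (x k) ^ 2 = 1 →
        ∀ u : ℝ,
          (ℙ {ω | |(∑ k, x k * ξ k ω) - u| ≤ ε}).toReal ≤ p := by
  have hB1 : (1:ℝ) ≤ max (M₄ ^ 4) 1 := le_max_right _ _
  set B : ℝ := max (M₄ ^ 4) 1 with hBdef
  set K : ℝ := 8 * (3 * B + 81) with hKdef
  have hK0 : (0:ℝ) < K := by nlinarith
  have hε2 : ε ^ 2 < 1 := by nlinarith
  set δ : ℝ := min (3/4) ((1 - ε ^ 2) ^ 2 / K) with hδdef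
  have hδ0 : 0 < δ := lt_min (by norm_num) (div_pos (by nlinarith) hK0)
  have hδ34 : δ ≤ 3/4 := min_le_left _ _
  refine ⟨1 - δ, by linarith, by linarith, ?_⟩
  intro Ω _ _ n ξ hmeas hindep hl4 hvar h4 x hx u
  set f : Fin n → Ω → ℝ := fun k ω => x k * (ξ k ω - ∫ ω', ξ k ω' ∂ℙ) with hfdef
  have hξint : ∀ k, Integrable (ξ k) ℙ := fun k => (hl4 k).integrable (by norm_num)
  have hfmeas : ∀ k, Measurable (f k) :=
    fun k => ((hmeas k).sub_const _).const_mul (x k)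
  have hfl4 : ∀ k, MemLp (f k) 4 ℙ := by
    intro k
    have h1 : MemLp (fun ω => ξ k ω - ∫ ω', ξ k ω' ∂ℙ) 4 ℙ := by
      exact (hl4 k).sub (memLp_const _)
    exact h1.const_mul (x k)
  have hfmean : ∀ k, ∫ ω, f k ω ∂ℙ = 0 := by
    intro k
    simp only [hfdef]
    rw [integral_const_mul, integral_sub (hξint k) (integrable_const _), integral_const,
      probReal_univ, one_smul, sub_self, mul_zero]
  have hσ : ∀ k, ∫ ω, f k ω ^ 2 ∂ℙ = x k ^ 2 := by
    intro k
    have e : ∀ ω, f k ω ^ 2 = x k ^ 2 * (ξ k ω - ∫ ω', ξ k ω' ∂ℙ) ^ 2 := fun ω => by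
      simp only [hfdef]; ring
    rw [integral_congr_ae (Filter.Eventually.of_forall e), integral_const_mul, hvar k, mul_one]
  have h44 : ∀ k, ∫ ω, f k ω ^ 4 ∂ℙ ≤ B * (∫ ω, f k ω ^ 2 ∂ℙ) ^ 2 := by
    intro k
    have e : ∀ ω, f k ω ^ 4 = x k ^ 4 * (ξ k ω - ∫ ω', ξ k ω' ∂ℙ) ^ 4 := fun ω => by
      simp only [hfdef]; ring
    rw [integral_congr_ae (Filter.Eventually.of_forall e), integral_const_mul, hσ k]
    have h1 : x k ^ 4 * ∫ ω, (ξ k ω - ∫ ω', ξ k ω' ∂ℙ) ^ 4 ∂ℙ ≤ x k ^ 4 * M₄ ^ 4 :=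
      mul_le_mul_of_nonneg_left (h4 k) (by positivity)
    have h2 : x k ^ 4 * M₄ ^ 4 ≤ x k ^ 4 * B :=
      mul_le_mul_of_nonneg_left (le_max_left _ _) (by positivity)
    calc x k ^ 4 * ∫ ω, (ξ k ω - ∫ ω', ξ k ω' ∂ℙ) ^ 4 ∂ℙ ≤ x k ^ 4 * B := le_trans h1 h2
    _ = B * (x k ^ 2) ^ 2 := by ring
  have hfindep : iIndepFun f ℙ := by
    have h := hindep.comp (fun k t => x k * (t - ∫ ω', ξ k ω' ∂ℙ))
      (fun k => (measurable_id.sub_const _).const_mul (x k))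
    exact h
  obtain ⟨hTL4, hTmean, hTvar, hT4⟩ :=
    sum_moment_bound hfmeas hfindep hfl4 hfmean hB1 h44 Finset.univ
  have hσsum : ∑ k, ∫ ω, f k ω ^ 2 ∂ℙ = 1 := by
    rw [Finset.sum_congr rfl fun k _ => hσ k]; exact hx
  rw [hσsum] at hTvar hT4
  have hT4' : ∫ ω, (∑ k, f k ω) ^ 4 ∂ℙ ≤ 3 * B := by simpa using hT4
  have hTmeas : Measurable (fun ω => ∑ k, f k ω) :=
    Finset.measurable_sum _ fun k _ => hfmeas k
  set v : ℝ := u - ∑ k, x k * ∫ ω', ξ k ω' ∂ℙ with hvdef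
  have hptw : ∀ ω, (∑ k, x k * ξ k ω) - u = (∑ k, f k ω) - v := by
    intro ω
    simp only [hfdef, hvdef, mul_sub, Finset.sum_sub_distrib]
    ring
  have hseteq : {ω | |(∑ k, x k * ξ k ω) - u| ≤ ε} = {ω | |(∑ k, f k ω) - v| ≤ ε} := by
    ext ω; rw [Set.mem_setOf_eq, Set.mem_setOf_eq, hptw ω]
  rw [hseteq]
  rcases le_or_gt (|v|) 3 with hv | hv
  · -- Paley-Zygmund case
    have hTvL4 : MemLp (fun ω => (∑ k, f k ω) - v) 4 ℙ := by
      exact hTL4.sub (memLp_const v)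
    have hTvmeas : Measurable (fun ω => (∑ k, f k ω) - v) := hTmeas.sub_const v
    have hXmeas : Measurable (fun ω => ((∑ k, f k ω) - v) ^ 2) := hTvmeas.pow_const 2
    have hX1 : Integrable (fun ω => ((∑ k, f k ω) - v) ^ 2) ℙ :=
      integrable_pow_of_memL4 hTvmeas hTvL4 (by norm_num)
    have hX4 : Integrable (fun ω => ((∑ k, f k ω) - v) ^ 4) ℙ :=
      integrable_pow_of_memL4 hTvmeas hTvL4 le_rfl
    have hX2 : Integrable (fun ω => (((∑ k, f k ω) - v) ^ 2) ^ 2) ℙ :=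
      hX4.congr (Filter.Eventually.of_forall fun ω => by ring)
    have hTint : Integrable (fun ω => ∑ k, f k ω) ℙ := hTL4.integrable (by norm_num)
    have hT2int : Integrable (fun ω => (∑ k, f k ω) ^ 2) ℙ :=
      integrable_pow_of_memL4 hTmeas hTL4 (by norm_num)
    have hT4int : Integrable (fun ω => (∑ k, f k ω) ^ 4) ℙ :=
      integrable_pow_of_memL4 hTmeas hTL4 le_rfl
    have hEX : ∫ ω, ((∑ k, f k ω) - v) ^ 2 ∂ℙ = 1 + v ^ 2 := by
      have e : ∀ ω, ((∑ k, f k ω) - v) ^ 2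
          = (∑ k, f k ω) ^ 2 + ((-(2*v)) * (∑ k, f k ω) + v ^ 2) := fun ω => by ring
      rw [integral_congr_ae (Filter.Eventually.of_forall e),
        integral_add hT2int (by exact (hTint.const_mul _).add (integrable_const _)),
        integral_add (hTint.const_mul _) (integrable_const _), integral_const_mul,
        hTvar, hTmean, integral_const, probReal_univ, one_smul]
      ring
    have hv2 : v ^ 2 ≤ 9 := by nlinarith [abs_nonneg v, sq_abs v]
    have hK2 : ∫ ω, (((∑ k, f k ω) - v) ^ 2) ^ 2 ∂ℙ ≤ K := by
      have ptw : ∀ ω, (((∑ k, f k ω) - v) ^ 2) ^ 2 ≤ 8 * ((∑ k, f k ω) ^ 4 + 81) := by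
        intro ω
        set y := ∑ k, f k ω with hy
        have h1 : (y - v) ^ 2 ≤ 2 * y ^ 2 + 2 * v ^ 2 := by nlinarith [sq_nonneg (y + v)]
        have h2 : ((y - v) ^ 2) ^ 2 ≤ (2 * y ^ 2 + 2 * v ^ 2) ^ 2 :=
          pow_le_pow_left₀ (sq_nonneg _) h1 2
        nlinarith [sq_nonneg (y ^ 2 - v ^ 2), sq_nonneg v, sq_nonneg y, sq_nonneg (v ^ 2 - 9)]
      have hmono := integral_mono hX2
        (by exact (hT4int.add (integrable_const 81)).const_mul 8) ptw
      calc ∫ ω, (((∑ k, f k ω) - v) ^ 2) ^ 2 ∂ℙ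
          ≤ ∫ ω, 8 * ((∑ k, f k ω) ^ 4 + 81) ∂ℙ := hmono
        _ = 8 * ((∫ ω, (∑ k, f k ω) ^ 4 ∂ℙ) + 81) := by
            rw [integral_const_mul, integral_add hT4int (integrable_const _), integral_const,
              probReal_univ, one_smul]
        _ ≤ 8 * (3 * B + 81) := by nlinarith [hT4']
        _ = K := by rw [hKdef]
    have hθX : (ε ^ 2 : ℝ) ≤ ∫ ω, ((∑ k, f k ω) - v) ^ 2 ∂ℙ := by
      rw [hEX]; nlinarith [sq_nonneg v]
    have hPZ := paley_zygmund_aux (θ := ε ^ 2) (K := K) hXmeas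
      (fun ω => sq_nonneg _) hX1 hX2 (sq_nonneg ε) hθX hK2
    rw [hEX] at hPZ
    set A : Set Ω := {ω | ε ^ 2 < ((∑ k, f k ω) - v) ^ 2} with hAdef
    have hAm : MeasurableSet A := measurableSet_lt measurable_const hXmeas
    set P : ℝ := (ℙ A).toReal with hPdef
    have hPnn : (0:ℝ) ≤ P := ENNReal.toReal_nonneg
    have h5 : (1 - ε ^ 2) ^ 2 ≤ K * P := by nlinarith [hPZ, sq_nonneg v, hε2]
    have hδP : δ ≤ P := by
      have h6 : (1 - ε ^ 2) ^ 2 / K ≤ P := (div_le_iff₀ hK0).2 (by linarith [mul_comm K P ▸ h5])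
      exact le_trans (min_le_right _ _) h6
    have hsub : {ω | |(∑ k, f k ω) - v| ≤ ε} ⊆ Aᶜ := by
      intro ω hω
      simp only [Set.mem_setOf_eq] at hω
      simp only [hAdef, Set.mem_compl_iff, Set.mem_setOf_eq, not_lt]
      have h7 := abs_le.1 hω
      exact sq_le_sq' (by linarith [h7.1]) h7.2
    calc (ℙ {ω | |(∑ k, f k ω) - v| ≤ ε}).toReal
        ≤ (ℙ Aᶜ).toReal := ENNReal.toReal_mono (measure_ne_top _ _) (measure_mono hsub)
      _ = 1 - P := by
          rw [prob_compl_eq_one_sub hAm, ENNReal.toReal_sub_of_le prob_le_one ENNReal.one_ne_top,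
            ENNReal.toReal_one]
      _ ≤ 1 - δ := by linarith
  · -- Chebyshev case
    have hT2int : Integrable (fun ω => (∑ k, f k ω) ^ 2) ℙ :=
      integrable_pow_of_memL4 hTmeas hTL4 (by norm_num)
    have hmark := mul_meas_ge_le_integral_of_nonneg
      (Filter.Eventually.of_forall fun ω => sq_nonneg (∑ k, f k ω)) hT2int 4
    rw [hTvar] at hmark
    have hsub : {ω | |(∑ k, f k ω) - v| ≤ ε} ⊆ {ω | (4:ℝ) ≤ (∑ k, f k ω) ^ 2} := by
      intro ω hω
      simp only [Set.mem_setOf_eq] at hω ⊢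
      have h9 : |v| ≤ |v - (∑ k, f k ω)| + |∑ k, f k ω| := by
        have h := abs_add_le (v - ∑ k, f k ω) (∑ k, f k ω)
        simpa using h
      rw [abs_sub_comm v (∑ k, f k ω)] at h9
      have h10 : (2:ℝ) ≤ |∑ k, f k ω| := by linarith
      nlinarith [h10, sq_abs (∑ k, f k ω)]
    calc (ℙ {ω | |(∑ k, f k ω) - v| ≤ ε}).toReal
        ≤ (ℙ {ω | (4:ℝ) ≤ (∑ k, f k ω) ^ 2}).toReal :=
          ENNReal.toReal_mono (measure_ne_top _ _) (measure_mono hsub)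
      _ ≤ 1/4 := by simp only [Measure.real] at hmark; linarith
      _ ≤ 1 - δ := by linarith
end
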